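/- arXiv:0807.2073 — 7 statements merged into one kernel-verified Lean document; each statement's English description precedes it below -/
import Mathlib

section
/- Let A be a set of nonnegative integers with 0 ∈ A and gcd(A) = 1. If there exists a positive integer h₀ such that the sumset h₀A has positive lower asymptotic density, then there exists a positive integer h such that the set of nonnegative integers not in the h-fold sumset hA is finite (i.e., A is an asymptotic basis of finite order). -/
open Filter

/-- The `h`-fold sumset of a set `A` of nonnegative integers. -/
def sumset (h : ℕ) (A : Set ℕ) : Set ℕ :=
  {n | ∃ f : Fin h → ℕ, (∀ i, f i ∈ A) ∧ ∑ i, f i = n}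

section NN
variable {A : Set ℕ}

lemma zero_mem_sumset (h0A : (0:ℕ) ∈ A) (h : ℕ) : 0 ∈ sumset h A :=
  ⟨fun _ => 0, fun _ => h0A, by simp⟩

lemma mem_sumset_one {a : ℕ} (ha : a ∈ A) : a ∈ sumset 1 A :=
  ⟨fun _ => a, fun _ => ha, by simp⟩

lemma add_mem_sumset {m n h k : ℕ} (hm : m ∈ sumset h A) (hn : n ∈ sumset k A) :
    m + n ∈ sumset (h + k) A := by
  obtain ⟨f, hf, hfs⟩ := hm
  obtain ⟨g, hg, hgs⟩ := hn
  refine ⟨Fin.append f g, ?_, ?_⟩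
  · intro i
    refine Fin.addCases (fun j => ?_) (fun j => ?_) i
    · rw [Fin.append_left]; exact hf j
    · rw [Fin.append_right]; exact hg j
  · rw [Fin.sum_univ_add]
    simp [Fin.append_left, Fin.append_right, hfs, hgs]

lemma sumset_mono (h0A : (0:ℕ) ∈ A) {h h' : ℕ} (hh : h ≤ h') :
    sumset h A ⊆ sumset h' A := by
  intro n hn
  obtain ⟨d, rfl⟩ := Nat.exists_eq_add_of_le hh
  simpa using add_mem_sumset hn (zero_mem_sumset h0A d)

/-- The monoid of all numbers representable as some finite sum of elements of `A`. -/
def SS (A : Set ℕ) : Set ℕ := {n | ∃ h, n ∈ sumset h A}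

lemma SS_def (A : Set ℕ) : SS A = {n | ∃ h, n ∈ sumset h A} := rfl

lemma zero_mem_SS (h0A : (0:ℕ) ∈ A) : 0 ∈ SS A := ⟨0, zero_mem_sumset h0A 0⟩

lemma mem_SS_of_mem {a : ℕ} (ha : a ∈ A) : a ∈ SS A := ⟨1, mem_sumset_one ha⟩

lemma add_mem_SS {m n : ℕ} (hm : m ∈ SS A) (hn : n ∈ SS A) : m + n ∈ SS A := by
  obtain ⟨h, hm⟩ := hm; obtain ⟨k, hn⟩ := hn
  exact ⟨h + k, add_mem_sumset hm hn⟩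

lemma nsmul_mem_SS (h0A : (0:ℕ) ∈ A) {n : ℕ} (hn : n ∈ SS A) (k : ℕ) : k * n ∈ SS A := by
  induction k with
  | zero => simpa using zero_mem_SS h0A
  | succ k ih => rw [Nat.succ_mul]; exact add_mem_SS ih hn

end NN

section NN
variable {A : Set ℕ}

/-- `P A d` : `d` is a difference of two elements of the sumset monoid. -/
def Pdiff (A : Set ℕ) (d : ℕ) : Prop := ∃ u w, u ∈ SS A ∧ w ∈ SS A ∧ u = w + d

lemma Pdiff_gcd (h0A : (0:ℕ) ∈ A) {d a : ℕ} (hd : Pdiff A d) (hd1 : 1 ≤ d)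
    (ha : a ∈ A) (ha1 : 1 ≤ a) : Pdiff A (Nat.gcd d a) := by
  obtain ⟨u, w, hu, hw, huw⟩ := hd
  set x := Nat.gcdA d a with hx
  set y := Nat.gcdB d a with hy
  have hbez : (Nat.gcd d a : ℤ) = d * x + a * y := Nat.gcd_eq_gcd_ab d a
  set k : ℕ := x.natAbs + y.natAbs + 1 with hk
  set s : ℤ := x + k * a with hs
  set t : ℤ := y - k * d with ht
  have hkz : (k : ℤ) = |x| + |y| + 1 := by push_cast [hk]; ring
  have hs0 : 0 ≤ s := by
    have h1 : (k : ℤ) ≤ (k : ℤ) * a := le_mul_of_one_le_right (by positivity) (by exact_mod_cast ha1)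
    have h2 := neg_abs_le x
    have h3 := abs_nonneg y
    simp only [hs]; linarith
  have ht0 : t ≤ 0 := by
    have h1 : (k : ℤ) ≤ (k : ℤ) * d := le_mul_of_one_le_right (by positivity) (by exact_mod_cast hd1)
    have h2 := le_abs_self y
    have h3 := abs_nonneg x
    simp only [ht]; linarith
  have key : (Nat.gcd d a : ℤ) + (-t) * a = s * d := by
    simp only [hs, ht]; rw [hbez]; ring
  -- convert to ℕ
  set s' : ℕ := s.toNat with hs'
  set m : ℕ := (-t).toNat with hm
  have keyN : Nat.gcd d a + m * a = s' * d := by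
    have h1 : (s' : ℤ) = s := Int.toNat_of_nonneg hs0
    have h2 : (m : ℤ) = -t := Int.toNat_of_nonneg (by linarith)
    have : ((Nat.gcd d a + m * a : ℕ) : ℤ) = ((s' * d : ℕ) : ℤ) := by push_cast [h1, h2]; linarith [key]
    exact_mod_cast this
  refine ⟨s' * u, s' * w + m * a, nsmul_mem_SS h0A hu s',
    add_mem_SS (nsmul_mem_SS h0A hw s') (nsmul_mem_SS h0A (mem_SS_of_mem ha) m), ?_⟩
  rw [huw, Nat.mul_add]; omega

lemma exists_consecutive (h0A : (0:ℕ) ∈ A)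
    (hgcd : ∀ d : ℕ, (∀ a ∈ A, d ∣ a) → d = 1) :
    ∃ v, 1 ≤ v ∧ v ∈ SS A ∧ v + 1 ∈ SS A := by
  have hex : ∃ a ∈ A, 1 ≤ a := by
    by_contra hc
    push_neg at hc
    have : (2:ℕ) = 1 := hgcd 2 (fun a ha => by
      have : a = 0 := by have := hc a ha; omega
      simp [this])
    omega
  obtain ⟨a₀, ha₀A, ha₀⟩ := hex
  have hQ : ∃ d, 1 ≤ d ∧ Pdiff A d :=
    ⟨a₀, ha₀, a₀, 0, mem_SS_of_mem ha₀A, zero_mem_SS h0A, by omega⟩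
  classical
  obtain ⟨hdm1, hdmP⟩ := Nat.find_spec hQ
  have hP1 : Pdiff A 1 := by
    rcases Nat.lt_or_ge 1 (Nat.find hQ) with hlt | hge
    · exfalso
      have hnall : ¬ ∀ a ∈ A, Nat.find hQ ∣ a := by
        intro hall; have := hgcd _ hall; omega
      push_neg at hnall
      obtain ⟨a, haA, hnd⟩ := hnall
      have ha0 : 1 ≤ a := by
        rcases Nat.eq_zero_or_pos a with rfl | h
        · exact absurd (dvd_zero _) hnd
        · exact h
      have hgle : Nat.gcd (Nat.find hQ) a ≤ Nat.find hQ := Nat.gcd_le_left a (by omega)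
      have hglt : Nat.gcd (Nat.find hQ) a < Nat.find hQ := by
        rcases lt_or_eq_of_le hgle with h | h
        · exact h
        · exact absurd (h ▸ Nat.gcd_dvd_right (Nat.find hQ) a) hnd
      have hg1 : 1 ≤ Nat.gcd (Nat.find hQ) a := Nat.gcd_pos_of_pos_left a (by omega)
      exact Nat.find_min hQ hglt ⟨hg1, Pdiff_gcd h0A hdmP (by omega) haA ha0⟩
    · have h1 : Nat.find hQ = 1 := by omega
      rwa [h1] at hdmP
  obtain ⟨u, w, hu, hw, huw⟩ := hP1
  refine ⟨w + u, by omega, add_mem_SS hw hu, ?_⟩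
  · have : w + u + 1 = u + u := by omega
    rw [this]; exact add_mem_SS hu hu

end NN

section NN
variable {A : Set ℕ}

lemma tail_mem_SS (h0A : (0:ℕ) ∈ A) {v : ℕ} (hv1 : 1 ≤ v) (hv : v ∈ SS A)
    (hv' : v + 1 ∈ SS A) {n : ℕ} (hn : v * v ≤ n) : n ∈ SS A := by
  set q := n / v with hq
  set r := n % v with hr
  have hdm : v * q + r = n := Nat.div_add_mod n v
  have hrv : r < v := Nat.mod_lt n (by omega)
  have hqv : v ≤ q := by
    rw [hq, Nat.le_div_iff_mul_le (by omega)]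
    exact le_trans (by nlinarith) hn
  have hid : (q - r) * v + r * (v + 1) = n := by
    have h1 : (q - r) * v = q * v - r * v := Nat.sub_mul q r v
    have h2 : r * v ≤ q * v := Nat.mul_le_mul_right v (by omega)
    nlinarith [Nat.sub_add_cancel h2]
  rw [← hid]
  exact add_mem_SS (nsmul_mem_SS h0A hv _) (nsmul_mem_SS h0A hv' _)

lemma exists_interval (h0A : (0:ℕ) ∈ A) {v : ℕ} (hv1 : 1 ≤ v) (hv : v ∈ SS A)
    (hv' : v + 1 ∈ SS A) (L : ℕ) :
    ∃ m, 1 ≤ m ∧ ∀ i ≤ L, v * v + i ∈ sumset m A := by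
  classical
  have H : ∀ i : ℕ, ∃ h, v * v + i ∈ sumset h A := by
    intro i
    have := tail_mem_SS h0A hv1 hv hv' (n := v * v + i) (by omega)
    rw [SS_def] at this; exact this
  set g : ℕ → ℕ := fun i => (H i).choose with hg
  refine ⟨(Finset.range (L + 1)).sup g + 1, by omega, fun i hi => ?_⟩
  refine sumset_mono h0A ?_ (H i).choose_spec
  have h1 : g i ≤ (Finset.range (L + 1)).sup g :=
    Finset.le_sup (by simp [Finset.mem_range]; omega)
  have h2 : g i = (H i).choose := rfl
  omega

end NN

open scoped Classical in
noncomputable def cnt (D : Set ℕ) (x : ℕ) : ℕ :=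
  ((Finset.Icc 1 x).filter (fun n => n ∈ D)).card

open scoped Classical in
noncomputable def badc (D : Set ℕ) (m₀ x : ℕ) : ℕ :=
  ((Finset.Icc (m₀+1) x).filter (fun n => n ∉ D)).card

open scoped Classical

def HasRuns (D : Set ℕ) (L : ℕ) : Prop :=
  ∀ d ∈ D, ∃ a, a ≤ d ∧ d ≤ a + L ∧ ∀ i ≤ L, a + i ∈ D

def sadd (D U : Set ℕ) : Set ℕ := {n | ∃ p ∈ D, ∃ u ∈ U, p + u = n}

lemma shrink (D U : Set ℕ) (L c n₀ m₀ x : ℕ) (hc : 1 ≤ c)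
    (hrun : HasRuns D L) (hm₀ : m₀ ∈ D)
    (hU : ∀ y, n₀ ≤ y → y ≤ c * cnt U y) :
    c * badc (D ∪ sadd D U) m₀ x ≤ (c-1) * badc D m₀ x + (x / (L+1) + 1) * (c * n₀) := by
  set E := D ∪ sadd D U with hE
  set I : Finset ℕ := Finset.Icc (m₀+1) x with hI
  set badE : Finset ℕ := I.filter (fun n => n ∉ E) with hbadE
  set badD : Finset ℕ := I.filter (fun n => n ∉ D) with hbadD
  -- predecessor function
  set p : ℕ → ℕ := fun m =>
    if h : ((Finset.range m).filter (fun j => j ∈ D)).Nonempty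
    then ((Finset.range m).filter (fun j => j ∈ D)).max' h else 0 with hpdef
  have hp : ∀ m ∈ badE, p m ∈ D ∧ m₀ ≤ p m ∧ p m < m ∧
      ∀ j, p m < j → j < m → j ∉ D := by
    intro m hm
    have hmI : m ∈ I := Finset.mem_filter.mp hm |>.1
    have hm1 : m₀ + 1 ≤ m := (Finset.mem_Icc.mp hmI).1
    have hm₀mem : m₀ ∈ (Finset.range m).filter (fun j => j ∈ D) := by
      simp only [Finset.mem_filter, Finset.mem_range]; exact ⟨by omega, hm₀⟩
    have hne : ((Finset.range m).filter (fun j => j ∈ D)).Nonempty := ⟨m₀, hm₀mem⟩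
    have hpm : p m = ((Finset.range m).filter (fun j => j ∈ D)).max' hne := by
      rw [hpdef]; exact dif_pos hne
    have hmem := Finset.max'_mem _ hne
    rw [← hpm] at hmem
    simp only [Finset.mem_filter, Finset.mem_range] at hmem
    refine ⟨hmem.2, ?_, hmem.1, ?_⟩
    · have := Finset.le_max' _ m₀ hm₀mem; rw [← hpm] at this; exact this
    · intro j hj1 hj2 hjD
      have : j ≤ p m := by
        have := Finset.le_max' ((Finset.range m).filter (fun j => j ∈ D)) j
          (by simp only [Finset.mem_filter, Finset.mem_range]; exact ⟨hj2, hjD⟩)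
        rw [← hpm] at this; exact this
      omega
  -- fibers
  set fib : ℕ → Finset ℕ := fun d => badE.filter (fun m => p m = d) with hfib
  set t : Finset ℕ := badE.image p with ht
  have hcard : badE.card = ∑ d ∈ t, (fib d).card :=
    Finset.card_eq_sum_card_fiberwise (fun m hm => Finset.mem_image_of_mem p hm)
  -- max of fiber
  set Md : ℕ → ℕ := fun d => if h : (fib d).Nonempty then (fib d).max' h else 0 with hMd
  have hfibne : ∀ d ∈ t, (fib d).Nonempty := by
    intro d hd
    obtain ⟨m, hm, rfl⟩ := Finset.mem_image.mp hd
    exact ⟨m, Finset.mem_filter.mpr ⟨hm, rfl⟩⟩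
  have hMdspec : ∀ d ∈ t, Md d ∈ fib d ∧ ∀ m ∈ fib d, m ≤ Md d := by
    intro d hd
    have hne := hfibne d hd
    have : Md d = (fib d).max' hne := by rw [hMd]; exact dif_pos hne
    rw [this]
    exact ⟨Finset.max'_mem _ hne, fun m hm => Finset.le_max' _ m hm⟩
  -- basic facts for d ∈ t
  have hdfacts : ∀ d ∈ t, d ∈ D ∧ m₀ ≤ d ∧ d < Md d ∧ Md d ≤ x ∧ Md d ∉ D ∧
      (∀ j, d < j → j ≤ Md d → j ∉ D) := by
    intro d hd
    obtain ⟨hMdmem, _⟩ := hMdspec d hd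
    have hMdbadE : Md d ∈ badE := (Finset.mem_filter.mp hMdmem).1
    have hpMd : p (Md d) = d := (Finset.mem_filter.mp hMdmem).2
    obtain ⟨h1, h2, h3, h4⟩ := hp (Md d) hMdbadE
    rw [hpMd] at h1 h2 h3 h4
    have hMdx : Md d ≤ x := (Finset.mem_Icc.mp (Finset.mem_filter.mp hMdbadE).1).2
    have hMdnE : Md d ∉ E := (Finset.mem_filter.mp hMdbadE).2
    have hMdnD : Md d ∉ D := fun h => hMdnE (Set.mem_union_left _ h)
    refine ⟨h1, h2, h3, hMdx, hMdnD, fun j hj1 hj2 => ?_⟩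
    rcases Nat.lt_or_ge j (Md d) with h | h
    · exact h4 j hj1 h
    · have : j = Md d := by omega
      rw [this]; exact hMdnD
  -- fiber card bound
  set g : ℕ → ℕ := fun d => Md d - d with hg
  have hfibcard : ∀ d ∈ t, (fib d).card ≤ g d - cnt U (g d) := by
    intro d hd
    obtain ⟨hdD, _, hdlt, _, _, _⟩ := hdfacts d hd
    have hsub : (fib d).card ≤ ((Finset.Icc 1 (g d)).filter (fun j => j ∉ U)).card := by
      apply Finset.card_le_card_of_injOn (fun m => m - d)
      · intro m hm
        have hmbadE : m ∈ badE := (Finset.mem_filter.mp hm).1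
        have hpm : p m = d := (Finset.mem_filter.mp hm).2
        obtain ⟨_, _, h3, _⟩ := hp m hmbadE
        rw [hpm] at h3
        have hmle : m ≤ Md d := (hMdspec d hd).2 m hm
        have hmnE : m ∉ E := (Finset.mem_filter.mp hmbadE).2
        have hgd : g d = Md d - d := rfl
        simp only [Finset.mem_coe, Finset.mem_filter, Finset.mem_Icc]
        refine ⟨⟨by omega, by omega⟩, fun hmU => ?_⟩
        exact hmnE (Set.mem_union_right _ ⟨d, hdD, m - d, hmU, by omega⟩)
      · intro m hm m' hm' hmm
        have h3 : d < m := by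
          have := hp m (Finset.mem_filter.mp hm).1; rw [(Finset.mem_filter.mp hm).2] at this
          exact this.2.2.1
        have h3' : d < m' := by
          have := hp m' (Finset.mem_filter.mp hm').1; rw [(Finset.mem_filter.mp hm').2] at this
          exact this.2.2.1
        simp only at hmm; omega
    have hpart : ((Finset.Icc 1 (g d)).filter (fun j => j ∉ U)).card
        = g d - cnt U (g d) := by
      have := Finset.card_filter_add_card_filter_not
        (s := Finset.Icc 1 (g d)) (p := fun j => j ∈ U)
      simp only [Nat.card_Icc] at this
      unfold cnt
      omega
    omega
  -- run-ends and their separation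
  have htRE : ∀ d ∈ t, d ∈ D ∧ d + 1 ∉ D := by
    intro d hd
    obtain ⟨hdD, _, hdlt, _, hMdnD, hmax⟩ := hdfacts d hd
    exact ⟨hdD, hmax (d+1) (by omega) (by omega)⟩
  have hsep : ∀ d ∈ t, ∀ d' ∈ t, d < d' → d + (L+1) ≤ d' := by
    intro d hd d' hd' hlt
    by_contra hcon
    push_neg at hcon
    obtain ⟨hdD, hd1⟩ := htRE d hd
    obtain ⟨hdD', hd1'⟩ := htRE d' hd'
    obtain ⟨a, ha1, ha2, ha3⟩ := hrun d' hdD'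
    have hda : d' = a + L := by
      by_contra hne
      have h1 := ha3 (d' + 1 - a) (by omega)
      have heq : a + (d' + 1 - a) = d' + 1 := by omega
      rw [heq] at h1; exact hd1' h1
    have h2 : d + 1 ∈ D := by
      have h1 := ha3 (d + 1 - a) (by omega)
      have heq : a + (d + 1 - a) = d + 1 := by omega
      rw [heq] at h1; exact h1
    exact hd1 h2
  have htcard : t.card ≤ x / (L+1) + 1 := by
    have hinj : Set.InjOn (fun d => d / (L+1)) t := by
      intro d hd d' hd' heq
      by_contra hne
      rcases Nat.lt_or_ge d d' with h | h
      · have hs := hsep d hd d' hd' h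
        have h1 : (d + (L+1)) / (L+1) ≤ d' / (L+1) := Nat.div_le_div_right hs
        rw [Nat.add_div_right _ (by omega)] at h1
        simp only at heq; omega
      · have h' : d' < d := by omega
        have hs := hsep d' hd' d hd h'
        have h1 : (d' + (L+1)) / (L+1) ≤ d / (L+1) := Nat.div_le_div_right hs
        rw [Nat.add_div_right _ (by omega)] at h1
        simp only at heq; omega
    have hmaps : ∀ d ∈ t, d / (L+1) ∈ Finset.range (x/(L+1) + 1) := by
      intro d hd
      obtain ⟨_, _, hdlt, hMdx, _, _⟩ := hdfacts d hd
      simp only [Finset.mem_range]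
      have : d / (L+1) ≤ x / (L+1) := Nat.div_le_div_right (by omega)
      omega
    calc t.card ≤ (Finset.range (x/(L+1)+1)).card :=
          Finset.card_le_card_of_injOn _ hmaps hinj
      _ = x/(L+1) + 1 := Finset.card_range _
  -- sum of gaps bounded by badD
  have hgsum : ∑ d ∈ t, g d ≤ badD.card := by
    have hIsub : ∀ d ∈ t, Finset.Icc (d+1) (Md d) ⊆ badD := by
      intro d hd j hj
      simp only [Finset.mem_Icc] at hj
      obtain ⟨hdD, hdm0, hdlt, hMdx, hMdnD, hmax⟩ := hdfacts d hd
      exact Finset.mem_filter.mpr ⟨Finset.mem_Icc.mpr ⟨by omega, by omega⟩,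
        hmax j (by omega) (by omega)⟩
    have hdisj : ∀ d ∈ t, ∀ d' ∈ t, d ≠ d' →
        Disjoint (Finset.Icc (d+1) (Md d)) (Finset.Icc (d'+1) (Md d')) := by
      intro d hd d' hd' hne
      have key : ∀ e ∈ t, ∀ e' ∈ t, e < e' → Md e < e' + 1 := by
        intro e he e' he' hlt
        obtain ⟨heD, _, helt, _, _, hmax⟩ := hdfacts e he
        obtain ⟨heD', _, _, _, _, _⟩ := hdfacts e' he'
        by_contra hcon
        exact hmax e' (by omega) (by omega) heD'
      rw [Finset.disjoint_left]
      intro j hj1 hj2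
      simp only [Finset.mem_Icc] at hj1 hj2
      rcases Nat.lt_or_ge d d' with h | h
      · have := key d hd d' hd' h; omega
      · have := key d' hd' d hd (by omega); omega
    calc ∑ d ∈ t, g d = ∑ d ∈ t, (Finset.Icc (d+1) (Md d)).card := by
          refine Finset.sum_congr rfl (fun d hd => ?_)
          rw [Nat.card_Icc]
          have : g d = Md d - d := rfl
          omega
      _ = (t.biUnion (fun d => Finset.Icc (d+1) (Md d))).card :=
          (Finset.card_biUnion hdisj).symm
      _ ≤ badD.card := Finset.card_le_card (Finset.biUnion_subset.mpr hIsub)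
  -- assemble
  have hcntle : ∀ y, cnt U y ≤ y := by
    intro y
    calc cnt U y ≤ (Finset.Icc 1 y).card := Finset.card_filter_le _ _
      _ = y := by rw [Nat.card_Icc]; omega
  have hsplit : ∑ d ∈ t, c * (fib d).card
      ≤ (c-1) * (∑ d ∈ t, g d) + t.card * (c * n₀) := by
    calc ∑ d ∈ t, c * (fib d).card ≤ ∑ d ∈ t, ((c-1) * g d + c * n₀) := by
          refine Finset.sum_le_sum (fun d hd => ?_)
          have hfc := hfibcard d hd
          have hcle := hcntle (g d)
          rcases Nat.lt_or_ge (g d) n₀ with hshort | hlong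
          · have h1 : (fib d).card ≤ n₀ := by omega
            calc c * (fib d).card ≤ c * n₀ := Nat.mul_le_mul_left c h1
              _ ≤ (c-1) * g d + c * n₀ := by omega
          · have hcg := hU (g d) hlong
            calc c * (fib d).card ≤ c * (g d - cnt U (g d)) := Nat.mul_le_mul_left c hfc
              _ = c * g d - c * cnt U (g d) := Nat.mul_sub c (g d) (cnt U (g d))
              _ ≤ c * g d - g d := Nat.sub_le_sub_left hcg _
              _ = (c-1) * g d := (Nat.sub_one_mul c (g d)).symm
              _ ≤ (c-1) * g d + c * n₀ := Nat.le_add_right _ _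
      _ = (c-1) * (∑ d ∈ t, g d) + t.card * (c * n₀) := by
          rw [Finset.sum_add_distrib, Finset.mul_sum, Finset.sum_const, smul_eq_mul]
  have hfinal : c * badE.card ≤ (c-1) * badD.card + (x/(L+1)+1) * (c*n₀) := by
    rw [hcard, Finset.mul_sum]
    have h1 := Nat.mul_le_mul_left (c-1) hgsum
    have h2 := Nat.mul_le_mul_right (c*n₀) htcard
    omega
  have e1 : badc E m₀ x = badE.card := by
    rw [badc, hbadE, hI]
    congr 1
    exact Finset.filter_congr_decidable _ _ _
  have e2 : badc D m₀ x = badD.card := by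
    rw [badc, hbadD, hI]
  rw [e1, e2]
  exact hfinal

lemma hasRuns_union_sadd {D U : Set ℕ} {L : ℕ} (h : HasRuns D L) :
    HasRuns (D ∪ sadd D U) L := by
  rintro d (hd | ⟨q, hq, u, hu, rfl⟩)
  · obtain ⟨a, h1, h2, h3⟩ := h d hd
    exact ⟨a, h1, h2, fun i hi => Set.mem_union_left _ (h3 i hi)⟩
  · obtain ⟨a, h1, h2, h3⟩ := h q hq
    refine ⟨a + u, by omega, by omega, fun i hi => ?_⟩
    have : a + u + i = (a + i) + u := by omega
    rw [this]
    exact Set.mem_union_right _ ⟨a + i, h3 i hi, u, hu, rfl⟩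

lemma cnt_eq_card (D : Set ℕ) (x : ℕ) :
    (Nat.card ↥(D ∩ Set.Icc 1 x) : ℕ) = cnt D x := by
  rw [Nat.card_coe_set_eq]
  have : D ∩ Set.Icc 1 x = ↑((Finset.Icc 1 x).filter (fun n => n ∈ D)) := by
    ext n
    simp only [Set.mem_inter_iff, Set.mem_Icc, Finset.coe_filter, Finset.mem_Icc,
      Set.mem_setOf_eq]
    tauto
  rw [this, Set.ncard_coe_finset, cnt]

lemma density_extract {B : Set ℕ}
    (hdens : 0 < liminf (fun x : ℕ => (Nat.card ↥(B ∩ Set.Icc 1 x) : ℝ) / (x : ℝ)) atTop) :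
    ∃ c n₁ : ℕ, 1 ≤ c ∧ 1 ≤ n₁ ∧ ∀ x, n₁ ≤ x → x ≤ c * cnt B x := by
  set u : ℕ → ℝ := fun x => (Nat.card ↥(B ∩ Set.Icc 1 x) : ℝ) / (x : ℝ) with hu
  set a : ℝ := liminf u atTop / 2 with ha
  have ha0 : 0 < a := by positivity
  have halt : a < liminf u atTop := by
    rw [ha]; linarith
  have hbdd : IsBoundedUnder (· ≥ ·) atTop u := by
    refine isBoundedUnder_of ⟨0, fun x => ?_⟩
    rw [hu]; positivity
  have hev : ∀ᶠ x in atTop, a < u x := eventually_lt_of_lt_liminf halt hbdd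
  obtain ⟨n₀, hn₀⟩ := eventually_atTop.mp hev
  refine ⟨⌈1/a⌉₊ + 1, n₀ + 1, by omega, by omega, fun x hx => ?_⟩
  have hx1 : (1:ℕ) ≤ x := by omega
  have hax := hn₀ x (by omega)
  rw [hu] at hax
  simp only at hax
  have hxR : (0:ℝ) < x := by exact_mod_cast hx1
  have h1 : a * x < (Nat.card ↥(B ∩ Set.Icc 1 x) : ℝ) := by
    rw [lt_div_iff₀ hxR] at hax; linarith
  have h2 : (1/a) * (a * x) = x := by field_simp
  have h3 : (x : ℝ) < (⌈1/a⌉₊ + 1 : ℕ) * (Nat.card ↥(B ∩ Set.Icc 1 x) : ℝ) := by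
    have hc1 : (1/a : ℝ) ≤ (⌈1/a⌉₊ + 1 : ℕ) := by
      push_cast
      have := Nat.le_ceil (1/a)
      linarith
    have hcard0 : (0:ℝ) ≤ (Nat.card ↥(B ∩ Set.Icc 1 x) : ℝ) := by positivity
    calc (x:ℝ) = (1/a) * (a * x) := h2.symm
      _ ≤ (⌈1/a⌉₊ + 1 : ℕ) * (a * x) := by
          apply mul_le_mul_of_nonneg_right hc1; positivity
      _ < (⌈1/a⌉₊ + 1 : ℕ) * (Nat.card ↥(B ∩ Set.Icc 1 x) : ℝ) := by
          apply mul_lt_mul_of_pos_left h1; positivity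
  rw [cnt_eq_card] at h3
  exact_mod_cast h3.le

lemma Dk_run_mem (D U : Set ℕ) (L m₀ : ℕ) (hrun : HasRuns D L) (hm₀ : m₀ ∈ D) (k : ℕ) :
    HasRuns (Nat.rec D (fun _ Dp => Dp ∪ sadd Dp U) k : Set ℕ) L ∧
      m₀ ∈ (Nat.rec D (fun _ Dp => Dp ∪ sadd Dp U) k : Set ℕ) := by
  induction k with
  | zero => exact ⟨hrun, hm₀⟩
  | succ k ih => exact ⟨hasRuns_union_sadd ih.1, Set.mem_union_left _ ih.2⟩

lemma badc_le (D : Set ℕ) (m₀ x : ℕ) : badc D m₀ x ≤ x := by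
  calc badc D m₀ x ≤ (Finset.Icc (m₀+1) x).card := Finset.card_filter_le _ _
    _ ≤ x := by rw [Nat.card_Icc]; omega

lemma badc_iter (D U : Set ℕ) (L c n₀ m₀ : ℕ) (hc : 1 ≤ c)
    (hrun : HasRuns D L) (hm₀ : m₀ ∈ D)
    (hU : ∀ y, n₀ ≤ y → y ≤ c * cnt U y) (x : ℕ) (k : ℕ) :
    (badc (Nat.rec D (fun _ Dp => Dp ∪ sadd Dp U) k : Set ℕ) m₀ x : ℝ)
      ≤ (1 - 1/(c:ℝ))^k * x + k * (n₀ * ((x/(L+1) : ℕ) + 1)) := by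
  have hcR : (1:ℝ) ≤ c := by exact_mod_cast hc
  have hcR0 : (0:ℝ) < c := by linarith
  set r : ℝ := 1 - 1/(c:ℝ) with hr
  have hr0 : 0 ≤ r := by
    have : 1/(c:ℝ) ≤ 1 := by rw [div_le_one hcR0]; linarith
    simp only [hr]; linarith
  have hr1 : r ≤ 1 := by
    have : 0 < 1/(c:ℝ) := by positivity
    simp only [hr]; linarith
  set J : ℝ := (n₀ : ℝ) * ((x/(L+1) : ℕ) + 1) with hJ
  have hJ0 : 0 ≤ J := by rw [hJ]; positivity
  induction k with
  | zero =>
      simp only [pow_zero, one_mul, Nat.cast_zero, zero_mul, add_zero]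
      exact_mod_cast badc_le D m₀ x
  | succ k ih =>
      obtain ⟨hrunk, hm₀k⟩ := Dk_run_mem D U L m₀ hrun hm₀ k
      have hsh := shrink (Nat.rec D (fun _ Dp => Dp ∪ sadd Dp U) k : Set ℕ) U L c n₀ m₀ x
        hc hrunk hm₀k hU
      set bk : ℕ := badc (Nat.rec D (fun _ Dp => Dp ∪ sadd Dp U) k : Set ℕ) m₀ x with hbk
      set bk1 : ℕ := badc ((Nat.rec D (fun _ Dp => Dp ∪ sadd Dp U) k : Set ℕ) ∪
        sadd (Nat.rec D (fun _ Dp => Dp ∪ sadd Dp U) k : Set ℕ) U) m₀ x with hbk1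
      have hshR : (c:ℝ) * bk1 ≤ ((c:ℝ) - 1) * bk + ((x/(L+1) : ℕ) + 1) * (c * n₀) := by
        have h1 : ((c * bk1 : ℕ) : ℝ) ≤ (((c-1) * bk + (x / (L+1) + 1) * (c * n₀) : ℕ) : ℝ) := by
          exact_mod_cast hsh
        push_cast at h1
        rw [Nat.cast_sub hc] at h1
        push_cast at h1
        linarith
      have hstep : (bk1 : ℝ) ≤ r * bk + J := by
        rw [← mul_le_mul_iff_right₀ hcR0]
        have heq : (c:ℝ) * (r * bk + J) = ((c:ℝ)-1) * bk + ((x/(L+1) : ℕ) + 1) * (c * n₀) := by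
          rw [hJ, hr]; field_simp
        rw [heq]; exact hshR
      have : (bk1 : ℝ) ≤ r * (r^k * x + k * J) + J := by
        have hbkb : (bk : ℝ) ≤ r^k * x + k * J := ih
        nlinarith
      calc (bk1 : ℝ) ≤ r * (r^k * x + k * J) + J := this
        _ = r^(k+1) * x + (r * k) * J + J := by ring
        _ ≤ r^(k+1) * x + (k:ℝ) * J + J := by
            have : (r * k) * J ≤ (k:ℝ) * J := by
              apply mul_le_mul_of_nonneg_right _ hJ0
              nlinarith [Nat.cast_nonneg (α := ℝ) k]
            linarith
        _ = r^(k+1) * x + ((k:ℕ)+1 : ℝ) * J := by ring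
        _ = r^(k+1) * x + (((k+1):ℕ) : ℝ) * J := by push_cast; ring

lemma coverage (W : Set ℕ) (n : ℕ) (h2 : 2 ≤ n) (hcnt : n - 1 < 2 * cnt W (n-1)) :
    ∃ d d', d ∈ W ∧ d' ∈ W ∧ d + d' = n := by
  set s := (Finset.Icc 1 (n-1)).filter (fun j => j ∈ W) with hs
  set t := s.image (fun d => n - d) with htdef
  have hts : t.card = s.card := Finset.card_image_of_injOn (fun d hd d' hd' h => by
    have h1 := Finset.mem_Icc.mp (Finset.mem_filter.mp hd).1
    have h2 := Finset.mem_Icc.mp (Finset.mem_filter.mp hd').1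
    omega)
  have hsub : s ∪ t ⊆ Finset.Icc 1 (n-1) := by
    intro j hj
    rcases Finset.mem_union.mp hj with h | h
    · exact (Finset.mem_filter.mp h).1
    · obtain ⟨d, hd, rfl⟩ := Finset.mem_image.mp h
      have := Finset.mem_Icc.mp (Finset.mem_filter.mp hd).1
      exact Finset.mem_Icc.mpr (by omega)
  have hscnt : s.card = cnt W (n-1) := rfl
  have hint : (s ∩ t).Nonempty := by
    by_contra hemp
    rw [Finset.not_nonempty_iff_eq_empty] at hemp
    have h1 := Finset.card_union_add_card_inter s t
    rw [hemp] at h1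
    have h2' : (s ∪ t).card ≤ n - 1 :=
      le_trans (Finset.card_le_card hsub) (by rw [Nat.card_Icc]; omega)
    simp only [Finset.card_empty] at h1
    omega
  obtain ⟨j, hj⟩ := hint
  obtain ⟨hjs, hjt⟩ := Finset.mem_inter.mp hj
  obtain ⟨d, hd, hdj⟩ := Finset.mem_image.mp hjt
  have h1 := Finset.mem_Icc.mp (Finset.mem_filter.mp hjs).1
  have h2'' := Finset.mem_Icc.mp (Finset.mem_filter.mp hd).1
  exact ⟨j, d, (Finset.mem_filter.mp hjs).2, (Finset.mem_filter.mp hd).2, by omega⟩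


/-- Nash–Nathanson: if `0 ∈ A`, `gcd A = 1`, and some `h₀`-fold sumset of `A` has positive
lower asymptotic density, then `A` is an asymptotic basis of finite order. -/
theorem stmt0 (A : Set ℕ) (h0A : (0 : ℕ) ∈ A)
    (hgcd : ∀ d : ℕ, (∀ a ∈ A, d ∣ a) → d = 1)
    (h₀ : ℕ) (hh₀ : 1 ≤ h₀)
    (hdens : 0 < liminf (fun x : ℕ =>
      (Nat.card ↥(sumset h₀ A ∩ Set.Icc 1 x) : ℝ) / (x : ℝ)) atTop) :
    ∃ h : ℕ, 1 ≤ h ∧ {n : ℕ | n ∉ sumset h A}.Finite := by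
  set B := sumset h₀ A with hBdef
  obtain ⟨c, n₁, hc1, hn₁1, hB⟩ := density_extract (B := B) hdens
  obtain ⟨v, hv1, hv, hv'⟩ := exists_consecutive h0A hgcd
  set N := v * v with hN
  have hcR : (1:ℝ) ≤ (c:ℝ) := by exact_mod_cast hc1
  have hr1 : (1 - 1/(c:ℝ)) < 1 := by
    have : 0 < 1/(c:ℝ) := by positivity
    linarith
  obtain ⟨K, hK⟩ := exists_pow_lt_of_lt_one (show (0:ℝ) < 1/8 by norm_num) hr1
  have hrnn : (0:ℝ) ≤ 1 - 1/(c:ℝ) := by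
    have : 1/(c:ℝ) ≤ 1 := by
      rw [div_le_one (by linarith)]; linarith
    linarith
  set L := 16 * (K+1) * c * n₁ with hLdef
  obtain ⟨m, hm1, hmI⟩ := exists_interval h0A hv1 hv hv' L
  set D₀ : Set ℕ := {n | ∃ b ∈ B, ∃ i, i ≤ L ∧ b + N + i = n} with hD₀
  have h0B : (0:ℕ) ∈ B := zero_mem_sumset h0A h₀
  have hND₀ : N ∈ D₀ := ⟨0, h0B, 0, by omega, by omega⟩
  have hrunD₀ : HasRuns D₀ L := by
    rintro d ⟨b, hb, i, hi, rfl⟩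
    exact ⟨b + N, by omega, by omega, fun j hj => ⟨b, hb, j, hj, by omega⟩⟩
  have hD₀sub : D₀ ⊆ sumset (h₀ + m) A := by
    rintro n ⟨b, hb, i, hi, rfl⟩
    have h1 : N + i ∈ sumset m A := hmI i hi
    have h2 := add_mem_sumset hb h1
    rwa [← add_assoc] at h2
  have hDksub : ∀ k, (Nat.rec D₀ (fun _ Dp => Dp ∪ sadd Dp B) k : Set ℕ)
      ⊆ sumset (h₀ + m + k * h₀) A := by
    intro k
    induction k with
    | zero => simpa using hD₀sub
    | succ k ih =>
        intro n hn
        have hsucc : (k+1) * h₀ = k * h₀ + h₀ := Nat.succ_mul k h₀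
        rcases (hn : n ∈ (Nat.rec D₀ (fun _ Dp => Dp ∪ sadd Dp B) k : Set ℕ)
            ∪ sadd (Nat.rec D₀ (fun _ Dp => Dp ∪ sadd Dp B) k : Set ℕ) B) with h | h
        · exact sumset_mono h0A (by omega) (ih h)
        · obtain ⟨p, hp, u, hu, rfl⟩ := h
          exact sumset_mono h0A (by omega) (add_mem_sumset (ih hp) hu)
  set W : Set ℕ := (Nat.rec D₀ (fun _ Dp => Dp ∪ sadd Dp B) K : Set ℕ) with hW
  have hbad := badc_iter D₀ B L c n₁ N hc1 hrunD₀ hND₀ hB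
  have hcnt_lower : ∀ x, x ≤ cnt W x + badc W N x + N := by
    intro x
    have h1 : ((Finset.Icc (N+1) x).filter (fun n => n ∈ W)).card +
        ((Finset.Icc (N+1) x).filter (fun n => n ∉ W)).card = (Finset.Icc (N+1) x).card :=
      Finset.card_filter_add_card_filter_not _
    have h2 : ((Finset.Icc (N+1) x).filter (fun n => n ∈ W)).card ≤ cnt W x := by
      unfold cnt
      exact Finset.card_le_card
        (Finset.filter_subset_filter _ (Finset.Icc_subset_Icc (by omega) le_rfl))
    have h3 : badc W N x = ((Finset.Icc (N+1) x).filter (fun n => n ∉ W)).card := rfl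
    rw [Nat.card_Icc] at h1
    omega
  -- good counting at scale x
  have hgood : ∀ x : ℕ, 16 * (N + K * n₁ + 1) ≤ x → x < 2 * cnt W x := by
    intro x hx
    have hbx := hbad x K
    rw [← hW] at hbx
    have hlow := hcnt_lower x
    have hxR : (16:ℝ) * ((N:ℝ) + (K:ℝ) * n₁ + 1) ≤ (x:ℝ) := by exact_mod_cast hx
    have hx0 : (0:ℝ) ≤ (x:ℝ) := by positivity
    -- bound the power term
    have hpow : (1 - 1/(c:ℝ))^K * x ≤ (1/8) * x :=
      mul_le_mul_of_nonneg_right hK.le hx0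
    -- bound the J term
    have hLn : (16:ℝ) * ((K:ℝ) * n₁) ≤ ((L:ℝ) + 1) := by
      have h16 : 16 * (K * n₁) ≤ L + 1 := by
        have hh : 16 * K * n₁ ≤ 16 * (K+1) * c * n₁ := by
          apply Nat.mul_le_mul_right
          calc 16 * K ≤ 16 * (K+1) := by omega
            _ ≤ 16 * (K+1) * c := Nat.le_mul_of_pos_right _ (by omega)
        calc 16 * (K * n₁) = 16 * K * n₁ := by ring
          _ ≤ 16 * (K+1) * c * n₁ := hh
          _ ≤ L + 1 := by omega
      exact_mod_cast h16
    have hdiv : ((x/(L+1) : ℕ) : ℝ) ≤ (x:ℝ)/((L:ℝ)+1) := by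
      have := Nat.cast_div_le (m := x) (n := L+1) (α := ℝ)
      push_cast at this ⊢
      exact this
    have hL0 : (0:ℝ) < (L:ℝ) + 1 := by positivity
    have hJterm : (K:ℝ) * ((n₁:ℝ) * (((x/(L+1) : ℕ) : ℝ) + 1)) ≤ (1/16) * x + (K:ℝ) * n₁ := by
      have h1 : (K:ℝ) * n₁ * ((x:ℝ)/((L:ℝ)+1)) ≤ (1/16) * x := by
        have hKn : (K:ℝ) * n₁ ≤ ((L:ℝ)+1)/16 := by linarith
        calc (K:ℝ) * n₁ * ((x:ℝ)/((L:ℝ)+1)) ≤ (((L:ℝ)+1)/16) * ((x:ℝ)/((L:ℝ)+1)) :=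
              mul_le_mul_of_nonneg_right hKn (by positivity)
          _ = (1/16) * ((x:ℝ) * (((L:ℝ)+1) / ((L:ℝ)+1))) := by ring
          _ = (1/16) * x := by rw [div_self (by linarith)]; ring
      have h2 : (K:ℝ) * ((n₁:ℝ) * (((x/(L+1) : ℕ) : ℝ) + 1))
          = (K:ℝ) * n₁ * ((x/(L+1) : ℕ) : ℝ) + (K:ℝ) * n₁ := by ring
      have h3 : (K:ℝ) * n₁ * ((x/(L+1) : ℕ) : ℝ) ≤ (K:ℝ) * n₁ * ((x:ℝ)/((L:ℝ)+1)) := by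
        apply mul_le_mul_of_nonneg_left hdiv (by positivity)
      linarith
    have hbR : (badc W N x : ℝ) ≤ (1/8) * x + ((1/16) * x + (K:ℝ) * n₁) := by
      have := hbx
      push_cast at this
      push_cast
      linarith
    have hlowR : (x:ℝ) ≤ (cnt W x : ℝ) + (badc W N x : ℝ) + N := by exact_mod_cast hlow
    have hfin : (x:ℝ) < 2 * (cnt W x : ℝ) := by linarith
    exact_mod_cast hfin
  refine ⟨2 * (h₀ + m + K * h₀), by omega, ?_⟩
  apply Set.Finite.subset (Set.finite_Icc 0 (16 * (N + K * n₁ + 1) + 1))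
  intro n hn
  simp only [Set.mem_setOf_eq] at hn
  by_contra hcon
  simp only [Set.mem_Icc, not_and, not_le] at hcon
  have hcon' : 16 * (N + K * n₁ + 1) + 1 < n := hcon (by omega)
  apply hn
  have h2n : 2 ≤ n := by omega
  have hxX : 16 * (N + K * n₁ + 1) ≤ n - 1 := by omega
  obtain ⟨d, d', hd, hd', hdd⟩ := coverage W n h2n (hgood (n-1) hxX)
  have h1 := hDksub K hd
  have h2 := hDksub K hd'
  have h3 := add_mem_sumset h1 h2
  rw [hdd] at h3
  exact sumset_mono h0A (by omega) h3
end

section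
/- If A is a set of nonnegative integers that is an asymptotic basis of order 2 for ℕ₀ (that is, all sufficiently large nonnegative integers lie in the sumset A + A), then the unordered representation function r_{A,2} is not eventually constant: there do not exist c ∈ ℕ₀ and n₀ such that r_{A,2}(n) = c for all n ≥ n₀. -/
open Pointwise

/-- The unordered representation function of order 2 of a set `A ⊆ ℕ`. -/
noncomputable def r2 (A : Set ℕ) (n : ℕ) : ℕ :=
  Nat.card {p : ℕ × ℕ // p.1 ∈ A ∧ p.2 ∈ A ∧ p.1 ≤ p.2 ∧ p.1 + p.2 = n}

section DiracAux

open Finset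

variable (A : Set ℕ) [DecidablePred (· ∈ A)]

def sA (n : ℕ) : ℕ := ((antidiagonal n).filter (fun p => p.1 ∈ A ∧ p.2 ∈ A)).card
def dA (n : ℕ) : ℕ := if 2 ∣ n ∧ n / 2 ∈ A then 1 else 0

lemma r2_eq (n : ℕ) :
    r2 A n = ((antidiagonal n).filter (fun p => p.1 ∈ A ∧ p.2 ∈ A ∧ p.1 ≤ p.2)).card := by
  rw [r2, ← Nat.card_eq_finsetCard]
  exact Nat.card_congr (Equiv.subtypeEquivRight (fun p => by
    simp only [mem_filter, Finset.HasAntidiagonal.mem_antidiagonal]; tauto))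

lemma two_r2 (n : ℕ) : 2 * r2 A n = sA A n + dA A n := by
  classical
  set T := (antidiagonal n).filter (fun p => p.1 ∈ A ∧ p.2 ∈ A) with hT
  set L := T.filter (fun p => p.1 ≤ p.2) with hL
  set G := T.filter (fun p => p.2 ≤ p.1) with hG
  have hunion : L ∪ G = T := by
    rw [hL, hG, ← Finset.filter_or]
    exact Finset.filter_true_of_mem (fun p _ => le_total p.1 p.2)
  have hinter : (L ∩ G).card = dA A n := by
    rw [hL, hG, ← Finset.filter_and]
    by_cases h : 2 ∣ n ∧ n / 2 ∈ A
    · have : T.filter (fun p => p.1 ≤ p.2 ∧ p.2 ≤ p.1) = {(n / 2, n / 2)} := by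
        ext p
        simp only [mem_filter, Finset.HasAntidiagonal.mem_antidiagonal, Finset.mem_singleton, hT]
        constructor
        · rintro ⟨⟨hpn, h1, h2⟩, hle, hge⟩
          have : p.1 = p.2 := le_antisymm hle hge
          obtain ⟨k, hk⟩ := h.1
          obtain ⟨p1, p2⟩ := p
          simp only [Prod.mk.injEq]
          simp only at this hpn
          omega
        · rintro rfl
          obtain ⟨k, hk⟩ := h.1
          refine ⟨⟨by simp; omega, h.2, h.2⟩, le_refl _, le_refl _⟩
      rw [this, dA, if_pos h, Finset.card_singleton]
    · have : T.filter (fun p => p.1 ≤ p.2 ∧ p.2 ≤ p.1) = ∅ := by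
        ext p
        simp only [mem_filter, Finset.HasAntidiagonal.mem_antidiagonal, Finset.notMem_empty, iff_false, hT]
        rintro ⟨⟨hpn, h1, h2⟩, hle, hge⟩
        have hp : p.1 = p.2 := le_antisymm hle hge
        apply h
        constructor
        · exact ⟨p.1, by omega⟩
        · have : n / 2 = p.1 := by omega
          rwa [this]
      rw [this, Finset.card_empty, dA, if_neg h]
  have hcards : G.card = L.card := by
    apply Finset.card_bij' (fun p _ => Prod.swap p) (fun p _ => Prod.swap p)
    · intro p hp
      simp only [hG, hL, hT, mem_filter, Finset.HasAntidiagonal.mem_antidiagonal] at hp ⊢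
      obtain ⟨⟨hn, h1, h2⟩, hle⟩ := hp
      exact ⟨⟨by simp [Nat.add_comm, hn], h2, h1⟩, hle⟩
    · intro p hp
      simp only [hG, hL, hT, mem_filter, Finset.HasAntidiagonal.mem_antidiagonal] at hp ⊢
      obtain ⟨⟨hn, h1, h2⟩, hle⟩ := hp
      exact ⟨⟨by simp [Nat.add_comm, hn], h2, h1⟩, hle⟩
    · intro p _; exact Prod.swap_swap p
    · intro p _; exact Prod.swap_swap p
  have key := Finset.card_union_add_card_inter L G
  rw [hunion, hinter] at key
  have hr2 : r2 A n = L.card := by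
    rw [r2_eq, hL, hT, Finset.filter_filter]
    congr 1
    ext p
    simp; tauto
  have hsa : sA A n = T.card := rfl
  rw [hr2]
  omega

open Finset in
lemma dirac_bound (t : ℝ) (ht0 : 0 < t) (ht1 : t < 1) (c n₀ : ℕ)
    (hc : ∀ n, n₀ ≤ n → r2 A n = c) :
    (∑' a : ℕ, (if a ∈ A then (t ^ 2) ^ a else 0)) ≤
      2 * ((∑ n ∈ Finset.range n₀, ((r2 A n : ℝ) + c)) + c) := by
  set x : ℝ := -t with hxdef
  have hxn : ∀ n : ℕ, ‖x ^ n‖ = t ^ n := by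
    intro n
    rw [norm_pow, hxdef, norm_neg, Real.norm_eq_abs, abs_of_pos ht0]
  have hx : ‖x‖ < 1 := by
    rw [hxdef, norm_neg, Real.norm_eq_abs, abs_of_pos ht0]; exact ht1
  have hgeo : Summable (fun n : ℕ => t ^ n) := summable_geometric_of_lt_one ht0.le ht1
  set f : ℕ → ℝ := fun n => if n ∈ A then x ^ n else 0 with hfdef
  have hf : Summable (fun n => ‖f n‖) := by
    apply Summable.of_nonneg_of_le (fun n => norm_nonneg _) _ hgeo
    intro n
    simp only [hfdef]
    split_ifs with h
    · rw [hxn]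
    · simp [pow_nonneg ht0.le]
  -- Cauchy product identity
  have hF2 : (∑' n, f n) ^ 2 = ∑' n, (sA A n : ℝ) * x ^ n := by
    rw [sq, tsum_mul_tsum_eq_tsum_sum_antidiagonal_of_summable_norm hf hf]
    apply tsum_congr; intro n
    have : ∀ kl ∈ antidiagonal n, f kl.1 * f kl.2
        = if kl.1 ∈ A ∧ kl.2 ∈ A then x ^ n else 0 := by
      intro kl hkl
      have hsum : kl.1 + kl.2 = n := Finset.HasAntidiagonal.mem_antidiagonal.mp hkl
      simp only [hfdef]
      by_cases h1 : kl.1 ∈ A <;> by_cases h2 : kl.2 ∈ A <;>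
        simp [h1, h2, ← pow_add, hsum]
    rw [Finset.sum_congr rfl this, ← Finset.sum_filter, Finset.sum_const, nsmul_eq_mul]
    rfl
  -- size bounds
  have hs_le : ∀ n, sA A n ≤ n + 1 := by
    intro n
    have := Finset.card_filter_le (antidiagonal n) (fun p => p.1 ∈ A ∧ p.2 ∈ A)
    rwa [Finset.Nat.card_antidiagonal] at this
  have hd_le : ∀ n, dA A n ≤ 1 := by
    intro n; rw [dA]; split_ifs <;> omega
  have hr_le : ∀ n, r2 A n ≤ n + 1 := by
    intro n
    have h2 := two_r2 A n
    have := hs_le n; have := hd_le n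
    omega
  have haux : Summable (fun n : ℕ => ((n : ℝ) + 1) * t ^ n) := by
    have h1 := summable_pow_mul_geometric_of_norm_lt_one (R := ℝ) 1
      (r := t) (by rw [Real.norm_eq_abs, abs_of_pos ht0]; exact ht1)
    have := h1.add hgeo
    apply this.congr
    intro n; simp; ring
  have hR : Summable (fun n => (r2 A n : ℝ) * x ^ n) := by
    apply Summable.of_norm_bounded haux
    intro n
    rw [norm_mul, hxn, Real.norm_eq_abs, Nat.abs_cast]
    apply mul_le_mul_of_nonneg_right _ (pow_nonneg ht0.le n)
    exact_mod_cast hr_le n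
  have hS : Summable (fun n => (sA A n : ℝ) * x ^ n) := by
    apply Summable.of_norm_bounded haux
    intro n
    rw [norm_mul, hxn, Real.norm_eq_abs, Nat.abs_cast]
    apply mul_le_mul_of_nonneg_right _ (pow_nonneg ht0.le n)
    exact_mod_cast hs_le n
  have hD : Summable (fun n => (dA A n : ℝ) * x ^ n) := by
    apply Summable.of_norm_bounded hgeo
    intro n
    rw [norm_mul, hxn, Real.norm_eq_abs, Nat.abs_cast]
    have : (dA A n : ℝ) ≤ 1 := by exact_mod_cast hd_le n
    nlinarith [pow_nonneg ht0.le n, pow_le_one₀ ht0.le ht1.le (n := n)]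
  -- split the s-sum
  have hsplit : ∑' n, (sA A n : ℝ) * x ^ n
      = 2 * (∑' n, (r2 A n : ℝ) * x ^ n) - ∑' n, (dA A n : ℝ) * x ^ n := by
    rw [← tsum_mul_left, ← Summable.tsum_sub (hR.mul_left 2) hD]
    apply tsum_congr; intro n
    have h2 := congrArg (Nat.cast : ℕ → ℝ) (two_r2 A n)
    push_cast at h2
    have hs : (sA A n : ℝ) = 2 * (r2 A n : ℝ) - (dA A n : ℝ) := by linarith
    rw [hs]; ring
  -- the diagonal sum equals the even-power sum
  have hDG : ∑' n, (dA A n : ℝ) * x ^ n = ∑' a : ℕ, (if a ∈ A then (t ^ 2) ^ a else 0) := by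
    have hinj : Function.Injective (fun a : ℕ => 2 * a) := fun a b h => by simp only at h; omega
    have hsupp : Function.support (fun n => (dA A n : ℝ) * x ^ n)
        ⊆ Set.range (fun a : ℕ => 2 * a) := by
      intro n hn
      simp only [Function.mem_support] at hn
      have : dA A n ≠ 0 := by
        intro h; rw [h] at hn; simp at hn
      rw [dA] at this
      split_ifs at this with h
      · exact ⟨n / 2, by simp only; omega⟩
      · exact absurd rfl this
    rw [← Function.Injective.tsum_eq hinj hsupp]
    apply tsum_congr; intro a
    have h2 : 2 * a / 2 = a := by omega
    have hx2 : x ^ (2 * a) = (t ^ 2) ^ a := by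
      rw [hxdef, pow_mul, neg_sq]
    by_cases ha : a ∈ A
    · rw [dA, if_pos ⟨⟨a, rfl⟩, by rwa [h2]⟩, if_pos ha, hx2]
      norm_num
    · rw [dA, if_neg, if_neg ha]
      · simp
      · rintro ⟨-, hmem⟩
        rw [h2] at hmem
        exact ha hmem
  -- bound the r2-sum
  have hgeomx : Summable (fun n : ℕ => x ^ n) := summable_geometric_of_norm_lt_one hx
  have hfin : Summable (fun n : ℕ => ((r2 A n : ℝ) - c) * x ^ n) := by
    apply summable_of_ne_finset_zero (s := Finset.range n₀)
    intro n hn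
    rw [Finset.mem_range, not_lt] at hn
    rw [hc n hn]
    simp
  have hRsplit : ∑' n, (r2 A n : ℝ) * x ^ n
      = (∑ n ∈ Finset.range n₀, ((r2 A n : ℝ) - c) * x ^ n) + c * ∑' n : ℕ, x ^ n := by
    rw [← tsum_eq_sum (L := SummationFilter.unconditional ℕ) (f := fun n => ((r2 A n : ℝ) - c) * x ^ n)
      (s := Finset.range n₀) (by
        intro n hn
        rw [Finset.mem_range, not_lt] at hn
        simp [hc n hn]),
      ← tsum_mul_left, ← Summable.tsum_add hfin (hgeomx.mul_left _)]
    apply tsum_congr; intro n; ring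
  have hxabs : ∀ n : ℕ, |x ^ n| ≤ 1 := by
    intro n
    rw [← Real.norm_eq_abs, hxn]
    exact pow_le_one₀ ht0.le ht1.le
  have hRbound : ∑' n, (r2 A n : ℝ) * x ^ n
      ≤ (∑ n ∈ Finset.range n₀, ((r2 A n : ℝ) + c)) + c := by
    rw [hRsplit, tsum_geometric_of_norm_lt_one hx]
    have h1 : (∑ n ∈ Finset.range n₀, ((r2 A n : ℝ) - c) * x ^ n)
        ≤ ∑ n ∈ Finset.range n₀, ((r2 A n : ℝ) + c) := by
      apply Finset.sum_le_sum
      intro n _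
      calc ((r2 A n : ℝ) - c) * x ^ n ≤ |((r2 A n : ℝ) - c) * x ^ n| := le_abs_self _
        _ = |(r2 A n : ℝ) - c| * |x ^ n| := abs_mul _ _
        _ ≤ ((r2 A n : ℝ) + c) * 1 := by
            apply mul_le_mul _ (hxabs n) (abs_nonneg _) (by positivity)
            rw [abs_sub_comm]
            calc |(c : ℝ) - r2 A n| ≤ |(c:ℝ)| + |(r2 A n : ℝ)| := abs_sub _ _
              _ = (r2 A n : ℝ) + c := by
                  rw [Nat.abs_cast, Nat.abs_cast]; ring
        _ = (r2 A n : ℝ) + c := mul_one _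
    have h2 : (c : ℝ) * (1 - x)⁻¹ ≤ c := by
      have hpos : (0:ℝ) < 1 - x := by rw [hxdef]; linarith
      have : (1 - x)⁻¹ ≤ 1 := by
        rw [inv_le_one_iff₀]
        right; rw [hxdef]; linarith
      nlinarith [Nat.cast_nonneg (α := ℝ) c]
    linarith
  -- conclude
  have hF2nn : 0 ≤ (∑' n, f n) ^ 2 := sq_nonneg _
  rw [hF2, hsplit] at hF2nn
  rw [← hDG]
  linarith

end DiracAux

/-- Dirac: if `A` is an asymptotic basis of order 2 for `ℕ`, then `r_{A,2}` is not
eventually constant. -/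
theorem stmt2 (A : Set ℕ) (hA : {n : ℕ | n ∉ A + A}.Finite) :
    ¬ ∃ (c n₀ : ℕ), ∀ n : ℕ, n₀ ≤ n → r2 A n = c := by
  classical
  rintro ⟨c, n₀, hc⟩
  have hAinf : A.Infinite := by
    by_contra hfin
    rw [Set.not_infinite] at hfin
    have h1 : (A + A).Finite := hfin.add hfin
    have h2 : (Set.univ : Set ℕ).Finite := by
      refine Set.Finite.subset (h1.union hA) ?_
      intro n _
      by_cases h : n ∈ A + A
      · exact Or.inl h
      · exact Or.inr h
    exact Set.infinite_univ h2
  set M0 : ℝ := (∑ n ∈ Finset.range n₀, ((r2 A n : ℝ) + c)) + c with hM0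
  set K : ℕ := ⌈2 * M0⌉₊ + 1 with hK
  obtain ⟨S, hSsub, hScard⟩ := hAinf.exists_subset_card_eq K
  set N : ℕ := S.sup id with hN
  have hNle : ∀ a ∈ S, a ≤ N := fun a ha => Finset.le_sup (f := id) ha
  have hden : (0:ℝ) < 2 * N * K + 2 := by positivity
  set ε : ℝ := 1 / (2 * N * K + 2) with hε
  have hε0 : 0 < ε := by positivity
  have hεhalf : ε ≤ 1 / 2 := by
    rw [hε]
    have h2le : (2:ℝ) ≤ 2 * N * K + 2 := by
      have : (0:ℝ) ≤ 2 * (N:ℝ) * K := by positivity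
      linarith
    exact one_div_le_one_div_of_le two_pos h2le
  set t : ℝ := 1 - ε with htd
  have ht0 : 0 < t := by rw [htd]; linarith
  have ht1 : t < 1 := by rw [htd]; linarith
  have hb := dirac_bound A t ht0 ht1 c n₀ hc
  rw [← hM0] at hb
  have ht2nn : (0:ℝ) ≤ t ^ 2 := sq_nonneg t
  have ht1nn : (0:ℝ) ≤ t := ht0.le
  have ht2lt : t ^ 2 < 1 := by nlinarith
  have hsum : Summable (fun a : ℕ => if a ∈ A then (t ^ 2) ^ a else 0) := by
    apply Summable.of_nonneg_of_le _ _ (summable_geometric_of_lt_one ht2nn ht2lt)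
    · intro a; split_ifs
      exacts [pow_nonneg ht2nn a, le_refl 0]
    · intro a; split_ifs
      exacts [le_refl _, pow_nonneg ht2nn a]
  have hlow : (K : ℝ) * (t ^ 2) ^ N ≤ ∑' a : ℕ, (if a ∈ A then (t ^ 2) ^ a else 0) := by
    have h1 : (K : ℝ) * (t ^ 2) ^ N = ∑ a ∈ S, (t ^ 2) ^ N := by
      rw [Finset.sum_const, hScard, nsmul_eq_mul]
    rw [h1]
    refine le_trans (Finset.sum_le_sum fun a ha => ?_)
      (Summable.sum_le_tsum S (fun a _ => ?_) hsum)
    · rw [if_pos (hSsub ha)]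
      exact pow_le_pow_of_le_one ht2nn (by nlinarith) (hNle a ha)
    · split_ifs
      exacts [pow_nonneg ht2nn a, le_refl 0]
  have hbern : 1 - (2 * N : ℝ) * ε ≤ t ^ (2 * N) := by
    have hB := one_add_mul_le_pow (a := -ε) (by linarith) (2 * N)
    push_cast at hB
    have he : (1:ℝ) + -ε = t := by rw [htd]; ring
    rw [he] at hB
    linarith
  have hKge : 2 * M0 + 1 ≤ (K : ℝ) := by
    rw [hK]; push_cast
    have := Nat.le_ceil (2 * M0)
    linarith
  have hεK : (K:ℝ) * ((2 * N : ℝ) * ε) < 1 := by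
    have heq : (K:ℝ) * ((2 * N : ℝ) * ε) = (2 * N * K) / (2 * N * K + 2) := by
      rw [hε]; field_simp
    rw [heq, div_lt_one hden]
    linarith
  have hfinal : 2 * M0 < (K:ℝ) * (t ^ 2) ^ N := by
    rw [← pow_mul]
    have h3 : (K:ℝ) * (1 - (2 * N : ℝ) * ε) ≤ (K:ℝ) * t ^ (2 * N) :=
      mul_le_mul_of_nonneg_left hbern (Nat.cast_nonneg K)
    have h4 : (K:ℝ) * (1 - (2 * N : ℝ) * ε) = K - K * ((2 * N : ℝ) * ε) := by ring
    linarith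
  linarith [le_trans hlow hb]
end

section
/- For every integer k ≥ 3, the set A* = {0, 2, 4} ∪ {4j − 1 : j = 1, 2, …, k} ∪ {4k, 4k+2} of integers satisfies |A* + A*| > |A* − A*|; that is, A* is a set with more sums than differences (an MSTD set). -/
open Pointwise

/-- Nathanson: for every `k ≥ 3`, the set
`A* = {0,2,4} ∪ {4j-1 : 1 ≤ j ≤ k} ∪ {4k, 4k+2}` has more sums than differences. -/
theorem stmt3 (k : ℕ) (hk : 3 ≤ k) (A : Finset ℤ)
    (hA : A = ({0, 2, 4} : Finset ℤ) ∪
      (Finset.Icc (1 : ℤ) (k : ℤ)).image (fun j => 4 * j - 1) ∪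
      {4 * (k : ℤ), 4 * (k : ℤ) + 2}) :
    (A - A).card < (A + A).card := by
  have hk' : (3:ℤ) ≤ (k:ℤ) := by exact_mod_cast hk
  have hAmem : ∀ a : ℤ, a ∈ A ↔
      (a = 0 ∨ a = 2 ∨ a = 4 ∨ (∃ j : ℤ, 1 ≤ j ∧ j ≤ (k:ℤ) ∧ a = 4*j-1) ∨
        a = 4*(k:ℤ) ∨ a = 4*(k:ℤ)+2) := by
    intro a
    subst hA
    simp only [Finset.mem_union, Finset.mem_insert, Finset.mem_singleton,
      Finset.mem_image, Finset.mem_Icc]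
    constructor
    · rintro (((h | h | h) | ⟨j, ⟨h1, h2⟩, h3⟩) | h | h)
      · exact Or.inl h
      · exact Or.inr (Or.inl h)
      · exact Or.inr (Or.inr (Or.inl h))
      · exact Or.inr (Or.inr (Or.inr (Or.inl ⟨j, h1, h2, h3.symm⟩)))
      · exact Or.inr (Or.inr (Or.inr (Or.inr (Or.inl h))))
      · exact Or.inr (Or.inr (Or.inr (Or.inr (Or.inr h))))
    · rintro (h | h | h | ⟨j, h1, h2, h3⟩ | h | h)
      · exact Or.inl (Or.inl (Or.inl h))
      · exact Or.inl (Or.inl (Or.inr (Or.inl h)))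
      · exact Or.inl (Or.inl (Or.inr (Or.inr h)))
      · exact Or.inl (Or.inr ⟨j, ⟨h1, h2⟩, h3.symm⟩)
      · exact Or.inr (Or.inl h)
      · exact Or.inr (Or.inr h)
  have hupper : (A - A).card ≤ 6*k+7 := by
    set K : ℤ := (k:ℤ) with hK
    set bad : Finset ℤ := insert (4*K+1) (insert (-(4*K+1))
        (((Finset.Icc (-K+1) (K-2)).image (fun m => 4*m+2)) \ ({-2, 2} : Finset ℤ))) with hbad
    have hbadmem : ∀ x : ℤ, x ∈ bad ↔
        (x = 4*K+1 ∨ x = -(4*K+1) ∨ (x % 4 = 2 ∧ 6-4*K ≤ x ∧ x ≤ 4*K-6 ∧ x ≠ -2 ∧ x ≠ 2)) := by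
      intro x
      simp only [hbad, Finset.mem_insert, Finset.mem_sdiff, Finset.mem_image, Finset.mem_Icc,
        Finset.mem_singleton]
      constructor
      · rintro (h | h | ⟨⟨m, ⟨h1, h2⟩, h3⟩, h4⟩)
        · exact Or.inl h
        · exact Or.inr (Or.inl h)
        · exact Or.inr (Or.inr ⟨by omega, by omega, by omega, by tauto, by tauto⟩)
      · rintro (h | h | ⟨h1, h2, h3, h4, h5⟩)
        · exact Or.inl h
        · exact Or.inr (Or.inl h)
        · exact Or.inr (Or.inr ⟨⟨(x-2)/4, ⟨by omega, by omega⟩, by omega⟩, by omega⟩)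
    set T : Finset ℤ := Finset.Icc (-(4*K+2)) (4*K+2) \ bad with hT
    have hsub : A - A ⊆ T := by
      intro x hx
      rw [Finset.mem_sub] at hx
      obtain ⟨a, ha, b, hb, rfl⟩ := hx
      rw [hAmem] at ha hb
      rw [hT, Finset.mem_sdiff, Finset.mem_Icc]
      rw [hbadmem]
      rcases ha with h|h|h|⟨j,hj1,hj2,hj3⟩|h|h <;>
        rcases hb with g|g|g|⟨i,hi1,hi2,hi3⟩|g|g <;>
        constructor <;> omega
    have hbadsub : bad ⊆ Finset.Icc (-(4*K+2)) (4*K+2) := by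
      intro x hx
      rw [hbadmem] at hx
      rw [Finset.mem_Icc]
      omega
    have hbadcard : bad.card = 2*k-2 := by
      rw [hbad]
      rw [Finset.card_insert_of_notMem (by
        simp only [Finset.mem_insert, Finset.mem_sdiff, Finset.mem_image, Finset.mem_Icc,
          Finset.mem_singleton]
        rintro (h | ⟨⟨m, ⟨h1, h2⟩, h3⟩, h4⟩) <;> omega)]
      rw [Finset.card_insert_of_notMem (by
        simp only [Finset.mem_sdiff, Finset.mem_image, Finset.mem_Icc, Finset.mem_singleton]
        rintro ⟨⟨m, ⟨h1, h2⟩, h3⟩, h4⟩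
        omega)]
      rw [Finset.card_sdiff_of_subset (by
        intro x hx
        simp only [Finset.mem_insert, Finset.mem_singleton] at hx
        simp only [Finset.mem_image, Finset.mem_Icc]
        rcases hx with h | h
        · exact ⟨-1, ⟨by omega, by omega⟩, by omega⟩
        · exact ⟨0, ⟨by omega, by omega⟩, by omega⟩)]
      rw [Finset.card_image_of_injective _ (fun a b h => by omega)]
      rw [Int.card_Icc]
      have h2 : ({-2, 2} : Finset ℤ).card = 2 := by decide
      rw [h2]
      omega
    calc (A - A).card ≤ T.card := Finset.card_le_card hsub
      _ = 6*k+7 := by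
          rw [hT, Finset.card_sdiff_of_subset hbadsub, hbadcard, Int.card_Icc]
          omega
  have hlower : 6*k+8 ≤ (A + A).card := by
    set K : ℤ := (k:ℤ) with hK
    have hk' : (3:ℤ) ≤ K := by omega
    have hin : ∀ a : ℤ, (a = 0 ∨ a = 2 ∨ a = 4 ∨ (∃ j : ℤ, 1 ≤ j ∧ j ≤ K ∧ a = 4*j-1) ∨
        a = 4*K ∨ a = 4*K+2) → a ∈ A := fun a h => (hAmem a).2 h
    set Od : Finset ℤ := (Finset.Icc (1:ℤ) (4*K)).image (fun m => 2*m+1) with hOd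
    set Tw : Finset ℤ := (Finset.Icc (0:ℤ) (2*K)).image (fun m => 4*m+2) with hTw
    set Ev : Finset ℤ := ({0, 4, 8, 4*K, 4*K+4, 8*K, 8*K+4} : Finset ℤ) with hEv
    have hsub : Od ∪ Tw ∪ Ev ⊆ A + A := by
      intro x hx
      simp only [Finset.mem_union, hOd, hTw, hEv, Finset.mem_image, Finset.mem_Icc,
        Finset.mem_insert, Finset.mem_singleton] at hx
      rcases hx with (⟨m, ⟨hm1, hm2⟩, rfl⟩ | ⟨m, ⟨hm1, hm2⟩, rfl⟩) | hx
      · -- odd sums 2m+1, 1 ≤ m ≤ 4k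
        have ht : m = 2*(m/2) ∨ m = 2*(m/2)+1 := by omega
        set t := m/2 with htdef
        rcases ht with ht | ht
        · by_cases htk : t ≤ K
          · have e : 2*m+1 = (4*t-1) + 2 := by omega
            rw [e]
            exact Finset.add_mem_add (hin _ (Or.inr (Or.inr (Or.inr (Or.inl
              ⟨t, by omega, by omega, rfl⟩))))) (hin _ (by tauto))
          · have e : 2*m+1 = (4*(t-K)-1) + (4*K+2) := by omega
            rw [e]
            exact Finset.add_mem_add (hin _ (Or.inr (Or.inr (Or.inr (Or.inl
              ⟨t-K, by omega, by omega, rfl⟩))))) (hin _ (by tauto))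
        · by_cases htk : t ≤ K-1
          · have e : 2*m+1 = (4*(t+1)-1) + 0 := by omega
            rw [e]
            exact Finset.add_mem_add (hin _ (Or.inr (Or.inr (Or.inr (Or.inl
              ⟨t+1, by omega, by omega, rfl⟩))))) (hin _ (by tauto))
          · have e : 2*m+1 = (4*(t-K+1)-1) + (4*K) := by omega
            rw [e]
            exact Finset.add_mem_add (hin _ (Or.inr (Or.inr (Or.inr (Or.inl
              ⟨t-K+1, by omega, by omega, rfl⟩))))) (hin _ (by tauto))
      · -- 4m+2, 0 ≤ m ≤ 2k
        by_cases h0 : m = 0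
        · have e : 4*m+2 = 0 + 2 := by omega
          rw [e]
          exact Finset.add_mem_add (hin _ (by tauto)) (hin _ (by tauto))
        · by_cases h2k : m = 2*K
          · have e : 4*m+2 = (4*K) + (4*K+2) := by omega
            rw [e]
            exact Finset.add_mem_add (hin _ (by tauto)) (hin _ (by tauto))
          · by_cases hmk : m ≤ K
            · have e : 4*m+2 = (4*1-1) + (4*m-1) := by omega
              rw [e]
              exact Finset.add_mem_add (hin _ (Or.inr (Or.inr (Or.inr (Or.inl
                ⟨1, by omega, by omega, rfl⟩)))))
                (hin _ (Or.inr (Or.inr (Or.inr (Or.inl ⟨m, by omega, by omega, rfl⟩)))))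
            · have e : 4*m+2 = (4*K-1) + (4*(m-K+1)-1) := by omega
              rw [e]
              exact Finset.add_mem_add (hin _ (Or.inr (Or.inr (Or.inr (Or.inl
                ⟨K, by omega, by omega, rfl⟩)))))
                (hin _ (Or.inr (Or.inr (Or.inr (Or.inl ⟨m-K+1, by omega, by omega, rfl⟩)))))
      · rcases hx with h|h|h|h|h|h|h
        · rw [h, show (0:ℤ) = 0 + 0 by ring]
          exact Finset.add_mem_add (hin _ (by tauto)) (hin _ (by tauto))
        · rw [h, show (4:ℤ) = 0 + 4 by ring]
          exact Finset.add_mem_add (hin _ (by tauto)) (hin _ (by tauto))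
        · rw [h, show (8:ℤ) = 4 + 4 by ring]
          exact Finset.add_mem_add (hin _ (by tauto)) (hin _ (by tauto))
        · rw [h, show (4*K:ℤ) = 0 + 4*K by ring]
          exact Finset.add_mem_add (hin _ (by tauto)) (hin _ (by tauto))
        · rw [h, show (4*K+4:ℤ) = 4 + 4*K by ring]
          exact Finset.add_mem_add (hin _ (by tauto)) (hin _ (by tauto))
        · rw [h, show (8*K:ℤ) = 4*K + 4*K by ring]
          exact Finset.add_mem_add (hin _ (by tauto)) (hin _ (by tauto))
        · rw [h, show (8*K+4:ℤ) = (4*K+2) + (4*K+2) by ring]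
          exact Finset.add_mem_add (hin _ (by tauto)) (hin _ (by tauto))
    have hcard : (Od ∪ Tw ∪ Ev).card = 6*k+8 := by
      have hd1 : Disjoint Od Tw := by
        rw [Finset.disjoint_left]
        intro x hx hy
        simp only [hOd, hTw, Finset.mem_image, Finset.mem_Icc] at hx hy
        obtain ⟨m, _, hm⟩ := hx
        obtain ⟨n, _, hn⟩ := hy
        omega
      have hd2 : Disjoint (Od ∪ Tw) Ev := by
        rw [Finset.disjoint_left]
        intro x hx hy
        simp only [hOd, hTw, hEv, Finset.mem_union, Finset.mem_image, Finset.mem_Icc,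
          Finset.mem_insert, Finset.mem_singleton] at hx hy
        rcases hx with ⟨m, _, hm⟩ | ⟨m, _, hm⟩ <;> omega
      rw [Finset.card_union_of_disjoint hd2, Finset.card_union_of_disjoint hd1]
      have c1 : Od.card = 4*k := by
        rw [hOd, Finset.card_image_of_injective _ (fun a b h => by omega), Int.card_Icc]
        omega
      have c2 : Tw.card = 2*k+1 := by
        rw [hTw, Finset.card_image_of_injective _ (fun a b h => by omega), Int.card_Icc]
        omega
      have c3 : Ev.card = 7 := by
        rw [hEv]
        rw [Finset.card_insert_of_notMem (by
          simp only [Finset.mem_insert, Finset.mem_singleton]; omega)]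
        rw [Finset.card_insert_of_notMem (by
          simp only [Finset.mem_insert, Finset.mem_singleton]; omega)]
        rw [Finset.card_insert_of_notMem (by
          simp only [Finset.mem_insert, Finset.mem_singleton]; omega)]
        rw [Finset.card_insert_of_notMem (by
          simp only [Finset.mem_insert, Finset.mem_singleton]; omega)]
        rw [Finset.card_insert_of_notMem (by
          simp only [Finset.mem_insert, Finset.mem_singleton]; omega)]
        rw [Finset.card_insert_of_notMem (by
          simp only [Finset.mem_singleton]; omega)]
        rw [Finset.card_singleton]
      omega
    calc 6*k+8 = (Od ∪ Tw ∪ Ev).card := hcard.symm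
      _ ≤ (A + A).card := Finset.card_le_card hsub
  omega
end

section
/- There exist δ > 0 and N₀ such that for all integers N ≥ N₀, the number of subsets A of {1, 2, …, N} satisfying |A + A| > |A − A| is greater than δ · 2^N. Equivalently, under the uniform probability measure on subsets of {1,…,N}, the probability that a random subset has more sums than differences is bounded below by a positive constant for all sufficiently large N. -/
open Pointwise Finset
set_option linter.unusedSectionVars false
set_option linter.unusedVariables false

lemma avoid_count : ∀ (ws : List (Finset ℤ)) (F : Finset ℤ),
    (∀ W ∈ ws, W ⊆ F) → ws.Pairwise Disjoint →
    ((F.powerset.filter (fun M => ∀ W ∈ ws, ¬ W ⊆ M)).card : ℝ) ≤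
      (ws.map (fun W => 1 - (2:ℝ)⁻¹ ^ W.card)).prod * 2 ^ F.card := by
  intro ws
  induction ws with
  | nil =>
      intro F _ _
      simp only [List.map_nil, List.prod_nil, one_mul]
      calc ((F.powerset.filter _).card : ℝ) ≤ (F.powerset.card : ℝ) := by
            exact_mod_cast Finset.card_le_card (Finset.filter_subset _ _)
        _ = 2 ^ F.card := by rw [Finset.card_powerset]; push_cast; ring
  | cons W ws ih =>
      intro F hsub hdisj
      have hWF : W ⊆ F := hsub W (by simp)
      have hdisjW : ∀ W' ∈ ws, Disjoint W W' := (List.pairwise_cons.mp hdisj).1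
      have hdisj' : ws.Pairwise Disjoint := (List.pairwise_cons.mp hdisj).2
      have hsub' : ∀ W' ∈ ws, W' ⊆ F \ W := by
        intro W' hW'
        exact Finset.subset_sdiff.mpr ⟨hsub W' (by simp [hW']), (hdisjW W' hW').symm⟩
      set T := (W.powerset.erase W) ×ˢ ((F \ W).powerset.filter (fun M => ∀ W' ∈ ws, ¬ W' ⊆ M))
        with hT
      have hinj : (F.powerset.filter (fun M => ∀ W' ∈ W :: ws, ¬ W' ⊆ M)).card ≤ T.card := by
        apply Finset.card_le_card_of_injOn (fun M => (M ∩ W, M \ W))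
        · intro M hM
          simp only [Finset.mem_coe, Finset.mem_filter, Finset.mem_powerset] at hM
          obtain ⟨hMF, hav⟩ := hM
          have havW : ¬ W ⊆ M := hav W (by simp)
          rw [hT]
          simp only [Finset.mem_coe, Finset.mem_product, Finset.mem_erase, Finset.mem_powerset,
            Finset.mem_filter]
          refine ⟨⟨fun h => havW (Finset.inter_eq_right.mp h), Finset.inter_subset_right⟩,
            Finset.sdiff_subset_sdiff hMF le_rfl, ?_⟩
          intro W' hW' hsubW'
          exact hav W' (by simp [hW']) (hsubW'.trans Finset.sdiff_subset)
        · intro M1 h1 M2 h2 heq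
          simp only [Prod.mk.injEq] at heq
          have e1 : M1 ∩ W ∪ M1 \ W = M1 := by
            ext a; simp only [Finset.mem_union, Finset.mem_inter, Finset.mem_sdiff]; tauto
          have e2 : M2 ∩ W ∪ M2 \ W = M2 := by
            ext a; simp only [Finset.mem_union, Finset.mem_inter, Finset.mem_sdiff]; tauto
          rw [← e1, ← e2, heq.1, heq.2]
      have hTcard : (T.card : ℝ) = (2 ^ W.card - 1) *
          ((F \ W).powerset.filter (fun M => ∀ W' ∈ ws, ¬ W' ⊆ M)).card := by
        rw [hT, Finset.card_product, Finset.card_erase_of_mem (Finset.mem_powerset_self W),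
          Finset.card_powerset]
        push_cast [Nat.cast_sub (Nat.one_le_two_pow)]
        ring
      have hWpos : (0:ℝ) < 2 ^ W.card := by positivity
      have h1W : (1:ℝ) ≤ 2 ^ W.card := one_le_pow₀ (by norm_num)
      have hprodnn : (0:ℝ) ≤ (ws.map (fun W => 1 - (2:ℝ)⁻¹ ^ W.card)).prod := by
        apply List.prod_nonneg
        intro x hx
        simp only [List.mem_map] at hx
        obtain ⟨W', _, rfl⟩ := hx
        have : (2:ℝ)⁻¹ ^ W'.card ≤ 1 := pow_le_one₀ (by norm_num) (by norm_num)
        linarith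
      have hcardle : W.card ≤ F.card := Finset.card_le_card hWF
      have hcards : F.card = W.card + (F \ W).card := by
        rw [Finset.card_sdiff_of_subset hWF]; omega
      have key : (1 - (2:ℝ)⁻¹ ^ W.card) * 2 ^ W.card = 2 ^ W.card - 1 := by
        rw [sub_mul, inv_pow, inv_mul_cancel₀ (ne_of_gt hWpos), one_mul]
      calc ((F.powerset.filter (fun M => ∀ W' ∈ W :: ws, ¬ W' ⊆ M)).card : ℝ)
          ≤ (T.card : ℝ) := by exact_mod_cast hinj
        _ = (2 ^ W.card - 1) *
            ((F \ W).powerset.filter (fun M => ∀ W' ∈ ws, ¬ W' ⊆ M)).card := hTcard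
        _ ≤ (2 ^ W.card - 1) * ((ws.map (fun W => 1 - (2:ℝ)⁻¹ ^ W.card)).prod * 2 ^ (F \ W).card) := by
            apply mul_le_mul_of_nonneg_left (ih _ hsub' hdisj') (by linarith)
        _ = (List.map (fun W => 1 - (2:ℝ)⁻¹ ^ W.card) (W :: ws)).prod * 2 ^ F.card := by
            simp only [List.map_cons, List.prod_cons]
            rw [hcards, pow_add]
            rw [← key]; ring

lemma geom_nat (n : ℕ) : (∑ j ∈ Finset.range n, (3/4:ℝ)^(j/2)) +
    (4*(3/4:ℝ)^(n/2) + 4*(3/4:ℝ)^((n+1)/2)) = 8 := by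
  induction n with
  | zero => norm_num
  | succ n ih =>
      rw [Finset.sum_range_succ]
      have h2 : (n+2)/2 = n/2 + 1 := by omega
      have h1 : (n+1+1)/2 = n/2 + 1 := by omega
      rw [h1, pow_succ]
      nlinarith [ih]

lemma geom_nat_le (n : ℕ) : (∑ j ∈ Finset.range n, (3/4:ℝ)^(j/2)) ≤ 8 := by
  have := geom_nat n
  have h1 : (0:ℝ) ≤ 4*(3/4:ℝ)^(n/2) := by positivity
  have h2 : (0:ℝ) ≤ 4*(3/4:ℝ)^((n+1)/2) := by positivity
  linarith

lemma geom_Ioc (a b : ℤ) : ∑ s ∈ Finset.Ioc a b, (3/4:ℝ)^((s-a-1)/2).toNat ≤ 8 := by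
  rcases le_or_gt b a with h | h
  · rw [Finset.Ioc_eq_empty (by omega)]; norm_num
  · have : ∑ s ∈ Finset.Ioc a b, (3/4:ℝ)^((s-a-1)/2).toNat
        = ∑ j ∈ Finset.range (b-a).toNat, (3/4:ℝ)^(j/2) := by
      apply Finset.sum_nbij' (fun s => (s-a-1).toNat) (fun j => a + 1 + (j:ℤ))
      · intro s hs; simp only [Finset.mem_Ioc] at hs; simp only [Finset.mem_range]; omega
      · intro j hj; simp only [Finset.mem_range] at hj; simp only [Finset.mem_Ioc]; omega
      · intro s hs; simp only [Finset.mem_Ioc] at hs; omega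
      · intro j hj; simp only [Finset.mem_range] at hj; omega
      · intro s hs
        simp only [Finset.mem_Ioc] at hs
        congr 1
        have : ((s-a-1)/2).toNat = (s-a-1).toNat/2 := by omega
        rw [this]
    rw [this]
    exact geom_nat_le _

namespace MSTD

/-- The free (random) region. -/
noncomputable def Fr (N : ℤ) : Finset ℤ := Finset.Icc 19 (N-18)

/-- Reflection of a bottom-fringe pattern to the top of `[1,N]`. -/
def tp (N : ℤ) (q : Finset ℤ) : Finset ℤ := q.image (fun x => N+1-x)

/-- The subset of `[1,N]` built from bottom fringe `p`, top fringe (mirror of) `q`,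
and middle part `M`. -/
def An (N : ℤ) (p q M : Finset ℤ) : Finset ℤ := p ∪ tp N q ∪ M

/-- Middles `M` for which the sum `s` is not attained by `An`. -/
noncomputable def Bd (N : ℤ) (p q : Finset ℤ) (s : ℤ) : Finset (Finset ℤ) :=
  (Fr N).powerset.filter (fun M => s ∉ An N p q M + An N p q M)

section basic
variable {N : ℤ} {p q M : Finset ℤ} (hN : 100 ≤ N)
  (hp1 : p ⊆ Finset.Icc 1 18) (hq1 : q ⊆ Finset.Icc 1 18)

lemma mem_An_p {a : ℤ} (ha : a ∈ p) : a ∈ An N p q M := by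
  simp [An, ha]

lemma mem_An_q {x : ℤ} (hx : x ∈ q) : N+1-x ∈ An N p q M := by
  simp only [An, Finset.mem_union, tp, Finset.mem_image]
  exact Or.inl (Or.inr ⟨x, hx, rfl⟩)

lemma mem_An_M {a : ℤ} (ha : a ∈ M) : a ∈ An N p q M := by
  simp [An, ha]

include hN hp1 hq1 in
lemma An_subset (hM : M ⊆ Fr N) : An N p q M ⊆ Finset.Icc 1 N := by
  intro a ha
  simp only [An, Finset.mem_union, tp, Finset.mem_image] at ha
  simp only [Finset.mem_Icc]
  rcases ha with (hp | ⟨x, hx, rfl⟩) | hM'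
  · have := hp1 hp; simp only [Finset.mem_Icc] at this; omega
  · have := hq1 hx; simp only [Finset.mem_Icc] at this; omega
  · have := hM hM'; simp only [Fr, Finset.mem_Icc] at this; omega

include hN hp1 hq1 in
lemma An_low (hM : M ⊆ Fr N) {a : ℤ} (ha : a ∈ An N p q M) (h18 : a ≤ 18) : a ∈ p := by
  simp only [An, Finset.mem_union, tp, Finset.mem_image] at ha
  rcases ha with (hp | ⟨x, hx, rfl⟩) | hM'
  · exact hp
  · have := hq1 hx; simp only [Finset.mem_Icc] at this; omega
  · have := hM hM'; simp only [Fr, Finset.mem_Icc] at this; omega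

include hN hp1 hq1 in
lemma An_high (hM : M ⊆ Fr N) {a : ℤ} (ha : a ∈ An N p q M) (h : N-17 ≤ a) : N+1-a ∈ q := by
  simp only [An, Finset.mem_union, tp, Finset.mem_image] at ha
  rcases ha with (hp | ⟨x, hx, rfl⟩) | hM'
  · have := hp1 hp; simp only [Finset.mem_Icc] at this; omega
  · have := hq1 hx; simp only [Finset.mem_Icc] at this
    have : N + 1 - (N + 1 - x) = x := by ring
    rwa [this]
  · have := hM hM'; simp only [Fr, Finset.mem_Icc] at this; omega

end basic

section regions
variable {N : ℤ} {p q : Finset ℤ}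

/-- Region R1: sums determined by the bottom fringe. -/
lemma Bd_det (hdet : ∀ s' ∈ Finset.Icc (2:ℤ) 32, s' ∈ p + p) {s : ℤ}
    (hs : s ∈ Finset.Ioc (1:ℤ) 32) : Bd N p q s = ∅ := by
  rw [Finset.eq_empty_iff_forall_notMem]
  intro M hM
  simp only [Bd, Finset.mem_filter, Finset.mem_powerset] at hM
  simp only [Finset.mem_Ioc] at hs
  obtain ⟨u, hu, v, hv, huv⟩ := Finset.mem_add.mp (hdet s (by simp only [Finset.mem_Icc]; omega))
  exact hM.2 (Finset.mem_add.mpr ⟨u, mem_An_p hu, v, mem_An_p hv, huv⟩)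

/-- Region R4: sums near `N` determined by the two blocks. -/
lemma Bd_mid (hN : 100 ≤ N) (hp2 : Finset.Icc (9:ℤ) 18 ⊆ p) (hq2 : Finset.Icc (9:ℤ) 18 ⊆ q)
    {s : ℤ} (hs : s ∈ Finset.Ioc (N-9) (N+10)) : Bd N p q s = ∅ := by
  rw [Finset.eq_empty_iff_forall_notMem]
  intro M hM
  simp only [Bd, Finset.mem_filter, Finset.mem_powerset] at hM
  simp only [Finset.mem_Ioc] at hs
  set d : ℤ := s - (N + 1) with hd
  -- x ∈ [9,18] ∩ p, y ∈ [9,18] ∩ q, x - y = d, d ∈ [-9, 9]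
  have hdr : -9 ≤ d ∧ d ≤ 9 := by omega
  rcases le_or_gt 0 d with h0 | h0
  · have hx : (9 + d) ∈ p := hp2 (by simp only [Finset.mem_Icc]; omega)
    have hy : (9:ℤ) ∈ q := hq2 (by simp only [Finset.mem_Icc]; omega)
    exact hM.2 (Finset.mem_add.mpr ⟨9 + d, mem_An_p hx, N + 1 - 9, mem_An_q hy, by omega⟩)
  · have hx : (9:ℤ) ∈ p := hp2 (by simp only [Finset.mem_Icc]; omega)
    have hy : (9 - d) ∈ q := hq2 (by simp only [Finset.mem_Icc]; omega)
    exact hM.2 (Finset.mem_add.mpr ⟨9, mem_An_p hx, N + 1 - (9 - d), mem_An_q hy, by omega⟩)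

/-- The two guaranteed missing differences. -/
lemma diff_missing (hN : 100 ≤ N) (hp1 : p ⊆ Finset.Icc 1 18) (hq1 : q ⊆ Finset.Icc 1 18)
    (h9 : ∀ u ∈ p, ∀ v ∈ q, u + v ≠ 9) {M : Finset ℤ} (hM : M ⊆ Fr N) :
    (N - 8) ∉ An N p q M - An N p q M ∧ (8 - N) ∉ An N p q M - An N p q M := by
  have key : ∀ a ∈ An N p q M, ∀ b ∈ An N p q M, a - b ≠ N - 8 := by
    intro a ha b hb hab
    have haI := An_subset hN hp1 hq1 hM ha
    have hbI := An_subset hN hp1 hq1 hM hb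
    simp only [Finset.mem_Icc] at haI hbI
    have hb18 : b ≤ 8 := by omega
    have hbp : b ∈ p := An_low hN hp1 hq1 hM hb (by omega)
    have haq : N + 1 - a ∈ q := An_high hN hp1 hq1 hM ha (by omega)
    exact h9 b hbp (N + 1 - a) haq (by omega)
  constructor
  · intro h
    obtain ⟨a, ha, b, hb, hab⟩ := Finset.mem_sub.mp h
    exact key a ha b hb hab
  · intro h
    obtain ⟨a, ha, b, hb, hab⟩ := Finset.mem_sub.mp h
    exact key b hb a ha (by omega)

end regions

section witness
variable {N : ℤ} {p q : Finset ℤ}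

lemma avoid_of_Bd {s : ℤ} (ws : List (Finset ℤ))
    (hws : ∀ W ∈ ws, ∀ M : Finset ℤ, M ⊆ Fr N → W ⊆ M → s ∈ An N p q M + An N p q M) :
    Bd N p q s ⊆ (Fr N).powerset.filter (fun M => ∀ W ∈ ws, ¬ W ⊆ M) := by
  intro M hM
  simp only [Bd, Finset.mem_filter, Finset.mem_powerset] at hM ⊢
  exact ⟨hM.1, fun W hW hWM => hM.2 (hws W hW M hM.1 hWM)⟩

/-- Region R2: sums just above the fringe-determined zone. -/
lemma Bd_near (hN : 100 ≤ N) (xs : List ℤ) (hlen : xs.length = 10) (hnd : xs.Nodup)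
    (hxs : ∀ x ∈ xs, x ∈ p ∧ 1 ≤ x ∧ x ≤ 14) {s : ℤ} (hs : s ∈ Finset.Ioc (32:ℤ) 37) :
    ((Bd N p q s).card : ℝ) ≤ (2:ℝ)⁻¹ ^ 10 * 2 ^ (Fr N).card := by
  simp only [Finset.mem_Ioc] at hs
  set ws : List (Finset ℤ) := xs.map (fun x => ({s - x} : Finset ℤ)) with hws
  have hsub : ∀ W ∈ ws, W ⊆ Fr N := by
    intro W hW
    simp only [hws, List.mem_map] at hW
    obtain ⟨x, hx, rfl⟩ := hW
    obtain ⟨-, hx1, hx2⟩ := hxs x hx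
    intro a ha
    simp only [Finset.mem_singleton] at ha
    subst ha
    simp only [Fr, Finset.mem_Icc]
    omega
  have hdisj : ws.Pairwise Disjoint := by
    rw [hws]
    refine List.Pairwise.map _ ?_ hnd
    intro a b hab
    rw [Finset.disjoint_singleton]
    omega
  have hcov : ∀ W ∈ ws, ∀ M : Finset ℤ, M ⊆ Fr N → W ⊆ M → s ∈ An N p q M + An N p q M := by
    intro W hW M hM hWM
    simp only [hws, List.mem_map] at hW
    obtain ⟨x, hx, rfl⟩ := hW
    have hyM : s - x ∈ M := hWM (Finset.mem_singleton_self _)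
    exact Finset.mem_add.mpr ⟨x, mem_An_p (hxs x hx).1, s - x, mem_An_M hyM, by ring⟩
  have hBd := avoid_of_Bd (N := N) (p := p) (q := q) (s := s) ws hcov
  calc ((Bd N p q s).card : ℝ)
      ≤ (((Fr N).powerset.filter (fun M => ∀ W ∈ ws, ¬ W ⊆ M)).card : ℝ) := by
        exact_mod_cast Finset.card_le_card hBd
    _ ≤ (ws.map (fun W => 1 - (2:ℝ)⁻¹ ^ W.card)).prod * 2 ^ (Fr N).card :=
        avoid_count ws (Fr N) hsub hdisj
    _ = (2:ℝ)⁻¹ ^ 10 * 2 ^ (Fr N).card := by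
        congr 1
        rw [List.prod_eq_pow_card _ ((2:ℝ)⁻¹) ?_, List.length_map, List.length_map, hlen]
        intro y hy
        simp only [hws, List.map_map, List.mem_map, Function.comp] at hy
        obtain ⟨x, -, rfl⟩ := hy
        rw [Finset.card_singleton]
        norm_num

end witness

section central
variable {N : ℤ} {p q : Finset ℤ}

/-- Region R3: central sums, bounded via 10 singleton witnesses and `k` pair witnesses. -/
lemma Bd_central (hN : 100 ≤ N) (hp2 : Finset.Icc (9:ℤ) 18 ⊆ p) {s : ℤ}
    (hs : s ∈ Finset.Ioc (37:ℤ) (N-9)) :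
    ((Bd N p q s).card : ℝ) ≤
      (2:ℝ)⁻¹ ^ 10 * ((3/4) ^ ((s-38)/2).toNat * 2 ^ (Fr N).card) := by
  simp only [Finset.mem_Ioc] at hs
  set k : ℕ := ((s-37)/2).toNat with hk
  have hk2 : 2 * (k:ℤ) ≤ s - 37 ∧ s - 38 ≤ 2 * (k:ℤ) + 1 := by omega
  set sing : List (Finset ℤ) := (List.range 10).map (fun i : ℕ => ({s - 18 + (i:ℤ)} : Finset ℤ))
    with hsing
  set prs : List (Finset ℤ) := (List.range k).map
      (fun i : ℕ => ({19 + (i:ℤ), s - 19 - (i:ℤ)} : Finset ℤ)) with hprs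
  set ws : List (Finset ℤ) := sing ++ prs with hws
  -- subsets of the free region
  have hsub : ∀ W ∈ ws, W ⊆ Fr N := by
    intro W hW
    rw [hws, List.mem_append] at hW
    rcases hW with hW | hW
    · rw [hsing, List.mem_map] at hW
      obtain ⟨i, hi, rfl⟩ := hW
      rw [List.mem_range] at hi
      intro a ha
      rw [Finset.mem_singleton] at ha
      subst ha
      simp only [Fr, Finset.mem_Icc]
      omega
    · rw [hprs, List.mem_map] at hW
      obtain ⟨i, hi, rfl⟩ := hW
      rw [List.mem_range] at hi
      have hik : (i:ℤ) < k := by exact_mod_cast hi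
      intro a ha
      simp only [Finset.mem_insert, Finset.mem_singleton] at ha
      simp only [Fr, Finset.mem_Icc]
      rcases ha with rfl | rfl <;> omega
  -- pairwise disjointness
  have hdisj : ws.Pairwise Disjoint := by
    rw [hws, List.pairwise_append]
    refine ⟨?_, ?_, ?_⟩
    · rw [hsing]
      refine List.Pairwise.map _ ?_ (List.pairwise_lt_range (n := 10))
      intro a b hab
      rw [Finset.disjoint_singleton]
      intro h
      omega
    · rw [hprs]
      have hmem := List.Pairwise.and_mem.mp (List.pairwise_lt_range (n := k))
      refine List.Pairwise.map _ ?_ hmem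
      intro a b ⟨ha, hb, hab⟩
      rw [List.mem_range] at ha hb
      have ha' : (a:ℤ) < k := by exact_mod_cast ha
      have hb' : (b:ℤ) < k := by exact_mod_cast hb
      have hab' : (a:ℤ) < b := by exact_mod_cast hab
      rw [Finset.disjoint_left]
      intro x hx hx'
      simp only [Finset.mem_insert, Finset.mem_singleton] at hx hx'
      rcases hx with rfl | rfl <;> rcases hx' with h | h <;> omega
    · intro W1 hW1 W2 hW2
      rw [hsing, List.mem_map] at hW1
      rw [hprs, List.mem_map] at hW2
      obtain ⟨i, hi, rfl⟩ := hW1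
      obtain ⟨j, hj, rfl⟩ := hW2
      rw [List.mem_range] at hi hj
      have hj' : (j:ℤ) < k := by exact_mod_cast hj
      have hi' : (i:ℤ) < 10 := by exact_mod_cast hi
      rw [Finset.disjoint_left]
      intro x hx hx'
      rw [Finset.mem_singleton] at hx
      simp only [Finset.mem_insert, Finset.mem_singleton] at hx'
      subst hx
      rcases hx' with h | h <;> omega
  -- coverage implication
  have hcov : ∀ W ∈ ws, ∀ M : Finset ℤ, M ⊆ Fr N → W ⊆ M →
      s ∈ An N p q M + An N p q M := by
    intro W hW M hM hWM
    rw [hws, List.mem_append] at hW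
    rcases hW with hW | hW
    · rw [hsing, List.mem_map] at hW
      obtain ⟨i, hi, rfl⟩ := hW
      rw [List.mem_range] at hi
      have hi' : (i:ℤ) < 10 := by exact_mod_cast hi
      have hyM : s - 18 + (i:ℤ) ∈ M := hWM (Finset.mem_singleton_self _)
      have hxp : (18 - (i:ℤ)) ∈ p := hp2 (by simp only [Finset.mem_Icc]; omega)
      exact Finset.mem_add.mpr
        ⟨18 - (i:ℤ), mem_An_p hxp, s - 18 + (i:ℤ), mem_An_M hyM, by ring⟩
    · rw [hprs, List.mem_map] at hW
      obtain ⟨i, hi, rfl⟩ := hW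
      have h1 : 19 + (i:ℤ) ∈ M := hWM (by simp)
      have h2 : s - 19 - (i:ℤ) ∈ M := hWM (by simp)
      exact Finset.mem_add.mpr
        ⟨19 + (i:ℤ), mem_An_M h1, s - 19 - (i:ℤ), mem_An_M h2, by ring⟩
  have hBd := avoid_of_Bd (N := N) (p := p) (q := q) (s := s) ws hcov
  -- the product computation
  have hprod : (ws.map (fun W => 1 - (2:ℝ)⁻¹ ^ W.card)).prod = (2:ℝ)⁻¹ ^ 10 * (3/4) ^ k := by
    rw [hws, List.map_append, List.prod_append]
    congr 1
    · rw [hsing, List.map_map]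
      rw [List.prod_eq_pow_card _ ((2:ℝ)⁻¹) ?_, List.length_map, List.length_range]
      intro y hy
      simp only [List.mem_map, Function.comp] at hy
      obtain ⟨i, -, rfl⟩ := hy
      rw [Finset.card_singleton]
      norm_num
    · rw [hprs, List.map_map]
      rw [List.prod_eq_pow_card _ ((3:ℝ)/4) ?_, List.length_map, List.length_range]
      intro y hy
      simp only [List.mem_map, Function.comp] at hy
      obtain ⟨i, hi, rfl⟩ := hy
      rw [List.mem_range] at hi
      have hi' : (i:ℤ) < k := by exact_mod_cast hi
      rw [Finset.card_insert_of_notMem (by rw [Finset.mem_singleton]; omega),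
        Finset.card_singleton]
      norm_num
  calc ((Bd N p q s).card : ℝ)
      ≤ (((Fr N).powerset.filter (fun M => ∀ W ∈ ws, ¬ W ⊆ M)).card : ℝ) := by
        exact_mod_cast Finset.card_le_card hBd
    _ ≤ (ws.map (fun W => 1 - (2:ℝ)⁻¹ ^ W.card)).prod * 2 ^ (Fr N).card :=
        avoid_count ws (Fr N) hsub hdisj
    _ = (2:ℝ)⁻¹ ^ 10 * ((3/4) ^ k * 2 ^ (Fr N).card) := by rw [hprod]; ring
    _ ≤ (2:ℝ)⁻¹ ^ 10 * ((3/4) ^ ((s-38)/2).toNat * 2 ^ (Fr N).card) := by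
        have hle : ((s-38)/2).toNat ≤ k := by omega
        have := pow_le_pow_of_le_one (by norm_num : (0:ℝ) ≤ 3/4) (by norm_num) hle
        have h2 : (0:ℝ) ≤ 2 ^ (Fr N).card := by positivity
        have h10 : (0:ℝ) ≤ (2:ℝ)⁻¹ ^ 10 := by positivity
        nlinarith

end central

section mirror
variable {N : ℤ} {p q : Finset ℤ}

/-- Reflection `x ↦ N+1-x` on finsets. -/
def mir (N : ℤ) (A : Finset ℤ) : Finset ℤ := A.image (fun x => N+1-x)

lemma mem_mir {A : Finset ℤ} {y : ℤ} : y ∈ mir N A ↔ N+1-y ∈ A := by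
  simp only [mir, Finset.mem_image]
  constructor
  · rintro ⟨x, hx, rfl⟩
    have : N + 1 - (N + 1 - x) = x := by ring
    rwa [this]
  · intro h
    exact ⟨N+1-y, h, by ring⟩

lemma mir_mir {A : Finset ℤ} : mir N (mir N A) = A := by
  ext y
  rw [mem_mir, mem_mir]
  have : N + 1 - (N + 1 - y) = y := by ring
  rw [this]

lemma mir_subset_Fr {M : Finset ℤ} (hM : M ⊆ Fr N) : mir N M ⊆ Fr N := by
  intro y hy
  rw [mem_mir] at hy
  have := hM hy
  simp only [Fr, Finset.mem_Icc] at this ⊢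
  omega

lemma mirsum {A : Finset ℤ} {t : ℤ} : t ∈ mir N A + mir N A ↔ 2*N+2-t ∈ A + A := by
  constructor
  · intro h
    obtain ⟨a, ha, b, hb, hab⟩ := Finset.mem_add.mp h
    rw [mem_mir] at ha hb
    exact Finset.mem_add.mpr ⟨N+1-a, ha, N+1-b, hb, by omega⟩
  · intro h
    obtain ⟨a, ha, b, hb, hab⟩ := Finset.mem_add.mp h
    have h1 : N + 1 - (N + 1 - a) = a := by ring
    have h2 : N + 1 - (N + 1 - b) = b := by ring
    exact Finset.mem_add.mpr
      ⟨N+1-a, mem_mir.mpr (by rw [h1]; exact ha), N+1-b, mem_mir.mpr (by rw [h2]; exact hb),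
        by omega⟩

lemma mir_An {M : Finset ℤ} : mir N (An N p q M) = An N q p (mir N M) := by
  ext y
  rw [mem_mir]
  simp only [An, tp, Finset.mem_union, Finset.mem_image]
  constructor
  · rintro ((hp | ⟨x, hx, hxy⟩) | hM)
    · exact Or.inl (Or.inr ⟨N+1-y, hp, by ring⟩)
    · have : x = y := by omega
      subst this
      exact Or.inl (Or.inl hx)
    · exact Or.inr (mem_mir.mpr hM)
  · rintro ((hq | ⟨x, hx, rfl⟩) | hM)
    · exact Or.inl (Or.inr ⟨y, hq, rfl⟩)
    · have : N + 1 - (N + 1 - x) = x := by ring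
      rw [this]
      exact Or.inl (Or.inl hx)
    · exact Or.inr (mem_mir.mp hM)

lemma Bd_mirror (s : ℤ) : (Bd N p q s).card = (Bd N q p (2*N+2-s)).card := by
  apply Finset.card_nbij' (mir N) (mir N)
  · intro M hM
    simp only [Finset.mem_coe, Bd, Finset.mem_filter, Finset.mem_powerset] at hM ⊢
    refine ⟨mir_subset_Fr hM.1, ?_⟩
    intro hcon
    rw [← mir_An, mirsum] at hcon
    have he : 2*N+2-(2*N+2-s) = s := by ring
    rw [he] at hcon
    exact hM.2 hcon
  · intro M hM
    simp only [Finset.mem_coe, Bd, Finset.mem_filter, Finset.mem_powerset] at hM ⊢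
    refine ⟨mir_subset_Fr hM.1, ?_⟩
    intro hcon
    rw [← mir_An, mirsum] at hcon
    exact hM.2 hcon
  · intro M hM; exact mir_mir
  · intro M hM; exact mir_mir

end mirror

lemma sumIoc (f : ℤ → ℝ) {a b c : ℤ} (hab : a ≤ b) (hbc : b ≤ c) :
    ∑ s ∈ Finset.Ioc a c, f s = (∑ s ∈ Finset.Ioc a b, f s) + ∑ s ∈ Finset.Ioc b c, f s := by
  rw [← Finset.Ioc_union_Ioc_eq_Ioc hab hbc,
    Finset.sum_union (by
      rw [Finset.disjoint_left]
      intro x hx hx'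
      simp only [Finset.mem_Ioc] at hx hx'
      omega)]

section assemble
variable {N : ℤ} {p q : Finset ℤ}

/-- Middles `M` whose associated set attains all sums in `[2, 2N]`. -/
noncomputable def Good (N : ℤ) (p q : Finset ℤ) : Finset (Finset ℤ) :=
  (Fr N).powerset.filter
    (fun M => ∀ s ∈ Finset.Ioc 1 (2*N), s ∈ An N p q M + An N p q M)

lemma good_count (hN : 100 ≤ N)
    (hpdet : ∀ s' ∈ Finset.Icc (2:ℤ) 32, s' ∈ p + p)
    (hqdet : ∀ s' ∈ Finset.Icc (2:ℤ) 32, s' ∈ q + q)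
    (hp2 : Finset.Icc (9:ℤ) 18 ⊆ p) (hq2 : Finset.Icc (9:ℤ) 18 ⊆ q)
    (xsp xsq : List ℤ) (hlenp : xsp.length = 10) (hndp : xsp.Nodup)
    (hxsp : ∀ x ∈ xsp, x ∈ p ∧ 1 ≤ x ∧ x ≤ 14)
    (hlenq : xsq.length = 10) (hndq : xsq.Nodup)
    (hxsq : ∀ x ∈ xsq, x ∈ q ∧ 1 ≤ x ∧ x ≤ 14) :
    (2:ℝ) ^ (Fr N).card / 2 ≤ ((Good N p q).card : ℝ) := by
  classical
  set F := Fr N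
  set P := F.powerset
  set cond : Finset ℤ → Prop :=
    fun M => ∀ s ∈ Finset.Ioc 1 (2*N), s ∈ An N p q M + An N p q M with hcond
  have hsplit : (P.filter cond).card + (P.filter (fun M => ¬ cond M)).card = P.card :=
    Finset.card_filter_add_card_filter_not (p := cond)
  have hPcard : (P.card : ℝ) = 2 ^ F.card := by
    rw [Finset.card_powerset]; push_cast; ring
  -- bad set is covered by the union of the Bd s
  have hbadsub : P.filter (fun M => ¬ cond M) ⊆
      (Finset.Ioc 1 (2*N)).biUnion (fun s => Bd N p q s) := by
    intro M hM
    simp only [Finset.mem_filter, hcond, not_forall] at hM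
    obtain ⟨hMP, s, hs, hnot⟩ := hM
    simp only [Finset.mem_biUnion]
    exact ⟨s, hs, by simp only [Bd, Finset.mem_filter]; exact ⟨hMP, hnot⟩⟩
  have hbad1 : ((P.filter (fun M => ¬ cond M)).card : ℝ) ≤
      ∑ s ∈ Finset.Ioc 1 (2*N), ((Bd N p q s).card : ℝ) := by
    calc ((P.filter (fun M => ¬ cond M)).card : ℝ)
        ≤ (((Finset.Ioc 1 (2*N)).biUnion (fun s => Bd N p q s)).card : ℝ) := by
          exact_mod_cast Finset.card_le_card hbadsub
      _ ≤ ∑ s ∈ Finset.Ioc 1 (2*N), ((Bd N p q s).card : ℝ) := by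
          exact_mod_cast Finset.card_biUnion_le
  -- split the sum into seven consecutive regions
  set f : ℤ → ℝ := fun s => ((Bd N p q s).card : ℝ) with hf
  have c1 : (1:ℤ) ≤ 32 := by omega
  have c2 : (32:ℤ) ≤ 37 := by omega
  have c3 : (37:ℤ) ≤ N-9 := by omega
  have c4 : (N-9:ℤ) ≤ N+10 := by omega
  have c5 : (N+10:ℤ) ≤ 2*N-36 := by omega
  have c6 : (2*N-36:ℤ) ≤ 2*N-31 := by omega
  have c7 : (2*N-31:ℤ) ≤ 2*N := by omega
  have hsum : ∑ s ∈ Finset.Ioc 1 (2*N), f s =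
      (∑ s ∈ Finset.Ioc 1 32, f s) + (∑ s ∈ Finset.Ioc 32 37, f s) +
      (∑ s ∈ Finset.Ioc 37 (N-9), f s) + (∑ s ∈ Finset.Ioc (N-9) (N+10), f s) +
      (∑ s ∈ Finset.Ioc (N+10) (2*N-36), f s) + (∑ s ∈ Finset.Ioc (2*N-36) (2*N-31), f s) +
      (∑ s ∈ Finset.Ioc (2*N-31) (2*N), f s) := by
    have h1 := sumIoc f c1 (by omega : (32:ℤ) ≤ 2*N)
    have h2 := sumIoc f c2 (by omega : (37:ℤ) ≤ 2*N)
    have h3 := sumIoc f c3 (by omega : (N-9:ℤ) ≤ 2*N)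
    have h4 := sumIoc f c4 (by omega : (N+10:ℤ) ≤ 2*N)
    have h5 := sumIoc f c5 (by omega : (2*N-36:ℤ) ≤ 2*N)
    have h6 := sumIoc f c6 c7
    linarith
  -- regional bounds
  have hF2 : (0:ℝ) ≤ 2 ^ F.card := by positivity
  set c : ℝ := (2:ℝ)⁻¹ ^ 10 * 2 ^ F.card with hc
  have hc0 : 0 ≤ c := by positivity
  have hR1 : ∑ s ∈ Finset.Ioc (1:ℤ) 32, f s = 0 := by
    apply Finset.sum_eq_zero
    intro s hs
    simp only [hf, Bd_det hpdet hs, Finset.card_empty, Nat.cast_zero]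
  have hR4 : ∑ s ∈ Finset.Ioc (N-9) (N+10), f s = 0 := by
    apply Finset.sum_eq_zero
    intro s hs
    simp only [hf, Bd_mid hN hp2 hq2 hs, Finset.card_empty, Nat.cast_zero]
  have hR7 : ∑ s ∈ Finset.Ioc (2*N-31) (2*N), f s = 0 := by
    apply Finset.sum_eq_zero
    intro s hs
    simp only [Finset.mem_Ioc] at hs
    simp only [hf]
    rw [Bd_mirror, Bd_det hqdet (by simp only [Finset.mem_Ioc]; omega)]
    simp
  have hR2 : ∑ s ∈ Finset.Ioc (32:ℤ) 37, f s ≤ 5 * c := by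
    have hcard : (Finset.Ioc (32:ℤ) 37).card = 5 := by
      rw [Int.card_Ioc]; rfl
    calc ∑ s ∈ Finset.Ioc (32:ℤ) 37, f s
        ≤ (Finset.Ioc (32:ℤ) 37).card • c := by
          apply Finset.sum_le_card_nsmul
          intro s hs
          exact Bd_near hN xsp hlenp hndp hxsp hs
      _ = 5 * c := by rw [hcard]; simp
  have hR6 : ∑ s ∈ Finset.Ioc (2*N-36) (2*N-31), f s ≤ 5 * c := by
    have hcard : (Finset.Ioc (2*N-36) (2*N-31)).card = 5 := by
      rw [Int.card_Ioc]
      norm_num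
      omega
    calc ∑ s ∈ Finset.Ioc (2*N-36) (2*N-31), f s
        ≤ (Finset.Ioc (2*N-36) (2*N-31)).card • c := by
          apply Finset.sum_le_card_nsmul
          intro s hs
          simp only [Finset.mem_Ioc] at hs
          simp only [hf]
          rw [Bd_mirror]
          exact Bd_near hN xsq hlenq hndq hxsq (by simp only [Finset.mem_Ioc]; omega)
      _ = 5 * c := by rw [hcard]; simp
  have hR3 : ∑ s ∈ Finset.Ioc (37:ℤ) (N-9), f s ≤ 8 * c := by
    calc ∑ s ∈ Finset.Ioc (37:ℤ) (N-9), f s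
        ≤ ∑ s ∈ Finset.Ioc (37:ℤ) (N-9), c * (3/4:ℝ)^((s-37-1)/2).toNat := by
          apply Finset.sum_le_sum
          intro s hs
          have := Bd_central (q := q) hN hp2 hs
          have he : s - 37 - 1 = s - 38 := by ring
          rw [he]
          calc f s ≤ (2:ℝ)⁻¹ ^ 10 * ((3/4) ^ ((s-38)/2).toNat * 2 ^ (Fr N).card) := this
            _ = c * (3/4:ℝ)^((s-38)/2).toNat := by rw [hc]; ring
      _ = c * ∑ s ∈ Finset.Ioc (37:ℤ) (N-9), (3/4:ℝ)^((s-37-1)/2).toNat := by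
          rw [Finset.mul_sum]
      _ ≤ c * 8 := by
          apply mul_le_mul_of_nonneg_left (geom_Ioc 37 (N-9)) hc0
      _ = 8 * c := by ring
  have hR5 : ∑ s ∈ Finset.Ioc (N+10) (2*N-36), f s ≤ 8 * c := by
    have hre : ∑ s ∈ Finset.Ioc (N+10) (2*N-36), f s =
        ∑ s' ∈ Finset.Ioc (37:ℤ) (N-9), ((Bd N q p s').card : ℝ) := by
      apply Finset.sum_nbij' (fun s => 2*N+2-s) (fun s' => 2*N+2-s')
      · intro s hs
        simp only [Finset.mem_Ioc] at hs ⊢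
        omega
      · intro s' hs'
        simp only [Finset.mem_Ioc] at hs' ⊢
        omega
      · intro s hs; omega
      · intro s' hs'; omega
      · intro s hs
        simp only [hf]
        rw [Bd_mirror]
    rw [hre]
    calc ∑ s' ∈ Finset.Ioc (37:ℤ) (N-9), ((Bd N q p s').card : ℝ)
        ≤ ∑ s' ∈ Finset.Ioc (37:ℤ) (N-9), c * (3/4:ℝ)^((s'-37-1)/2).toNat := by
          apply Finset.sum_le_sum
          intro s hs
          have := Bd_central (q := p) hN hq2 hs
          have he : s - 37 - 1 = s - 38 := by ring
          rw [he]
          calc ((Bd N q p s).card : ℝ)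
              ≤ (2:ℝ)⁻¹ ^ 10 * ((3/4) ^ ((s-38)/2).toNat * 2 ^ (Fr N).card) := this
            _ = c * (3/4:ℝ)^((s-38)/2).toNat := by rw [hc]; ring
      _ = c * ∑ s ∈ Finset.Ioc (37:ℤ) (N-9), (3/4:ℝ)^((s-37-1)/2).toNat := by
          rw [Finset.mul_sum]
      _ ≤ c * 8 := by
          apply mul_le_mul_of_nonneg_left (geom_Ioc 37 (N-9)) hc0
      _ = 8 * c := by ring
  -- put it together
  have hbadtot : ((P.filter (fun M => ¬ cond M)).card : ℝ) ≤ 26 * c := by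
    calc ((P.filter (fun M => ¬ cond M)).card : ℝ)
        ≤ ∑ s ∈ Finset.Ioc 1 (2*N), f s := hbad1
      _ = _ := hsum
      _ ≤ 0 + 5*c + 8*c + 0 + 8*c + 5*c + 0 := by
          rw [hR1, hR4, hR7]
          linarith
      _ = 26 * c := by ring
  have hGood : Good N p q = P.filter cond := rfl
  have hcast : ((P.filter cond).card : ℝ) + ((P.filter (fun M => ¬ cond M)).card : ℝ)
      = 2 ^ F.card := by
    rw [← hPcard]
    exact_mod_cast congrArg (Nat.cast : ℕ → ℝ) hsplit
  have hcle : 26 * c ≤ (2:ℝ) ^ F.card / 2 := by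
    rw [hc]
    have : (2:ℝ)⁻¹ ^ 10 = 1/1024 := by norm_num
    rw [this]
    linarith
  rw [hGood]
  linarith

end assemble

section final
variable {N : ℤ} {p q : Finset ℤ}

lemma mstd_of_good (hN : 100 ≤ N) (hp1 : p ⊆ Finset.Icc 1 18) (hq1 : q ⊆ Finset.Icc 1 18)
    (h9 : ∀ u ∈ p, ∀ v ∈ q, u + v ≠ 9) {M : Finset ℤ} (hM : M ∈ Good N p q) :
    (An N p q M - An N p q M).card < (An N p q M + An N p q M).card := by
  simp only [Good, Finset.mem_filter, Finset.mem_powerset] at hM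
  obtain ⟨hMF, hcov⟩ := hM
  have hAsub : An N p q M ⊆ Finset.Icc 1 N := An_subset hN hp1 hq1 hMF
  have hsum_eq : An N p q M + An N p q M = Finset.Ioc 1 (2*N) := by
    apply Finset.Subset.antisymm
    · intro s hs
      obtain ⟨a, ha, b, hb, rfl⟩ := Finset.mem_add.mp hs
      have h1 := hAsub ha
      have h2 := hAsub hb
      simp only [Finset.mem_Icc] at h1 h2
      simp only [Finset.mem_Ioc]
      omega
    · intro s hs
      exact hcov s hs
  have hsumcard : (An N p q M + An N p q M).card = (2*N - 1).toNat := by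
    rw [hsum_eq, Int.card_Ioc]
  have hdiff := diff_missing hN hp1 hq1 h9 hMF
  have hdiffsub : An N p q M - An N p q M ⊆
      ((Finset.Icc (1-N) (N-1)).erase (N-8)).erase (8-N) := by
    intro d hd
    have hd1 : d ≠ N - 8 := fun h => hdiff.1 (h ▸ hd)
    have hd2 : d ≠ 8 - N := fun h => hdiff.2 (h ▸ hd)
    obtain ⟨a, ha, b, hb, rfl⟩ := Finset.mem_sub.mp hd
    have h1 := hAsub ha
    have h2 := hAsub hb
    simp only [Finset.mem_Icc] at h1 h2
    simp only [Finset.mem_erase, Finset.mem_Icc]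
    exact ⟨hd2, hd1, by omega, by omega⟩
  have hdiffcard : (An N p q M - An N p q M).card ≤ (2*N - 1).toNat - 2 := by
    have hmem1 : (N - 8) ∈ Finset.Icc (1-N) (N-1) := by
      simp only [Finset.mem_Icc]; omega
    have hmem2 : (8 - N) ∈ (Finset.Icc (1-N) (N-1)).erase (N-8) := by
      simp only [Finset.mem_erase, Finset.mem_Icc]
      refine ⟨by omega, by omega, by omega⟩
    calc (An N p q M - An N p q M).card
        ≤ (((Finset.Icc (1-N) (N-1)).erase (N-8)).erase (8-N)).card :=
          Finset.card_le_card hdiffsub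
      _ = (2*N - 1).toNat - 2 := by
          rw [Finset.card_erase_of_mem hmem2, Finset.card_erase_of_mem hmem1, Int.card_Icc]
          have : (N - 1 + 1 - (1 - N)) = 2*N - 1 := by ring
          rw [this]
          omega
  have h2 : 2 ≤ (2*N - 1).toNat := by omega
  omega

lemma good_inj (hN : 100 ≤ N) (hp1 : p ⊆ Finset.Icc 1 18) (hq1 : q ⊆ Finset.Icc 1 18) :
    ∀ M1 ∈ Good N p q, ∀ M2 ∈ Good N p q, An N p q M1 = An N p q M2 → M1 = M2 := by
  have key : ∀ M : Finset ℤ, M ⊆ Fr N → An N p q M ∩ Fr N = M := by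
    intro M hM
    ext a
    simp only [Finset.mem_inter, An, tp, Finset.mem_union, Finset.mem_image, Fr,
      Finset.mem_Icc]
    constructor
    · rintro ⟨(hp | ⟨x, hx, rfl⟩) | hMa, haF⟩
      · have := hp1 hp
        simp only [Finset.mem_Icc] at this
        omega
      · have := hq1 hx
        simp only [Finset.mem_Icc] at this
        omega
      · exact hMa
    · intro ha
      have := hM ha
      simp only [Fr, Finset.mem_Icc] at this
      exact ⟨Or.inr ha, this⟩
  intro M1 h1 M2 h2 heq
  simp only [Good, Finset.mem_filter, Finset.mem_powerset] at h1 h2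
  rw [← key M1 h1.1, ← key M2 h2.1, heq]

end final

/-! ### Concrete fringe patterns -/

def pP : Finset ℤ := {1,2,4,5,9,10,11,12,13,14,15,16,17,18}
def qP : Finset ℤ := {1,2,3,6,9,10,11,12,13,14,15,16,17,18}
def xsP : List ℤ := [1,2,4,5,9,10,11,12,13,14]
def xsQ : List ℤ := [1,2,3,6,9,10,11,12,13,14]

set_option maxRecDepth 40000

lemma hp1' : pP ⊆ Finset.Icc 1 18 := by decide
lemma hq1' : qP ⊆ Finset.Icc 1 18 := by decide
lemma hp2' : Finset.Icc (9:ℤ) 18 ⊆ pP := by decide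
lemma hq2' : Finset.Icc (9:ℤ) 18 ⊆ qP := by decide
lemma hpdet' : ∀ s' ∈ Finset.Icc (2:ℤ) 32, s' ∈ pP + pP := by decide
lemma hqdet' : ∀ s' ∈ Finset.Icc (2:ℤ) 32, s' ∈ qP + qP := by decide
lemma h9' : ∀ u ∈ pP, ∀ v ∈ qP, u + v ≠ 9 := by decide
lemma hxsp' : ∀ x ∈ xsP, x ∈ pP ∧ 1 ≤ x ∧ x ≤ 14 := by decide
lemma hxsq' : ∀ x ∈ xsQ, x ∈ qP ∧ 1 ≤ x ∧ x ≤ 14 := by decide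

end MSTD

open MSTD

/-- Martin–O'Bryant: a positive proportion of subsets of `{1,…,N}` have more sums than
differences, for all sufficiently large `N`. -/
theorem stmt4 : ∃ δ : ℝ, 0 < δ ∧ ∃ N₀ : ℕ, ∀ N : ℕ, N₀ ≤ N →
    δ * 2 ^ N < (((Finset.Icc (1 : ℤ) (N : ℤ)).powerset.filter
      (fun A => (A - A).card < (A + A).card)).card : ℝ) := by
  classical
  refine ⟨(1/2)^38, by positivity, 100, ?_⟩
  intro N hN
  have hNz : (100:ℤ) ≤ (N:ℤ) := by exact_mod_cast hN
  have hgc := good_count (p := pP) (q := qP) hNz hpdet' hqdet' hp2' hq2' xsP xsQ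
    (by decide) (by decide) hxsp' (by decide) (by decide) hxsq'
  have hinj : (Good (N:ℤ) pP qP).card ≤
      ((Finset.Icc (1 : ℤ) (N : ℤ)).powerset.filter
        (fun A => (A - A).card < (A + A).card)).card := by
    apply Finset.card_le_card_of_injOn (fun M => An (N:ℤ) pP qP M)
    · intro M hM
      simp only [Finset.mem_coe, Finset.mem_filter, Finset.mem_powerset]
      constructor
      · apply An_subset hNz hp1' hq1'
        simp only [Finset.mem_coe, Good, Finset.mem_filter, Finset.mem_powerset] at hM
        exact hM.1
      · exact mstd_of_good hNz hp1' hq1' h9' hM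
    · intro M1 h1' M2 h2' heq
      exact good_inj hNz hp1' hq1' M1 h1' M2 h2' heq
  have hFcard : (Fr (N:ℤ)).card = N - 36 := by
    simp only [Fr, Int.card_Icc]
    omega
  have hp0 : (0:ℝ) < 2 ^ (N - 36) := by positivity
  have hsplitpow : (2:ℝ) ^ N = 2 ^ (N - 36) * 2 ^ 36 := by
    rw [← pow_add]
    congr 1
    omega
  calc (1/2:ℝ)^38 * 2 ^ N = 2 ^ (N-36) * ((1/2)^38 * 2^36) := by
        rw [hsplitpow]; ring
    _ = 2 ^ (N-36) / 4 := by norm_num; ring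
    _ < 2 ^ (N-36) / 2 := by linarith
    _ ≤ ((Good (N:ℤ) pP qP).card : ℝ) := by
        rw [← hFcard] at hp0 ⊢
        exact_mod_cast hgc
    _ ≤ (((Finset.Icc (1 : ℤ) (N : ℤ)).powerset.filter
        (fun A => (A - A).card < (A + A).card)).card : ℝ) := by
        exact_mod_cast hinj
end

section
/- Let f(x₁,x₂) = x₁ + 2x₂, and for a finite set A of integers let f(A) = {a₁ + 2a₂ : a₁, a₂ ∈ A}. For every positive integer k, the minimum of |f(A)| over all sets A of integers with |A| = k equals 3k − 2. Moreover, for a set A of integers with |A| = k, one has |f(A)| = 3k − 2 if and only if A is an arithmetic progression. -/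
/-- The image of a finite set `A` of integers under the form `f(x₁,x₂) = x₁ + 2x₂`. -/
def f7 (A : Finset ℤ) : Finset ℤ :=
  (A ×ˢ A).image (fun p => p.1 + 2 * p.2)

/-- A finite set of integers is an arithmetic progression. -/
def IsAP (A : Finset ℤ) : Prop :=
  ∃ a d : ℤ, d ≠ 0 ∧ A = (Finset.range A.card).image (fun i : ℕ => a + (i : ℤ) * d)

lemma mem_f7 {A : Finset ℤ} {x y : ℤ} (hx : x ∈ A) (hy : y ∈ A) : x + 2 * y ∈ f7 A := by
  simp only [f7, Finset.mem_image, Finset.mem_product, Prod.exists]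
  exact ⟨x, y, ⟨hx, hy⟩, rfl⟩

lemma f7_elim {A : Finset ℤ} {x : ℤ} (hx : x ∈ f7 A) : ∃ y z, y ∈ A ∧ z ∈ A ∧ x = y + 2 * z := by
  simp only [f7, Finset.mem_image, Finset.mem_product, Prod.exists] at hx
  obtain ⟨y, z, ⟨hy, hz⟩, h⟩ := hx
  exact ⟨y, z, hy, hz, h.symm⟩

/-- step to global strict monotonicity -/
lemma lt_of_step {g : ℕ → ℤ} {N : ℕ} (h : ∀ m, m < N → g m < g (m+1)) :
    ∀ i j, i < j → j ≤ N → g i < g j := by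
  intro i j hij hj
  induction j with
  | zero => omega
  | succ t ih =>
    rcases Nat.lt_or_ge i t with h' | h'
    · exact lt_trans (ih h' (by omega)) (h t (by omega))
    · have : i = t := by omega
      subst this; exact h i (by omega)

lemma le_of_step {g : ℕ → ℤ} {N : ℕ} (h : ∀ m, m < N → g m < g (m+1)) :
    ∀ i j, i ≤ j → j ≤ N → g i ≤ g j := by
  intro i j hij hj
  rcases Nat.lt_or_ge i j with h' | h'
  · exact le_of_lt (lt_of_step h i j h' hj)
  · have : i = j := by omega
    subst this; exact le_rfl

def chain (a : ℕ → ℤ) : ℕ → ℤ := fun m =>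
  if m % 3 = 0 then 3 * a (m/3)
  else if m % 3 = 1 then a (m/3 + 1) + 2 * a (m/3)
  else a (m/3) + 2 * a (m/3 + 1)

lemma chain_step {a : ℕ → ℤ} {n : ℕ} (hs : ∀ i, i < n → a i < a (i+1)) :
    ∀ m, m < 3*n → chain a m < chain a (m+1) := by
  intro m hm
  obtain ⟨q, r, hr, hqr⟩ : ∃ q r, r < 3 ∧ m = 3*q + r := ⟨m/3, m%3, by omega, by omega⟩
  subst hqr
  have hq : q < n := by omega
  have ha := hs q hq
  interval_cases r
  · have e1 : (3*q) % 3 = 0 := by omega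
    have e2 : (3*q) / 3 = q := by omega
    have e3 : (3*q+1) % 3 = 1 := by omega
    have e4 : (3*q+1) / 3 = q := by omega
    simp only [chain, e1, e2, e3, e4, if_true, if_false]
    norm_num; omega
  · have e1 : (3*q+1) % 3 = 1 := by omega
    have e2 : (3*q+1) / 3 = q := by omega
    have e3 : (3*q+2) % 3 = 2 := by omega
    have e4 : (3*q+2) / 3 = q := by omega
    simp only [chain, e1, e2, e3, e4]
    norm_num; omega
  · have e1 : (3*q+2) % 3 = 2 := by omega
    have e2 : (3*q+2) / 3 = q := by omega
    have e3 : (3*q+3) % 3 = 0 := by omega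
    have e4 : (3*q+3) / 3 = q + 1 := by omega
    simp only [chain, e1, e2, e3, e4]
    norm_num; omega

lemma chain_mem {a : ℕ → ℤ} {A : Finset ℤ} (hm : ∀ i, a i ∈ A) (m : ℕ) :
    chain a m ∈ f7 A := by
  unfold chain
  split_ifs
  · have : 3 * a (m/3) = a (m/3) + 2 * a (m/3) := by ring
    rw [this]; exact mem_f7 (hm _) (hm _)
  · exact mem_f7 (hm _) (hm _)
  · exact mem_f7 (hm _) (hm _)


lemma key_setup (n : ℕ) (A : Finset ℤ) (hA : A.card = n + 1) :
    ∃ a : ℕ → ℤ, (∀ i, a i ∈ A) ∧ (∀ i, i < n → a i < a (i+1)) ∧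
      (∀ x ∈ A, ∃ i ≤ n, x = a i) := by
  have e := A.orderIsoOfFin hA
  refine ⟨fun i => (e ⟨min i n, Nat.lt_succ_of_le (min_le_right _ _)⟩ : ℤ), fun i => ?_, ?_, ?_⟩
  · exact (e _).2
  · intro i hi
    have h1 : min i n = i := by omega
    have h2 : min (i+1) n = i+1 := by omega
    have : (⟨min i n, Nat.lt_succ_of_le (min_le_right _ _)⟩ : Fin (n+1)) <
        ⟨min (i+1) n, Nat.lt_succ_of_le (min_le_right _ _)⟩ := by
      simp [Fin.lt_def, h1, h2]
    exact Subtype.coe_lt_coe.2 (e.lt_iff_lt.2 this)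
  · intro x hx
    obtain ⟨i, hi⟩ := e.surjective ⟨x, hx⟩
    refine ⟨i, by omega, ?_⟩
    have h1 : min (i : ℕ) n = i := by omega
    have : (⟨min (i:ℕ) n, Nat.lt_succ_of_le (min_le_right _ _)⟩ : Fin (n+1)) = i := by
      simp [Fin.ext_iff, h1]
    show x = ((e ⟨min (i:ℕ) n, Nat.lt_succ_of_le (min_le_right _ _)⟩ : A) : ℤ)
    rw [this, hi]

lemma chain_3i {a : ℕ → ℤ} (i : ℕ) : chain a (3*i) = 3 * a i := by
  have e1 : (3*i) % 3 = 0 := by omega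
  have e2 : (3*i) / 3 = i := by omega
  simp [chain, e1, e2]

lemma key (n : ℕ) (A : Finset ℤ) (hA : A.card = n + 1) :
    3*n+1 ≤ (f7 A).card ∧ ((f7 A).card = 3*n+1 → IsAP A) := by
  obtain ⟨a, hmem, hstep, hsurj⟩ := key_setup n A hA
  have hcstep := chain_step hstep
  have hamono : ∀ i j, i < j → j ≤ n → a i < a j := lt_of_step hstep
  -- lower bound
  have hsub : (Finset.range (3*n+1)).image (chain a) ⊆ f7 A := by
    intro x hx
    obtain ⟨m, _, rfl⟩ := Finset.mem_image.1 hx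
    exact chain_mem hmem m
  have hcardC : ((Finset.range (3*n+1)).image (chain a)).card = 3*n+1 := by
    rw [Finset.card_image_of_injOn, Finset.card_range]
    intro i hi j hj hij
    simp only [Finset.coe_range, Set.mem_Iio] at hi hj
    by_contra hne
    rcases Nat.lt_or_ge i j with h' | h'
    · exact absurd hij (ne_of_lt (lt_of_step hcstep i j h' (by omega)))
    · exact absurd hij.symm (ne_of_lt (lt_of_step hcstep j i (by omega) (by omega)))
  have hlow : 3*n+1 ≤ (f7 A).card := by
    calc 3*n+1 = ((Finset.range (3*n+1)).image (chain a)).card := hcardC.symm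
    _ ≤ (f7 A).card := Finset.card_le_card hsub
  refine ⟨hlow, fun hcard => ?_⟩
  -- converse
  rcases Nat.eq_zero_or_pos n with hn | hn
  · subst hn
    obtain ⟨x, hx⟩ := Finset.card_eq_one.1 hA
    exact ⟨x, 1, one_ne_zero, by rw [hA, hx]; ext y; simp⟩
  -- n ≥ 1 : f7 A is exactly the chain
  have hCeq : f7 A = (Finset.range (3*n+1)).image (chain a) :=
    (Finset.eq_of_subset_of_card_le hsub (by omega)).symm
  -- locate an element of f7 A strictly between 3*a i and 3*a (i+2)
  have hloc : ∀ (i : ℕ) (w : ℤ), i + 2 ≤ n → w ∈ f7 A → 3 * a i < w → w < 3 * a (i+2) →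
      w = a (i+1) + 2*a i ∨ w = a i + 2*a (i+1) ∨ w = 3*a (i+1) ∨
      w = a (i+2) + 2*a (i+1) ∨ w = a (i+1) + 2*a (i+2) := by
    intro i w hi hw hw1 hw2
    rw [hCeq] at hw
    obtain ⟨m, hmr, hgm⟩ := Finset.mem_image.1 hw
    have hmr : m ≤ 3*n := by simpa [Nat.lt_succ_iff] using Finset.mem_range.1 hmr
    have hml : 3*i < m := by
      by_contra h
      have := le_of_step hcstep m (3*i) (by omega) (by omega)
      rw [hgm, chain_3i] at this; omega
    have hmu : m < 3*i+6 := by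
      by_contra h
      have h6 : 3*(i+2) ≤ m := by omega
      have := le_of_step hcstep (3*(i+2)) m h6 hmr
      rw [hgm, chain_3i] at this; omega
    have : m = 3*i+1 ∨ m = 3*i+2 ∨ m = 3*i+3 ∨ m = 3*i+4 ∨ m = 3*i+5 := by omega
    rcases this with rfl | rfl | rfl | rfl | rfl
    · left
      have e1 : (3*i+1) % 3 = 1 := by omega
      have e2 : (3*i+1) / 3 = i := by omega
      rw [← hgm]; simp [chain, e1, e2]
    · right; left
      have e1 : (3*i+2) % 3 = 2 := by omega
      have e2 : (3*i+2) / 3 = i := by omega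
      rw [← hgm]; simp [chain, e1, e2]
    · right; right; left
      have e0 : 3*i+3 = 3*(i+1) := by omega
      rw [← hgm, e0, chain_3i]
    · right; right; right; left
      have e1 : (3*i+4) % 3 = 1 := by omega
      have e2 : (3*i+4) / 3 = i+1 := by omega
      rw [← hgm]; simp [chain, e1, e2]
    · right; right; right; right
      have e1 : (3*i+5) % 3 = 2 := by omega
      have e2 : (3*i+5) / 3 = i+1 := by omega
      rw [← hgm]; simp [chain, e1, e2]
  have hgap : ∀ i, i + 2 ≤ n → a (i+2) - a (i+1) = a (i+1) - a i := by
    intro i hi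
    have s1 : a i < a (i+1) := hstep i (by omega)
    have s2 : a (i+1) < a (i+2) := hstep (i+1) (by omega)
    have P1 := hloc i (a (i+2) + 2*a i) hi (mem_f7 (hmem _) (hmem _))
      (by omega) (by omega)
    have P2 := hloc i (a i + 2*a (i+2)) hi (mem_f7 (hmem _) (hmem _))
      (by omega) (by omega)
    rcases P1 with h|h|h|h|h <;> rcases P2 with h'|h'|h'|h'|h' <;> omega
  -- all gaps are equal, so A is an AP
  set D := a 1 - a 0 with hD
  have hDpos : 0 < D := by
    have h0 := hstep 0 (by omega)
    have hr : a (0+1) = a 1 := rfl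
    omega
  have hgapD : ∀ i, i + 1 ≤ n → a (i+1) - a i = D := by
    intro i
    induction i with
    | zero =>
      intro _
      have hr : a (0+1) = a 1 := rfl
      omega
    | succ j ih => intro hj; rw [hgap j (by omega)]; exact ih (by omega)
  have hall : ∀ i, i ≤ n → a i = a 0 + (i : ℤ) * D := by
    intro i
    induction i with
    | zero => intro _; simp
    | succ j ih =>
      intro hj
      have h1 : a (j+1) - a j = D := hgapD j hj
      have h2 : a j = a 0 + (j:ℤ) * D := ih (by omega)
      have : a (j+1) = a j + D := by omega
      rw [this, h2]; push_cast; ring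
  refine ⟨a 0, D, by omega, ?_⟩
  rw [hA]
  have hsub2 : (Finset.range (n+1)).image (fun i : ℕ => a 0 + (i:ℤ) * D) ⊆ A := by
    intro x hx
    obtain ⟨i, hi, rfl⟩ := Finset.mem_image.1 hx
    have hi' : i ≤ n := by simpa [Nat.lt_succ_iff] using Finset.mem_range.1 hi
    rw [← hall i hi']
    exact hmem i
  have hcard2 : ((Finset.range (n+1)).image (fun i : ℕ => a 0 + (i:ℤ) * D)).card = n+1 := by
    rw [Finset.card_image_of_injOn, Finset.card_range]
    intro i _ j _ hij
    have hij' : a 0 + (i:ℤ)*D = a 0 + (j:ℤ)*D := hij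
    have : (i:ℤ) * D = (j:ℤ) * D := by omega
    have := mul_right_cancel₀ (by omega : D ≠ 0) this
    exact_mod_cast this
  exact (Finset.eq_of_subset_of_card_le hsub2 (by omega)).symm

lemma ap_card (n : ℕ) (A : Finset ℤ) (hA : A.card = n + 1) (hap : IsAP A) :
    (f7 A).card = 3*n+1 := by
  obtain ⟨c, d, hd, hAeq⟩ := hap
  rw [hA] at hAeq
  have hup : f7 A ⊆ (Finset.range (3*n+1)).image (fun m : ℕ => 3*c + (m:ℤ)*d) := by
    intro x hx
    obtain ⟨y, z, hy, hz, rfl⟩ := f7_elim hx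
    rw [hAeq] at hy hz
    obtain ⟨i, hi, rfl⟩ := Finset.mem_image.1 hy
    obtain ⟨j, hj, rfl⟩ := Finset.mem_image.1 hz
    have hi' : i ≤ n := by simpa [Nat.lt_succ_iff] using Finset.mem_range.1 hi
    have hj' : j ≤ n := by simpa [Nat.lt_succ_iff] using Finset.mem_range.1 hj
    refine Finset.mem_image.2 ⟨i + 2*j, Finset.mem_range.2 (by omega), ?_⟩
    push_cast; ring
  have h1 : (f7 A).card ≤ 3*n+1 := by
    calc (f7 A).card ≤ ((Finset.range (3*n+1)).image (fun m : ℕ => 3*c + (m:ℤ)*d)).card :=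
          Finset.card_le_card hup
    _ ≤ (Finset.range (3*n+1)).card := Finset.card_image_le
    _ = 3*n+1 := Finset.card_range _
  have h2 := (key n A hA).1
  omega


/-- Cilleruelo–Silva–Vinuesa: for `f(x₁,x₂) = x₁ + 2x₂`, the minimum of `|f(A)|` over sets
`A` of `k` integers equals `3k − 2`, with equality exactly for arithmetic progressions. -/
theorem stmt7 (k : ℕ) (hk : 1 ≤ k) :
    IsLeast {n : ℕ | ∃ A : Finset ℤ, A.card = k ∧ (f7 A).card = n} (3 * k - 2) ∧
    ∀ A : Finset ℤ, A.card = k → ((f7 A).card = 3 * k - 2 ↔ IsAP A) := by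
  obtain ⟨n, rfl⟩ : ∃ n, k = n + 1 := ⟨k - 1, by omega⟩
  have h32 : 3 * (n+1) - 2 = 3*n+1 := by omega
  rw [h32]
  constructor
  · constructor
    · refine ⟨(Finset.range (n+1)).image (fun i : ℕ => (i:ℤ)), ?_, ?_⟩
      · rw [Finset.card_image_of_injective _ (fun x y h => by exact_mod_cast h),
          Finset.card_range]
      · refine ap_card n _ ?_ ?_
        · rw [Finset.card_image_of_injective _ (fun x y h => by exact_mod_cast h),
            Finset.card_range]
        · refine ⟨0, 1, one_ne_zero, ?_⟩
          rw [Finset.card_image_of_injective _ (fun x y h => by exact_mod_cast h),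
            Finset.card_range]
          ext x; simp
    · rintro m ⟨A, hA, rfl⟩
      exact (key n A hA).1
  · intro A hA
    exact ⟨(key n A hA).2, ap_card n A hA⟩
end

section
/- Let A = {0 = a₀ < a₁ < ⋯ < a_{k−1}} be a finite set of nonnegative integers with min(A) = 0 and gcd(A) = 1, and write a = a_{k−1} = max(A). Then there exist a positive integer h₀, nonnegative integers C and D, and finite sets 𝒞 ⊆ [0, C−2] and 𝒟 ⊆ [0, D−2] such that for every integer h ≥ h₀, the h-fold sumset satisfies hA = 𝒞 ∪ {n ∈ ℤ : C ≤ n ≤ ha − D} ∪ {ha − d : d ∈ 𝒟}. -/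
def hsum (h : ℕ) (A : Finset ℕ) : Set ℕ :=
  {n | ∃ f : Fin h → ℕ, (∀ i, f i ∈ A) ∧ ∑ i, f i = n}

lemma hsum_zero (A : Finset ℕ) : hsum 0 A = {0} := by
  ext n
  constructor
  · rintro ⟨f, hf, rfl⟩; simp
  · rintro rfl; exact ⟨fun i => i.elim0, fun i => i.elim0, by simp⟩

lemma mem_hsum_succ {h : ℕ} {A : Finset ℕ} {n : ℕ} :
    n ∈ hsum (h+1) A ↔ ∃ x ∈ A, ∃ m ∈ hsum h A, n = x + m := by
  constructor
  · rintro ⟨f, hf, rfl⟩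
    exact ⟨f 0, hf 0, ∑ i : Fin h, f i.succ, ⟨fun i => f i.succ, fun i => hf _, rfl⟩,
      (Fin.sum_univ_succ f)⟩
  · rintro ⟨x, hx, m, ⟨f, hf, rfl⟩, rfl⟩
    refine ⟨Fin.cons x f, ?_, ?_⟩
    · intro i
      refine Fin.cases ?_ ?_ i <;> simp [hx, hf]
    · simp [Fin.sum_univ_succ]

lemma hsum_add {A : Finset ℕ} {h1 h2 n m : ℕ} (hn : n ∈ hsum h1 A) (hm : m ∈ hsum h2 A) :
    n + m ∈ hsum (h1 + h2) A := by
  induction h1 generalizing n with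
  | zero => rw [hsum_zero] at hn; simp at hn; subst hn; simpa using hm
  | succ k ih =>
    rw [mem_hsum_succ] at hn
    obtain ⟨x, hx, m', hm', rfl⟩ := hn
    have := ih hm'
    have h2' : x + (m' + m) ∈ hsum (k + h2 + 1) A := mem_hsum_succ.2 ⟨x, hx, _, this, rfl⟩
    rw [add_assoc, show k + (1 + h2) = k + h2 + 1 from by omega]
    exact add_assoc x m' m ▸ h2'

lemma hsum_mono {A : Finset ℕ} (h0 : 0 ∈ A) {h h' n : ℕ} (hle : h ≤ h')
    (hn : n ∈ hsum h A) : n ∈ hsum h' A := by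
  obtain ⟨k, rfl⟩ := Nat.exists_eq_add_of_le hle
  induction k with
  | zero => simpa using hn
  | succ k ih =>
    have : 0 + n ∈ hsum (1 + (h + k)) A :=
      hsum_add (mem_hsum_succ.2 ⟨0, h0, 0, by simp [hsum_zero], rfl⟩) (by simpa using ih)
    rw [show h + (k + 1) = 1 + (h + k) from by omega]
    simpa using this

lemma nsmul_mem_hsum {A : Finset ℕ} {x : ℕ} (hx : x ∈ A) (k : ℕ) : k * x ∈ hsum k A := by
  induction k with
  | zero => simp [hsum_zero]
  | succ k ih => exact mem_hsum_succ.2 ⟨x, hx, k * x, ih, by ring⟩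

lemma hsum_le {A : Finset ℕ} {a n h : ℕ} (hb : ∀ x ∈ A, x ≤ a) (hn : n ∈ hsum h A) :
    n ≤ h * a := by
  obtain ⟨f, hf, rfl⟩ := hn
  calc ∑ i, f i ≤ ∑ _i : Fin h, a := Finset.sum_le_sum fun i _ => hb _ (hf i)
  _ = h * a := by simp [mul_comm]

lemma hsum_reflect {A : Finset ℕ} {a n h : ℕ} (hb : ∀ x ∈ A, x ≤ a) (hn : n ∈ hsum h A) :
    h * a - n ∈ hsum h (A.image (a - ·)) := by
  obtain ⟨f, hf, rfl⟩ := hn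
  refine ⟨fun i => a - f i, fun i => Finset.mem_image.2 ⟨f i, hf i, rfl⟩, ?_⟩
  have h1 : ∑ i : Fin h, (a - f i) + ∑ i, f i = h * a := by
    rw [← Finset.sum_add_distrib]
    have : ∀ i : Fin h, a - f i + f i = a := fun i => Nat.sub_add_cancel (hb _ (hf i))
    simp [this, mul_comm]
  show ∑ i : Fin h, (a - f i) = h * a - ∑ i, f i
  omega
lemma mem_closure_iff_hsum {A : Finset ℕ} {n : ℕ} :
    n ∈ AddSubmonoid.closure (A : Set ℕ) ↔ ∃ h, n ∈ hsum h A := by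
  constructor
  · intro hn
    induction hn using AddSubmonoid.closure_induction with
    | mem x hx => exact ⟨1, mem_hsum_succ.2 ⟨x, hx, 0, by simp [hsum_zero], by simp⟩⟩
    | zero => exact ⟨0, by simp [hsum_zero]⟩
    | add x y _ _ hx hy =>
      obtain ⟨h1, hx⟩ := hx; obtain ⟨h2, hy⟩ := hy
      exact ⟨h1 + h2, hsum_add hx hy⟩
  · rintro ⟨h, f, hf, rfl⟩
    exact sum_mem (fun i _ => AddSubmonoid.subset_closure (hf i))

lemma bezout (s : Finset ℕ) : ∃ x ∈ AddSubmonoid.closure (s : Set ℕ),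
    ∃ y ∈ AddSubmonoid.closure (s : Set ℕ), (x : ℤ) - y = s.gcd id := by
  induction s using Finset.induction with
  | empty => exact ⟨0, zero_mem _, 0, zero_mem _, by simp⟩
  | @insert a s ha ih =>
    obtain ⟨x, hx, y, hy, hxy⟩ := ih
    have hsub : AddSubmonoid.closure (s : Set ℕ) ≤ AddSubmonoid.closure ((insert a s : Finset ℕ) : Set ℕ) := by
      apply AddSubmonoid.closure_mono; intro z hz; simp at hz ⊢; tauto
    have hamem : a ∈ AddSubmonoid.closure ((insert a s : Finset ℕ) : Set ℕ) :=
      AddSubmonoid.subset_closure (by simp)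
    rw [Finset.gcd_insert]
    set g : ℕ := s.gcd id
    have hbez : (Nat.gcd a g : ℤ) = a * Int.gcdA a g + g * Int.gcdB a g := by
      have := Int.gcd_eq_gcd_ab (a : ℤ) (g : ℤ)
      simpa [Int.gcd_natCast_natCast] using this
    set u : ℤ := Int.gcdA a g
    set v : ℤ := Int.gcdB a g
    refine ⟨u.toNat * a + v.toNat * x + (-v).toNat * y, ?_,
            (-u).toNat * a + v.toNat * y + (-v).toNat * x, ?_, ?_⟩
    · exact add_mem (add_mem (nsmul_mem hamem _) (nsmul_mem (hsub hx) _)) (nsmul_mem (hsub hy) _)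
    · exact add_mem (add_mem (nsmul_mem hamem _) (nsmul_mem (hsub hy) _)) (nsmul_mem (hsub hx) _)
    · have h1 : (u.toNat : ℤ) - (-u).toNat = u := by omega
      have h2 : (v.toNat : ℤ) - (-v).toNat = v := by omega
      show ((u.toNat * a + v.toNat * x + (-v).toNat * y : ℕ) : ℤ) - ((-u).toNat * a + v.toNat * y + (-v).toNat * x : ℕ) = (Nat.gcd a g : ℤ)
      push_cast
      rw [hbez]
      nlinarith [hxy, h1, h2]

lemma hsum_nsmul {A : Finset ℕ} {h m : ℕ} (hm : m ∈ hsum h A) (k : ℕ) :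
    k * m ∈ hsum (k * h) A := by
  induction k with
  | zero => simp [hsum_zero]
  | succ k ih =>
    have := hsum_add ih hm
    rw [show (k+1) * m = k * m + m from by ring, show (k+1) * h = k * h + h from by ring]
    exact this

lemma cofinite {A : Finset ℕ} (hgcd : A.gcd id = 1) :
    ∃ N, ∀ n, N ≤ n → ∃ h, n ∈ hsum h A := by
  obtain ⟨x, hx, y, hy, hxy⟩ := bezout A
  rw [hgcd] at hxy
  have hx' : ∃ h, x ∈ hsum h A := mem_closure_iff_hsum.1 hx
  have hy' : ∃ h, y ∈ hsum h A := mem_closure_iff_hsum.1 hy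
  have hxy' : x = y + 1 := by omega
  refine ⟨y * y, fun n hn => ?_⟩
  rcases Nat.eq_zero_or_pos y with h0 | hpos
  · subst h0
    have hx1 : x = 1 := by omega
    subst hx1
    obtain ⟨h, hh⟩ := hx'
    exact ⟨n * h, by simpa using hsum_nsmul hh n⟩
  · set q := n / y
    set r := n % y
    have hqr : n = r * x + (q - r) * y := by
      have h1 : n = q * y + r := by rw [Nat.mul_comm]; exact (Nat.div_add_mod n y).symm
      have hrq : r ≤ q := by
        have hyq : y ≤ q := (Nat.le_div_iff_mul_le hpos).2 hn
        have := Nat.mod_lt n hpos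
        omega
      have : r * x = r * y + r := by rw [hxy']; ring
      have h2 : (q - r) * y + r * y = q * y := by
        rw [← Nat.add_mul, Nat.sub_add_cancel hrq]
      omega
    obtain ⟨hx2, hhx⟩ := hx'
    obtain ⟨hy2, hhy⟩ := hy'
    exact ⟨r * hx2 + (q - r) * hy2, hqr ▸ hsum_add (hsum_nsmul hhx r) (hsum_nsmul hhy (q - r))⟩
open Classical in
lemma low (A : Finset ℕ) (h0 : 0 ∈ A) (a : ℕ) (haA : a ∈ A) (ha1 : 1 ≤ a)
    (hcof : ∃ N, ∀ n, N ≤ n → ∃ h, n ∈ hsum h A) :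
    ∃ C K : ℕ, (∀ c, c + 1 = C → ¬∃ h, c ∈ hsum h A) ∧
      (∀ n, C ≤ n → ∃ h, n ∈ hsum h A) ∧
      (∀ n h, C ≤ n → n + K ≤ h * a → n ∈ hsum h A) := by
  obtain ⟨N, hN⟩ := hcof
  set P : ℕ → Prop := fun C => ∀ n, C ≤ n → ∃ h, n ∈ hsum h A with hP
  have hex : ∃ C, P C := ⟨N, hN⟩
  set C := Nat.find hex with hC
  have hPC : P C := Nat.find_spec hex
  have hmin : ∀ c, c + 1 = C → ¬∃ h, c ∈ hsum h A := by
    intro c hc hmem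
    have : ¬ P c := Nat.find_min hex (by omega)
    apply this
    intro n hn
    rcases Nat.eq_or_lt_of_le hn with rfl | hlt
    · exact hmem
    · exact hPC n (by omega)
  set W : ℕ → ℕ := fun m => if hm : ∃ h, m ∈ hsum h A then hm.choose else 0 with hW
  have hWspec : ∀ m, (∃ h, m ∈ hsum h A) → m ∈ hsum (W m) A := by
    intro m hm
    simp only [hW, dif_pos hm]
    exact hm.choose_spec
  set M := (Finset.Ico C (C + a)).sup W with hM
  refine ⟨C, (M + 1) * a, hmin, hPC, ?_⟩
  intro n h hCn hK
  set q := (n - C) / a with hq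
  set n₀ := C + (n - C) % a with hn₀
  have hdm := Nat.div_add_mod (n - C) a
  have hmodlt : (n - C) % a < a := Nat.mod_lt _ (by omega)
  have hmem₀ : n₀ ∈ hsum (W n₀) A := hWspec n₀ (hPC n₀ (by omega))
  have hWM : W n₀ ≤ M := Finset.le_sup (Finset.mem_Ico.2 ⟨by omega, by omega⟩)
  have hqa : q * a ∈ hsum q A := nsmul_mem_hsum haA q
  have hsum_mem : n₀ + q * a ∈ hsum (W n₀ + q) A := hsum_add hmem₀ hqa
  have e0 : q * a = a * ((n - C) / a) := Nat.mul_comm _ _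
  have hn_eq : n = n₀ + q * a := by omega
  have hqle : W n₀ + q ≤ h := by
    have e1 : q * a ≤ n - C := Nat.div_mul_le_self _ _
    have h1 : q * a + (M + 1) * a ≤ h * a := by omega
    have h2 : (q + (M + 1)) * a ≤ h * a := by rw [Nat.add_mul]; omega
    have h3 : q + (M + 1) ≤ h := Nat.le_of_mul_le_mul_right h2 (by omega)
    omega
  exact hn_eq ▸ hsum_mono h0 hqle hsum_mem
/-- Nathanson's Fundamental Theorem of Additive Number Theory: for a normalized finite set
`A` of nonnegative integers (`0 ∈ A`, `gcd A = 1`) with maximum `a`, there are `h₀`,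
`C`, `D` and finite sets `𝒞 ⊆ [0, C−2]`, `𝒟 ⊆ [0, D−2]` with
`hA = 𝒞 ∪ [C, ha−D] ∪ (ha − 𝒟)` for all `h ≥ h₀`. -/
theorem stmt10 (A : Finset ℕ) (h0 : 0 ∈ A) (hgcd : A.gcd id = 1) :
    ∃ (h₀ C D : ℕ), 0 < h₀ ∧ ∃ 𝒞 𝒟 : Finset ℕ,
      (∀ c ∈ 𝒞, (c : ℤ) ≤ (C : ℤ) - 2) ∧
      (∀ d ∈ 𝒟, (d : ℤ) ≤ (D : ℤ) - 2) ∧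
      ∀ h : ℕ, h₀ ≤ h →
        hsum h A = ↑𝒞 ∪
          {n : ℕ | C ≤ n ∧ (n : ℤ) ≤ (h : ℤ) * (A.max' ⟨0, h0⟩ : ℤ) - (D : ℤ)} ∪
          {n : ℕ | ∃ d ∈ 𝒟, (n : ℤ) = (h : ℤ) * (A.max' ⟨0, h0⟩ : ℤ) - (d : ℤ)} := by
  classical
  set a := A.max' ⟨0, h0⟩ with ha
  have haA : a ∈ A := A.max'_mem _
  have hbd : ∀ x ∈ A, x ≤ a := fun x hx => A.le_max' x hx
  have ha1 : 1 ≤ a := by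
    by_contra hcon
    have hz : A.gcd id = 0 := Finset.gcd_eq_zero_iff.2 fun x hx => by
      have := hbd x hx; simp only [id]; omega
    omega
  set B := A.image (a - ·) with hB
  have h0B : 0 ∈ B := Finset.mem_image.2 ⟨a, haA, by omega⟩
  have haB : a ∈ B := Finset.mem_image.2 ⟨0, h0, by omega⟩
  have hbdB : ∀ x ∈ B, x ≤ a := by
    intro x hx
    obtain ⟨y, _, rfl⟩ := Finset.mem_image.1 hx
    omega
  have hBBA : B.image (a - ·) = A := by
    rw [hB, Finset.image_image]
    have : A.image ((a - ·) ∘ (a - ·)) = A.image id := by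
      apply Finset.image_congr
      intro x hx
      have := hbd x hx
      simp only [Function.comp, id_eq]
      omega
    rw [this, Finset.image_id]
  have hgcdB : B.gcd id = 1 := by
    have hdvd : B.gcd id ∣ 1 := by
      rw [← hgcd]
      apply Finset.dvd_gcd
      intro x hx
      have h1 : B.gcd id ∣ a := Finset.gcd_dvd haB
      have h2 : B.gcd id ∣ a - x := Finset.gcd_dvd (Finset.mem_image.2 ⟨x, hx, rfl⟩)
      have h3 : (x : ℕ) = a - (a - x) := by have := hbd x hx; omega
      show B.gcd id ∣ x
      rw [h3]
      exact Nat.dvd_sub h1 h2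
    exact Nat.dvd_one.1 hdvd
  have reflectAB : ∀ {n h : ℕ}, n ∈ hsum h A → h * a - n ∈ hsum h B :=
    fun hn => hsum_reflect hbd hn
  have reflectBA : ∀ {m h : ℕ}, m ∈ hsum h B → h * a - m ∈ hsum h A :=
    fun hm => hBBA ▸ hsum_reflect hbdB hm
  obtain ⟨C, KA, hCmin, hCS, hClow⟩ := low A h0 a haA ha1 (cofinite hgcd)
  obtain ⟨D, KB, hDmin, hDS, hDlow⟩ := low B h0B a haB ha1 (cofinite hgcdB)
  set E := C + D + KA + KB + 2 with hE
  set WA : ℕ → ℕ := fun m => if hm : ∃ h, m ∈ hsum h A then hm.choose else 0 with hWA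
  have hWAspec : ∀ m, (∃ h, m ∈ hsum h A) → m ∈ hsum (WA m) A := by
    intro m hm
    simp only [hWA, dif_pos hm]
    exact hm.choose_spec
  set WB : ℕ → ℕ := fun m => if hm : ∃ h, m ∈ hsum h B then hm.choose else 0 with hWB
  have hWBspec : ∀ m, (∃ h, m ∈ hsum h B) → m ∈ hsum (WB m) B := by
    intro m hm
    simp only [hWB, dif_pos hm]
    exact hm.choose_spec
  set h₀ := 2 * E + 1 + (Finset.range E).sup WA + (Finset.range E).sup WB with hh₀
  refine ⟨h₀, C, D, by omega, (Finset.range C).filter (fun c => ∃ h, c ∈ hsum h A),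
    (Finset.range D).filter (fun d => ∃ h, d ∈ hsum h B), ?_, ?_, ?_⟩
  · intro c hc
    obtain ⟨hcr, hcS⟩ := Finset.mem_filter.1 hc
    rw [Finset.mem_range] at hcr
    have : c + 1 ≠ C := fun hcc => hCmin c hcc hcS
    push_cast
    omega
  · intro d hd
    obtain ⟨hdr, hdS⟩ := Finset.mem_filter.1 hd
    rw [Finset.mem_range] at hdr
    have : d + 1 ≠ D := fun hdd => hDmin d hdd hdS
    push_cast
    omega
  · intro h hh
    have hha : h ≤ h * a := Nat.le_mul_of_pos_right h (by omega)
    have hhE : 2 * E + 1 ≤ h * a := by omega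
    have castha : ((h * a : ℕ) : ℤ) = (h : ℤ) * (a : ℤ) := by push_cast; ring
    ext n
    simp only [Set.mem_union, Set.mem_setOf_eq, Finset.coe_filter, Finset.mem_range,
      Set.mem_setOf_eq]
    constructor
    · intro hn
      have hnle : n ≤ h * a := hsum_le hbd hn
      by_cases hnC : n < C
      · exact Or.inl (Or.inl ⟨hnC, h, hn⟩)
      · by_cases hmid : n + D ≤ h * a
        · exact Or.inl (Or.inr ⟨by omega, by omega⟩)
        · refine Or.inr ⟨h * a - n, Finset.mem_filter.2 ⟨Finset.mem_range.2 (by omega),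
            h, reflectAB hn⟩, by push_cast; omega⟩
    · rintro ((⟨hnC, hnS⟩ | ⟨hCn, htop⟩) | ⟨d, hd, hnd⟩)
      · have h1 : n ∈ hsum (WA n) A := hWAspec n hnS
        have h2 : WA n ≤ (Finset.range E).sup WA :=
          Finset.le_sup (Finset.mem_range.2 (by omega))
        exact hsum_mono h0 (by omega) h1
      · have htop' : n + D ≤ h * a := by omega
        by_cases hKA : n + KA ≤ h * a
        · exact hClow n h hCn hKA
        · set m := h * a - n with hm
          have hmD : D ≤ m := by omega
          have hmE : m < E := by omega
          have h1 : m ∈ hsum (WB m) B := hWBspec m (hDS m hmD)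
          have h2 : WB m ≤ (Finset.range E).sup WB :=
            Finset.le_sup (Finset.mem_range.2 hmE)
          have h3 : m ∈ hsum h B := hsum_mono h0B (by omega) h1
          have h4 : h * a - m ∈ hsum h A := reflectBA h3
          have h5 : h * a - m = n := by omega
          rwa [h5] at h4
      · obtain ⟨hdr, hdS⟩ := Finset.mem_filter.1 hd
        rw [Finset.mem_range] at hdr
        have h1 : d ∈ hsum (WB d) B := hWBspec d hdS
        have h2 : WB d ≤ (Finset.range E).sup WB :=
          Finset.le_sup (Finset.mem_range.2 (by omega))
        have h3 : d ∈ hsum h B := hsum_mono h0B (by omega) h1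
        have h4 : h * a - d ∈ hsum h A := reflectBA h3
        have h5 : h * a - d = n := by omega
        rwa [h5] at h4
end

section
/- For every integer h ≥ 2, there exists a minimal asymptotic basis of order h for ℕ₀: a set A of nonnegative integers such that ℕ₀ \ hA is finite, and for every a* ∈ A the set ℕ₀ \ h(A \ {a*}) is infinite. -/
/-- binary digit sum -/
def bsum : ℕ → ℕ
  | 0 => 0
  | (n+1) => (n+1) % 2 + bsum ((n+1) / 2)
decreasing_by exact Nat.div_lt_self (Nat.succ_pos n) one_lt_two

lemma bsum_zero : bsum 0 = 0 := by simp [bsum]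

lemma bsum_rec : ∀ n : ℕ, n ≠ 0 → bsum n = n % 2 + bsum (n / 2) := by
  intro n hn
  cases n with
  | zero => exact absurd rfl hn
  | succ m => rw [bsum]

lemma bsum_ne_zero : ∀ n : ℕ, n ≠ 0 → bsum n ≠ 0 := by
  intro n
  induction n using Nat.strong_induction_on with
  | _ n ih =>
    intro hn
    rw [bsum_rec n hn]
    rcases Nat.even_or_odd n with he | ho
    · have h2 : n % 2 = 0 := Nat.even_iff.mp he
      have hd : n / 2 ≠ 0 := by omega
      have h3 := ih (n / 2) (by omega) hd
      omega
    · have h2 : n % 2 = 1 := Nat.odd_iff.mp ho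
      omega

lemma bsum_succ_le : ∀ n : ℕ, bsum (n + 1) ≤ bsum n + 1 := by
  intro n
  induction n using Nat.strong_induction_on with
  | _ n ih =>
    rcases Nat.eq_zero_or_pos n with h0 | hpos
    · subst h0; simp [bsum]
    rw [bsum_rec (n+1) (by omega), bsum_rec n (by omega)]
    rcases Nat.even_or_odd n with he | ho
    · have h2 : n % 2 = 0 := Nat.even_iff.mp he
      have e1 : (n+1) % 2 = 1 := by omega
      have e2 : (n+1) / 2 = n / 2 := by omega
      rw [e1, e2]; omega
    · have h2 : n % 2 = 1 := Nat.odd_iff.mp ho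
      have e1 : (n+1) % 2 = 0 := by omega
      have e2 : (n+1) / 2 = n / 2 + 1 := by omega
      rw [e1, e2]
      have h3 := ih (n / 2) (by omega)
      omega

lemma bsum_add_le (a b : ℕ) : bsum (a + b) ≤ bsum a + bsum b := by
  have H : ∀ m, ∀ a b : ℕ, a + b ≤ m → bsum (a + b) ≤ bsum a + bsum b := by
    intro m
    induction m using Nat.strong_induction_on with
    | _ m ih =>
      intro a b hab
      rcases Nat.eq_zero_or_pos a with h0 | hapos
      · subst h0; simp
      rcases Nat.eq_zero_or_pos b with h0 | hbpos
      · subst h0; simp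
      rw [bsum_rec (a+b) (by omega), bsum_rec a (by omega), bsum_rec b (by omega)]
      rcases Nat.even_or_odd a with hea | hoa <;> rcases Nat.even_or_odd b with heb | hob
      · have h2a : a % 2 = 0 := Nat.even_iff.mp hea
        have h2b : b % 2 = 0 := Nat.even_iff.mp heb
        have e2 : (a+b) / 2 = a / 2 + b / 2 := by omega
        rw [e2]
        have h3 := ih (m-1) (by omega) (a/2) (b/2) (by omega)
        omega
      · have h2a : a % 2 = 0 := Nat.even_iff.mp hea
        have h2b : b % 2 = 1 := Nat.odd_iff.mp hob
        have e2 : (a+b) / 2 = a / 2 + b / 2 := by omega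
        rw [e2]
        have h3 := ih (m-1) (by omega) (a/2) (b/2) (by omega)
        omega
      · have h2a : a % 2 = 1 := Nat.odd_iff.mp hoa
        have h2b : b % 2 = 0 := Nat.even_iff.mp heb
        have e2 : (a+b) / 2 = a / 2 + b / 2 := by omega
        rw [e2]
        have h3 := ih (m-1) (by omega) (a/2) (b/2) (by omega)
        omega
      · have h2a : a % 2 = 1 := Nat.odd_iff.mp hoa
        have h2b : b % 2 = 1 := Nat.odd_iff.mp hob
        have e2 : (a+b) / 2 = a / 2 + (b / 2 + 1) := by omega
        rw [e2]
        have i1 := ih (m-1) (by omega) (a/2) (b/2 + 1) (by omega)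
        have i2 := bsum_succ_le (b/2)
        omega
  exact H (a+b) a b le_rfl

lemma bsum_shift {k m C : ℕ} (hm : m < 2^k) : bsum (m + 2^k * C) = bsum m + bsum C := by
  induction k generalizing m C with
  | zero =>
    have hm0 : m = 0 := by omega
    subst hm0; simp [bsum]
  | succ k ih =>
    rcases Nat.eq_zero_or_pos C with h0 | hC
    · subst h0; simp [bsum]
    have hk : (2:ℕ)^(k+1) * C = 2 * (2^k * C) := by ring
    rw [hk]
    have htot : m + 2 * (2^k * C) ≠ 0 := by positivity
    rw [bsum_rec _ htot]
    have e1 : (m + 2 * (2^k * C)) % 2 = m % 2 := by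
      omega
    have e2 : (m + 2 * (2^k * C)) / 2 = m / 2 + 2^k * C := by
      omega
    rw [e1, e2, ih (m := m / 2) (C := C) (by omega)]
    rcases Nat.eq_zero_or_pos m with hm0 | hmpos
    · subst hm0; simp [bsum]
    · rw [bsum_rec m (by omega)]; omega

lemma bsum_two_pow (k : ℕ) : bsum (2^k) = 1 := by
  have h := bsum_shift (k := k) (m := 0) (C := 1) (by positivity)
  simpa [bsum] using h

lemma bsum_pow_pred (k : ℕ) : bsum (2^k - 1) = k := by
  induction k with
  | zero => simp [bsum]
  | succ k ih =>
    have h1 : (1:ℕ) ≤ 2^k := Nat.one_le_two_pow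
    have e : (2:ℕ)^(k+1) - 1 = (2^k - 1) + 2^k * 1 := by
      have h2 : (2:ℕ)^(k+1) = 2 * 2^k := by ring
      omega
    rw [e, bsum_shift (by omega)]
    simp [bsum, ih]

lemma bsum_sum_le {α : Type*} (t : Finset α) (g : α → ℕ) :
    bsum (∑ q ∈ t, g q) ≤ ∑ q ∈ t, bsum (g q) := by
  classical
  induction t using Finset.induction_on with
  | empty => simp [bsum]
  | insert _ _ hq ih =>
    rename_i q t'
    rw [Finset.sum_insert hq, Finset.sum_insert hq]
    exact le_trans (bsum_add_le _ _) (by omega)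

/-! ### base-B digit machinery -/

def dig (B j x : ℕ) : ℕ := x / B^j % B

def mk (B : ℕ) : (ℕ → ℕ) → ℕ → ℕ
  | _, 0 => 0
  | δ, (K+1) => δ 0 + B * mk B (fun j => δ (j+1)) K

lemma mk_zero (B : ℕ) (δ : ℕ → ℕ) : mk B δ 0 = 0 := rfl

lemma mk_succ (B : ℕ) (δ : ℕ → ℕ) (K : ℕ) :
    mk B δ (K+1) = δ 0 + B * mk B (fun j => δ (j+1)) K := rfl

lemma dig_lt {B : ℕ} (hB : 0 < B) (j x : ℕ) : dig B j x < B := Nat.mod_lt _ hB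

lemma dig_shift (B j x : ℕ) : dig B (j+1) x = dig B j (x / B) := by
  unfold dig
  rw [Nat.div_div_eq_div_mul, ← pow_succ']

lemma div_pow_eq (B j x : ℕ) : x / B^j = B * (x / B^(j+1)) + dig B j x := by
  unfold dig
  have h : x / B^(j+1) = (x / B^j) / B := by
    rw [Nat.div_div_eq_div_mul, ← pow_succ]
  rw [h]
  exact (Nat.div_add_mod (x / B^j) B).symm

lemma dig_eq_zero_of_lt {B j x : ℕ} (h : x < B^j) : dig B j x = 0 := by
  unfold dig
  rw [Nat.div_eq_of_lt h]
  simp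

lemma mk_lt {B : ℕ} (hB : 1 ≤ B) {δ : ℕ → ℕ} (hδ : ∀ j, δ j < B) (K : ℕ) :
    mk B δ K < B^K := by
  have H : ∀ K (δ : ℕ → ℕ), (∀ j, δ j < B) → mk B δ K + 1 ≤ B^K := by
    intro K
    induction K with
    | zero => intro δ hδ; simp [mk]
    | succ K ih =>
      intro δ hδ
      rw [mk_succ]
      have h1 := ih (fun j => δ (j+1)) (fun j => hδ (j+1))
      have h2 : δ 0 + 1 ≤ B := hδ 0
      calc δ 0 + B * mk B (fun j => δ (j+1)) K + 1
          ≤ B + B * mk B (fun j => δ (j+1)) K := by omega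
        _ = B * (mk B (fun j => δ (j+1)) K + 1) := by ring
        _ ≤ B * B^K := Nat.mul_le_mul_left B h1
        _ = B^(K+1) := by ring
  have := H K δ hδ
  omega

lemma dig_mk {B : ℕ} (hB : 2 ≤ B) {δ : ℕ → ℕ} (hδ : ∀ j, δ j < B) (K j : ℕ) :
    dig B j (mk B δ K) = if j < K then δ j else 0 := by
  induction K generalizing δ j with
  | zero => simp [mk_zero, dig]
  | succ K ih =>
    rw [mk_succ]
    cases j with
    | zero =>
      simp only [dig, pow_zero, Nat.div_one, if_pos (Nat.succ_pos K)]
      rw [Nat.add_mul_mod_self_left]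
      exact Nat.mod_eq_of_lt (hδ 0)
    | succ j =>
      rw [dig_shift]
      have e : (δ 0 + B * mk B (fun j => δ (j+1)) K) / B = mk B (fun j => δ (j+1)) K := by
        rw [Nat.add_mul_div_left _ _ (by omega : 0 < B), Nat.div_eq_of_lt (hδ 0)]
        omega
      rw [e, ih (fun j => hδ (j+1))]
      by_cases hj : j < K
      · rw [if_pos hj, if_pos (by omega)]
      · rw [if_neg hj, if_neg (by omega)]

lemma mk_self {B : ℕ} (hB : 2 ≤ B) {x K : ℕ} (hx : x < B^K) :
    mk B (fun j => dig B j x) K = x := by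
  induction K generalizing x with
  | zero => simp at hx; simp [hx, mk_zero]
  | succ K ih =>
    rw [mk_succ]
    have e : (fun j => dig B (j+1) x) = (fun j => dig B j (x / B)) := by
      funext j; exact dig_shift B j x
    rw [e, ih (by
      rw [Nat.div_lt_iff_lt_mul (by omega : 0 < B)]
      calc x < B^(K+1) := hx
        _ = B^K * B := by ring)]
    simp only [dig, pow_zero, Nat.div_one]
    exact Nat.mod_add_div x B

lemma mk_congr {B K : ℕ} {δ ε : ℕ → ℕ} (h : ∀ j < K, δ j = ε j) :
    mk B δ K = mk B ε K := by
  induction K generalizing δ ε with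
  | zero => rfl
  | succ K ih =>
    rw [mk_succ, mk_succ, h 0 (by omega), ih (fun j hj => h (j+1) (by omega))]

lemma mk_add (B K : ℕ) (δ ε : ℕ → ℕ) :
    mk B δ K + mk B ε K = mk B (fun j => δ j + ε j) K := by
  induction K generalizing δ ε with
  | zero => rfl
  | succ K ih =>
    rw [mk_succ, mk_succ, mk_succ, ← ih]
    ring

lemma mk_zero_fun (B K : ℕ) : mk B (fun _ => 0) K = 0 := by
  induction K with
  | zero => rfl
  | succ K ih => rw [mk_succ, ih]; ring

lemma mk_sum {α : Type*} (B K : ℕ) (t : Finset α) (δ : α → ℕ → ℕ) :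
    ∑ c ∈ t, mk B (δ c) K = mk B (fun j => ∑ c ∈ t, δ c j) K := by
  classical
  induction t using Finset.induction_on with
  | empty => simp [mk_zero_fun]
  | insert _ _ hq ih =>
    rename_i q t'
    rw [Finset.sum_insert hq, ih, mk_add]
    apply mk_congr
    intro j _
    rw [Finset.sum_insert hq]

lemma mk_single (B K j₀ w : ℕ) (hj : j₀ < K) :
    mk B (fun j => if j = j₀ then w else 0) K = w * B^j₀ := by
  induction K generalizing j₀ with
  | zero => omega
  | succ K ih =>
    rw [mk_succ]
    cases j₀ with
    | zero =>
      have e : (fun j => if j + 1 = 0 then w else 0) = (fun _ : ℕ => 0) := by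
        funext j; simp
      simp [e, mk_zero_fun]
    | succ j₀ =>
      have e : (fun j => if j + 1 = j₀ + 1 then w else 0) = (fun j => if j = j₀ then w else 0) := by
        funext j; simp
      rw [e, ih j₀ (by omega)]
      simp [pow_succ]
      ring

lemma dig_mul_pow_le (B j x : ℕ) : dig B j x * B^j ≤ x := by
  calc dig B j x * B^j ≤ (x / B^j) * B^j :=
        Nat.mul_le_mul_right _ (Nat.mod_le _ _)
    _ ≤ x := Nat.div_mul_le_self x _

lemma eq_of_dig {B K x y : ℕ} (hB : 2 ≤ B) (hx : x < B^K) (hy : y < B^K)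
    (hd : ∀ j < K, dig B j x = dig B j y) : x = y := by
  rw [← mk_self hB hx, ← mk_self hB hy]
  exact mk_congr hd

lemma sum_div_le {α : Type*} (t : Finset α) (u : α → ℕ) {m : ℕ} (hm : 0 < m) :
    ∑ q ∈ t, u q / m ≤ (∑ q ∈ t, u q) / m := by
  rw [Nat.le_div_iff_mul_le hm, Finset.sum_mul]
  exact Finset.sum_le_sum fun q _ => Nat.div_mul_le_self _ _
/-! ### the set A and the basis property -/

def Aset (h : ℕ) : Set ℕ :=
  {x | 1 ≤ x ∧ ∃ c < h, ∀ j, dig (2^h) j x = 0 ∨ dig (2^h) j x = 2^c}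

lemma two_le_B {h : ℕ} (hh : 1 ≤ h) : 2 ≤ 2^h := by
  calc (2:ℕ) = 2^1 := (pow_one 2).symm
    _ ≤ 2^h := Nat.pow_le_pow_right (by omega) hh

lemma pow_lt_B {h c : ℕ} (hc : c < h) : 2^c < 2^h :=
  Nat.pow_lt_pow_right one_lt_two hc

lemma lt_B_pow_self {h : ℕ} (hh : 1 ≤ h) (x : ℕ) : x < (2^h)^(x+1) := by
  calc x < 2^x := Nat.lt_two_pow_self
    _ ≤ 2^(h*(x+1)) := Nat.pow_le_pow_right (by omega) (by nlinarith)
    _ = (2^h)^(x+1) := by rw [← pow_mul]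

lemma two_pow_mem_Aset {h : ℕ} (hh : 1 ≤ h) (p : ℕ) : 2^p ∈ Aset h := by
  have hB : 2 ≤ 2^h := two_le_B hh
  set c := p % h with hcdef
  set j₀ := p / h with hjdef
  have hc : c < h := Nat.mod_lt _ (by omega)
  have hval : (2:ℕ)^p = 2^c * (2^h)^j₀ := by
    rw [← pow_mul, ← pow_add]
    congr 1
    rw [hcdef, hjdef]
    exact (Nat.mod_add_div p h).symm
  have hδ : ∀ j, (if j = j₀ then 2^c else 0) < 2^h := by
    intro j
    by_cases hj : j = j₀
    · simpa [hj] using pow_lt_B hc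
    · simp only [hj, if_false]
      positivity
  have hmk : mk (2^h) (fun j => if j = j₀ then 2^c else 0) (j₀+1) = 2^c * (2^h)^j₀ :=
    mk_single _ _ _ _ (by omega)
  refine ⟨Nat.one_le_two_pow, c, hc, ?_⟩
  intro j
  rw [hval, ← hmk, dig_mk hB hδ]
  by_cases hj : j < j₀ + 1 <;> simp [hj]
  by_cases hj2 : j = j₀ <;> simp [hj2]

lemma sum_bits : ∀ (h m : ℕ), m < 2^h → ∑ c ∈ Finset.range h, (m / 2^c % 2) * 2^c = m := by
  intro h
  induction h with
  | zero => intro m hm; interval_cases m <;> simp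
  | succ h ih =>
    intro m hm
    rw [Finset.sum_range_succ']
    have e : ∀ c, m / 2^(c+1) % 2 * 2^(c+1) = ((m/2) / 2^c % 2 * 2^c) * 2 := by
      intro c
      have e1 : m / 2^(c+1) = (m/2) / 2^c := by
        rw [Nat.div_div_eq_div_mul, ← pow_succ']
      rw [e1, pow_succ]
      ring
    rw [Finset.sum_congr rfl (fun c _ => e c), ← Finset.sum_mul]
    rw [ih (m/2) (by
      have : (2:ℕ)^(h+1) = 2^h * 2 := pow_succ 2 h
      omega)]
    simp
    omega

/-- the class-c slice of n -/
def aslice (h n c : ℕ) : ℕ :=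
  mk (2^h) (fun j => (dig (2^h) j n / 2^c % 2) * 2^c) (n+1)

lemma aslice_dlt {h c : ℕ} (hh : 1 ≤ h) (hc : c < h) (w : ℕ) :
    ∀ j : ℕ, (dig (2^h) j w / 2^c % 2) * 2^c < 2^h := by
  intro j
  have h1 : dig (2^h) j w / 2^c % 2 ≤ 1 := by omega
  have h2 : (2:ℕ)^c < 2^h := pow_lt_B hc
  calc (dig (2^h) j w / 2^c % 2) * 2^c ≤ 1 * 2^c := Nat.mul_le_mul_right _ h1
    _ = 2^c := one_mul _
    _ < 2^h := h2

lemma aslice_sum {h n : ℕ} (hh : 1 ≤ h) : ∑ c ∈ Finset.range h, aslice h n c = n := by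
  have hB : 2 ≤ 2^h := two_le_B hh
  unfold aslice
  rw [mk_sum]
  have e : ∀ j, (∑ c ∈ Finset.range h, (dig (2^h) j n / 2^c % 2) * 2^c) = dig (2^h) j n := by
    intro j
    exact sum_bits h _ (dig_lt (by omega) j n)
  calc mk (2^h) (fun j => ∑ c ∈ Finset.range h, (dig (2^h) j n / 2^c % 2) * 2^c) (n+1)
      = mk (2^h) (fun j => dig (2^h) j n) (n+1) := mk_congr (fun j _ => e j)
    _ = n := mk_self hB (lt_B_pow_self hh n)

lemma aslice_mem {h n c : ℕ} (hh : 1 ≤ h) (hc : c < h) (hnz : aslice h n c ≠ 0) :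
    aslice h n c ∈ Aset h := by
  have hB : 2 ≤ 2^h := two_le_B hh
  refine ⟨by omega, c, hc, ?_⟩
  intro j
  unfold aslice
  rw [dig_mk hB (aslice_dlt hh hc n)]
  by_cases hj : j < n + 1
  · rw [if_pos hj]
    rcases Nat.lt_or_ge (dig (2^h) j n / 2^c % 2) 1 with h1 | h1
    · left
      have hb : dig (2^h) j n / 2^c % 2 = 0 := by omega
      rw [hb, zero_mul]
    · right
      have : dig (2^h) j n / 2^c % 2 = 1 := by omega
      rw [this, one_mul]
  · rw [if_neg hj]; left; rfl

lemma split_mem {h : ℕ} (hh : 1 ≤ h) {x : ℕ} (hx : x ∈ Aset h) (h2 : 2 ≤ x) :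
    ∃ u ∈ Aset h, ∃ v ∈ Aset h, u + v = x := by
  classical
  have hB : 2 ≤ 2^h := two_le_B hh
  obtain ⟨hx1, c, hc, hdig⟩ := hx
  set B := 2^h with hBdef
  set K := x + 1 with hKdef
  have hxK : x < B^K := lt_B_pow_self hh x
  have hex : ∃ j, dig B j x ≠ 0 := by
    by_contra hall
    push_neg at hall
    have : x = 0 := by
      refine eq_of_dig hB hxK (by positivity) ?_
      intro j _
      rw [hall j]
      simp [dig]
    omega
  obtain ⟨j₁, hj₁⟩ := hex
  have hj₁K : j₁ < K := by
    by_contra hge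
    exact hj₁ (dig_eq_zero_of_lt (lt_of_lt_of_le hxK (Nat.pow_le_pow_right (by omega) (by omega))))
  have hdig₁ : dig B j₁ x = 2^c := (hdig j₁).resolve_left hj₁
  by_cases hone : ∃ j', j' ≠ j₁ ∧ dig B j' x ≠ 0
  · -- at least two nonzero digits
    obtain ⟨j', hj'ne, hj'⟩ := hone
    have hj'K : j' < K := by
      by_contra hge
      exact hj' (dig_eq_zero_of_lt (lt_of_lt_of_le hxK (Nat.pow_le_pow_right (by omega) (by omega))))
    set u := mk B (fun j => if j = j₁ then 2^c else 0) K with hudef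
    set v := mk B (fun j => if j = j₁ then 0 else dig B j x) K with hvdef
    have hδu : ∀ j, (if j = j₁ then 2^c else 0) < B := by
      intro j
      by_cases hj : j = j₁
      · simpa [hj] using pow_lt_B hc
      · simp only [hj, if_false]; omega
    have hδv : ∀ j, (if j = j₁ then 0 else dig B j x) < B := by
      intro j
      by_cases hj : j = j₁
      · simp only [hj, if_true]; omega
      · simp only [hj, if_false]; exact dig_lt (by omega) _ _
    have huv : u + v = x := by
      rw [hudef, hvdef, mk_add]
      have : mk B (fun j => (if j = j₁ then 2^c else 0) + (if j = j₁ then 0 else dig B j x)) K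
          = mk B (fun j => dig B j x) K := by
        apply mk_congr
        intro j _
        by_cases hj : j = j₁
        · simp [hj, hdig₁]
        · simp [hj]
      rw [this, mk_self hB hxK]
    have humem : u ∈ Aset h := by
      constructor
      · rw [hudef, mk_single _ _ _ _ hj₁K]
        have h0 : 0 < 2^c * B^j₁ := by positivity
        omega
      · exact ⟨c, hc, fun j => by
          rw [hudef, dig_mk hB hδu]
          by_cases hj : j < K
          · rw [if_pos hj]
            by_cases hj2 : j = j₁
            · right; simp [hj2]
            · left; simp [hj2]
          · left; rw [if_neg hj]⟩
    have hvmem : v ∈ Aset h := by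
      constructor
      · have : dig B j' v ≠ 0 := by
          rw [hvdef, dig_mk hB hδv, if_pos hj'K, if_neg hj'ne]
          exact hj'
        rcases Nat.eq_zero_or_pos v with h0 | h1
        · exfalso; apply this; rw [h0]; simp [dig]
        · omega
      · exact ⟨c, hc, fun j => by
          rw [hvdef, dig_mk hB hδv]
          by_cases hj : j < K
          · rw [if_pos hj]
            by_cases hj2 : j = j₁
            · left; simp [hj2]
            · simp only [hj2, if_false]; exact hdig j
          · left; rw [if_neg hj]⟩
    exact ⟨u, humem, v, hvmem, huv⟩
  · -- x is a single power of two
    push_neg at hone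
    have hxval : x = 2^(c + h * j₁) := by
      have e1 : x = mk B (fun j => dig B j x) K := (mk_self hB hxK).symm
      have e2 : mk B (fun j => dig B j x) K = mk B (fun j => if j = j₁ then 2^c else 0) K := by
        apply mk_congr
        intro j _
        by_cases hj : j = j₁
        · simp [hj, hdig₁]
        · simp only [hj, if_false]
          by_contra hne
          exact hne (hone j hj)
      rw [e1, e2, mk_single _ _ _ _ hj₁K, hBdef, ← pow_mul, ← pow_add]
    have hp : 1 ≤ c + h * j₁ := by
      by_contra hp0
      have : c = 0 ∧ h * j₁ = 0 := by omega
      rw [hxval, this.1, this.2] at h2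
      simp at h2
    refine ⟨2^(c + h * j₁ - 1), two_pow_mem_Aset hh _, 2^(c + h * j₁ - 1), two_pow_mem_Aset hh _, ?_⟩
    rw [hxval]
    have e : (2:ℕ)^(c + h * j₁) = 2 * 2^(c + h * j₁ - 1) := by
      conv_lhs => rw [show c + h * j₁ = (c + h * j₁ - 1) + 1 by omega]
      rw [pow_succ]
      ring
    omega

lemma list_sum_ones {L : List ℕ} (h1 : ∀ x ∈ L, x = 1) : L.sum = L.length := by
  induction L with
  | nil => rfl
  | cons a t ih =>
    rw [List.sum_cons, h1 a (by simp), ih (fun x hx => h1 x (by simp [hx]))]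
    simp [List.length_cons]
    omega

lemma list_fin_sum {h : ℕ} (L : List ℕ) (hlen : L.length = h) :
    ∃ f : Fin h → ℕ, (∀ q, f q ∈ L) ∧ ∑ q, f q = L.sum := by
  subst hlen
  refine ⟨L.get, fun q => by simpa using List.get_mem L q.1 q.2, ?_⟩
  rw [← List.sum_ofFn, List.ofFn_get]

lemma pad_list {h n : ℕ} (hh : 1 ≤ h) (hn : h ≤ n) :
    ∀ (m : ℕ) (L : List ℕ), h - L.length = m → (∀ x ∈ L, x ∈ Aset h) → L.sum = n →
      L.length ≤ h → 1 ≤ L.length →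
      ∃ f : Fin h → ℕ, (∀ q, f q ∈ Aset h) ∧ ∑ q, f q = n := by
  intro m
  induction m using Nat.strong_induction_on with
  | _ m ih =>
    intro L hm hmem hsum hle hpos
    by_cases hfull : L.length = h
    · obtain ⟨f, hf1, hf2⟩ := list_fin_sum L hfull
      exact ⟨f, fun q => hmem _ (hf1 q), by rw [hf2, hsum]⟩
    · have hlt : L.length < h := by omega
      have hex : ∃ x ∈ L, 2 ≤ x := by
        by_contra hall
        push_neg at hall
        have h1 : ∀ x ∈ L, x = 1 := by
          intro x hx
          have := (hmem x hx).1
          have := hall x hx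
          omega
        have := list_sum_ones h1
        omega
      obtain ⟨x, hxL, hx2⟩ := hex
      obtain ⟨u, hu, v, hv, huv⟩ := split_mem hh (hmem x hxL) hx2
      set L' := u :: v :: L.erase x with hL'def
      have herase_len : (L.erase x).length = L.length - 1 := List.length_erase_of_mem hxL
      have herase_sum : x + (L.erase x).sum = L.sum := by
        have hperm := List.perm_cons_erase hxL
        rw [hperm.sum_eq, List.sum_cons]
      have hlen' : L'.length = L.length + 1 := by
        rw [hL'def]
        simp [List.length_cons, herase_len]
        omega
      refine ih (m - 1) (by omega) L' (by omega) ?_ ?_ (by omega) (by rw [hL'def]; simp)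
      · intro y hy
        rw [hL'def] at hy
        rcases List.mem_cons.mp hy with h1 | hy
        · rw [h1]; exact hu
        rcases List.mem_cons.mp hy with h1 | hy
        · rw [h1]; exact hv
        · exact hmem y (List.mem_of_mem_erase hy)
      · rw [hL'def]
        rw [List.sum_cons, List.sum_cons]
        omega

lemma filter_ne_zero_sum (L : List ℕ) : (L.filter (fun z => z != 0)).sum = L.sum := by
  induction L with
  | nil => rfl
  | cons a t ih =>
    by_cases ha : a = 0
    · subst ha; simpa [List.filter_cons] using ih
    · have hb : (a != 0) = true := by simpa using ha
      rw [List.filter_cons, if_pos hb, List.sum_cons, List.sum_cons, ih]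

lemma list_range_map_sum (f : ℕ → ℕ) (k : ℕ) :
    ((List.range k).map f).sum = ∑ c ∈ Finset.range k, f c := by
  induction k with
  | zero => rfl
  | succ k ih =>
    rw [List.range_succ, List.map_append, List.sum_append, Finset.sum_range_succ, ih]
    simp

lemma exists_rep {h n : ℕ} (hh : 2 ≤ h) (hn : h ≤ n) :
    ∃ f : Fin h → ℕ, (∀ q, f q ∈ Aset h) ∧ ∑ q, f q = n := by
  classical
  set L₀ := ((List.range h).map (aslice h n)).filter (fun z => z != 0) with hL₀
  have hsum : L₀.sum = n := by
    rw [hL₀, filter_ne_zero_sum, list_range_map_sum]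
    exact aslice_sum (by omega)
  have hmem : ∀ x ∈ L₀, x ∈ Aset h := by
    intro x hx
    rw [hL₀] at hx
    obtain ⟨hx1, hx2⟩ := List.mem_filter.mp hx
    obtain ⟨c, hc, hcx⟩ := List.mem_map.mp hx1
    have hc' : c < h := List.mem_range.mp hc
    have hxne : x ≠ 0 := by simpa using hx2
    rw [← hcx]
    exact aslice_mem (by omega) hc' (by rw [hcx]; exact hxne)
  have hlen : L₀.length ≤ h := by
    calc L₀.length ≤ ((List.range h).map (aslice h n)).length := List.length_filter_le _ _
      _ = h := by simp
  have hpos : 1 ≤ L₀.length := by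
    rcases Nat.eq_zero_or_pos L₀.length with h0 | h1
    · exfalso
      have : L₀ = [] := List.eq_nil_of_length_eq_zero h0
      rw [this] at hsum
      simp at hsum
      omega
    · exact h1
  exact pad_list (by omega) hn (h - L₀.length) L₀ rfl hmem hsum hlen hpos

/-! ### the forcing lemma -/

lemma geo_two (k : ℕ) : ∑ j ∈ Finset.range k, 2^j = 2^k - 1 := by
  induction k with
  | zero => simp
  | succ k ih =>
    rw [Finset.sum_range_succ, ih]
    have h1 : (1:ℕ) ≤ 2^k := Nat.one_le_two_pow
    have h2 : (2:ℕ)^(k+1) = 2^k * 2 := pow_succ 2 k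
    omega

lemma force {h : ℕ} (d c : Fin h → ℕ) (hc : ∀ q, c q < h)
    (hd : ∀ q, d q = 0 ∨ d q = 2^(c q)) (hs : h ≤ bsum (∑ q, d q)) :
    (∀ q, d q = 2^(c q)) ∧ Function.Injective c ∧ (∑ q, d q = 2^h - 1) := by
  classical
  have h1 : ∀ q, bsum (d q) ≤ 1 := by
    intro q
    rcases hd q with h0 | hp
    · rw [h0, bsum_zero]; omega
    · rw [hp, bsum_two_pow]
  have h2 : bsum (∑ q, d q) ≤ ∑ q, bsum (d q) := bsum_sum_le _ _
  have h3 : ∑ q, bsum (d q) ≤ h := by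
    calc ∑ q, bsum (d q) ≤ (Finset.univ : Finset (Fin h)).card • 1 :=
          Finset.sum_le_card_nsmul _ _ 1 (fun q _ => h1 q)
      _ = h := by simp
  have hall1 : ∀ q, bsum (d q) = 1 := by
    intro q₀
    by_contra hne
    have hh1 : 0 < h := q₀.pos
    have hq0 : bsum (d q₀) = 0 := by have := h1 q₀; omega
    have hrest : ∑ q ∈ Finset.univ.erase q₀, bsum (d q) ≤ h - 1 := by
      calc ∑ q ∈ Finset.univ.erase q₀, bsum (d q)
          ≤ (Finset.univ.erase q₀).card • 1 := Finset.sum_le_card_nsmul _ _ 1 (fun q _ => h1 q)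
        _ = h - 1 := by simp [Finset.card_erase_of_mem]
    have hsplit : bsum (d q₀) + ∑ q ∈ Finset.univ.erase q₀, bsum (d q) = ∑ q, bsum (d q) :=
      Finset.add_sum_erase Finset.univ (fun q => bsum (d q)) (Finset.mem_univ q₀)
    omega
  have dall : ∀ q, d q = 2^(c q) := by
    intro q
    rcases hd q with h0 | hp
    · exfalso; have := hall1 q; rw [h0, bsum_zero] at this; omega
    · exact hp
  have hinj : Function.Injective c := by
    intro q1 q2 heq
    by_contra hne
    have hmem2 : q2 ∈ Finset.univ.erase q1 := Finset.mem_erase.mpr ⟨fun hcon => hne hcon.symm, Finset.mem_univ _⟩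
    have hsplit1 : d q1 + ∑ q ∈ Finset.univ.erase q1, d q = ∑ q, d q :=
      Finset.add_sum_erase _ _ (Finset.mem_univ q1)
    have hsplit2 : d q2 + ∑ q ∈ (Finset.univ.erase q1).erase q2, d q
        = ∑ q ∈ Finset.univ.erase q1, d q :=
      Finset.add_sum_erase _ _ hmem2
    have hcard : ((Finset.univ.erase q1).erase q2).card = h - 2 := by
      rw [Finset.card_erase_of_mem hmem2, Finset.card_erase_of_mem (Finset.mem_univ q1)]
      simp only [Finset.card_univ, Fintype.card_fin]
      omega
    have hpair : bsum (d q1 + d q2) = 1 := by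
      rw [dall q1, dall q2, heq, ← two_mul, ← pow_succ']
      exact bsum_two_pow _
    have hbrest : bsum (∑ q ∈ (Finset.univ.erase q1).erase q2, d q) ≤ h - 2 := by
      calc bsum (∑ q ∈ (Finset.univ.erase q1).erase q2, d q)
          ≤ ∑ q ∈ (Finset.univ.erase q1).erase q2, bsum (d q) := bsum_sum_le _ _
        _ ≤ ((Finset.univ.erase q1).erase q2).card • 1 :=
            Finset.sum_le_card_nsmul _ _ 1 (fun q _ => h1 q)
        _ = h - 2 := by rw [hcard]; simp
    have htot : bsum (∑ q, d q) ≤ h - 1 := by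
      have e : ∑ q, d q = (d q1 + d q2) + ∑ q ∈ (Finset.univ.erase q1).erase q2, d q := by
        omega
      rw [e]
      calc bsum ((d q1 + d q2) + ∑ q ∈ (Finset.univ.erase q1).erase q2, d q)
          ≤ bsum (d q1 + d q2) + bsum (∑ q ∈ (Finset.univ.erase q1).erase q2, d q) :=
            bsum_add_le _ _
        _ ≤ 1 + (h - 2) := by omega
        _ ≤ h - 1 := by
            have hq1 : q1 ∈ Finset.univ.erase q2 := by
              exact Finset.mem_erase.mpr ⟨hne, Finset.mem_univ _⟩
            have : 2 ≤ h := by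
              have := hc q1
              have := hc q2
              rcases Nat.lt_or_ge h 2 with hlt | hge
              · interval_cases h
                · omega
                · exact absurd (Subsingleton.elim q1 q2) hne
              · exact hge
            omega
    omega
  refine ⟨dall, hinj, ?_⟩
  have e : (fun q : Fin h => (⟨c q, hc q⟩ : Fin h)) = fun q => ⟨c q, hc q⟩ := rfl
  have einj : Function.Injective (fun q : Fin h => (⟨c q, hc q⟩ : Fin h)) := by
    intro a b hab
    apply hinj
    simpa [Fin.mk.injEq] using hab
  have ebij : Function.Bijective (fun q : Fin h => (⟨c q, hc q⟩ : Fin h)) :=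
    Finite.injective_iff_bijective.mp einj
  calc ∑ q, d q = ∑ q, (fun t : Fin h => 2^(t:ℕ)) ((fun q : Fin h => (⟨c q, hc q⟩ : Fin h)) q) := by
        apply Finset.sum_congr rfl
        intro q _
        simp [dall q]
    _ = ∑ t : Fin h, 2^(t:ℕ) := by
        have := ebij.sum_comp (fun t : Fin h => 2^(t:ℕ))
        simpa using this
    _ = ∑ j ∈ Finset.range h, 2^j := Fin.sum_univ_eq_sum_range _ _
    _ = 2^h - 1 := geo_two h

/-! ### the digit constant D -/

def Dconst (h i : ℕ) : ℕ := (2^i - 1) + 2^(i+1) * (2^(h-1-i) - 1)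

lemma D_add {h i : ℕ} (hi : i < h) : Dconst h i + 2^i + 1 = 2^h := by
  unfold Dconst
  obtain ⟨y, hy⟩ : ∃ y, 2^(h-1-i) = y + 1 :=
    ⟨2^(h-1-i) - 1, by have : (1:ℕ) ≤ 2^(h-1-i) := Nat.one_le_two_pow; omega⟩
  have e2 : 2^(i+1) * 2^(h-1-i) = 2^h := by
    rw [← pow_add]; congr 1; omega
  rw [hy] at e2 ⊢
  simp only [Nat.add_sub_cancel]
  have e3 : (2:ℕ)^(i+1) = 2 * 2^i := by ring
  have e4 : (1:ℕ) ≤ 2^i := Nat.one_le_two_pow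
  set A := (2:ℕ)^i with hA
  set Y := (2:ℕ)^(i+1) * y with hY
  have e5 : (2:ℕ)^(i+1) * (y+1) = Y + 2 * A := by rw [Nat.mul_add, hY, e3]; ring
  omega

lemma D_bsum {h i : ℕ} (hi : i < h) : bsum (Dconst h i) = h - 1 := by
  unfold Dconst
  have hm : (2:ℕ)^i - 1 < 2^(i+1) := by
    have h1 : (1:ℕ) ≤ 2^i := Nat.one_le_two_pow
    have h2 : (2:ℕ)^(i+1) = 2 * 2^i := by ring
    omega
  rw [bsum_shift hm, bsum_pow_pred, bsum_pow_pred]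
  omega

lemma D_pos {h i : ℕ} (hh : 2 ≤ h) (hi : i < h) : 1 ≤ Dconst h i := by
  rcases Nat.eq_zero_or_pos (Dconst h i) with h0 | h1
  · exfalso
    have := D_bsum hi
    rw [h0, bsum_zero] at this
    omega
  · exact h1

lemma D_bsum_full {h i : ℕ} (hi : i < h) : bsum (2^i + Dconst h i) = h := by
  have e : 2^i + Dconst h i = 2^h - 1 := by
    have hDA := D_add hi
    generalize hD : Dconst h i = DD at hDA ⊢
    generalize h1 : (2:ℕ)^i = P at hDA ⊢
    generalize h2 : (2:ℕ)^h = Q at hDA ⊢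
    omega
  rw [e, bsum_pow_pred]

/-! ### the witness numbers -/

def witness (h i a J : ℕ) : ℕ :=
  mk (2^h) (fun j => if j < J then dig (2^h) j a + Dconst h i else 0) J

lemma low_unique {m a b s t : ℕ} (ha : a < m) (hb : b < m) (h : a + m * s = b + m * t) :
    a = b := by
  have h1 : (a + m * s) % m = a := by rw [Nat.add_mul_mod_self_left, Nat.mod_eq_of_lt ha]
  have h2 : (b + m * t) % m = b := by rw [Nat.add_mul_mod_self_left, Nat.mod_eq_of_lt hb]
  rw [← h1, h, h2]

section Rigid

variable {h a i J : ℕ}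

lemma wit_δlt (hh : 2 ≤ h) (hi : i < h)
    (hadig : ∀ j, dig (2^h) j a = 0 ∨ dig (2^h) j a = 2^i) :
    ∀ j, (if j < J then dig (2^h) j a + Dconst h i else 0) < 2^h := by
  intro j
  have hDA := D_add hi
  generalize hg0 : Dconst h i = DD at hDA ⊢
  have h1i : (1:ℕ) ≤ 2^i := Nat.one_le_two_pow
  by_cases hj : j < J
  · simp only [hj, if_true]
    rcases hadig j with h0 | h2i
    · rw [h0]
      generalize (2:ℕ)^i = P at hDA h1i
      generalize (2:ℕ)^h = Q at hDA
      omega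
    · rw [h2i]
      generalize (2:ℕ)^i = P at hDA h1i
      generalize (2:ℕ)^h = Q at hDA
      omega
  · simp only [hj, if_false]
    positivity

lemma wit_dig (hh : 2 ≤ h) (hi : i < h)
    (hadig : ∀ j, dig (2^h) j a = 0 ∨ dig (2^h) j a = 2^i) (j : ℕ) :
    dig (2^h) j (witness h i a J) = if j < J then dig (2^h) j a + Dconst h i else 0 := by
  unfold witness
  rw [dig_mk (two_le_B (by omega)) (wit_δlt hh hi hadig)]
  by_cases hj : j < J <;> simp [hj]

lemma wit_lt (hh : 2 ≤ h) (hi : i < h)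
    (hadig : ∀ j, dig (2^h) j a = 0 ∨ dig (2^h) j a = 2^i) :
    witness h i a J < (2^h)^J := by
  unfold witness
  exact mk_lt Nat.one_le_two_pow (wit_δlt hh hi hadig) J

lemma rigid (hh : 2 ≤ h) (hi : i < h) (ha1 : 1 ≤ a)
    (hadig : ∀ j, dig (2^h) j a = 0 ∨ dig (2^h) j a = 2^i)
    (haJ : a < (2^h)^J)
    (x : Fin h → ℕ) (hx : ∀ q, x q ∈ Aset h)
    (hsum : ∑ q, x q = witness h i a J) :
    ∃ q, x q = a := by
  classical
  have hB : 2 ≤ 2^h := two_le_B (by omega)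
  have hB0 : (0:ℕ) < 2^h := by omega
  have hDA := D_add hi
  have h1i : (1:ℕ) ≤ 2^i := Nat.one_le_two_pow
  set N := witness h i a J with hNdef
  have hNlt : N < (2^h)^J := wit_lt hh hi hadig
  have hdigN : ∀ j, dig (2^h) j N = if j < J then dig (2^h) j a + Dconst h i else 0 :=
    wit_dig hh hi hadig
  choose c hcl hcd using fun q => (hx q).2
  -- carry induction
  have key : ∀ j, j ≤ J → ∑ q, x q / (2^h)^j = N / (2^h)^j := by
    intro j
    induction j with
    | zero => intro _; simpa using hsum
    | succ j ih =>
      intro hj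
      have hjJ : j < J := by omega
      have hPj := ih (by omega)
      have hle : ∑ q, x q / (2^h)^(j+1) ≤ N / (2^h)^(j+1) := by
        calc ∑ q, x q / (2^h)^(j+1) ≤ (∑ q, x q) / (2^h)^(j+1) :=
              sum_div_le _ _ (by positivity)
          _ = N / (2^h)^(j+1) := by rw [hsum]
      obtain ⟨C, hC⟩ : ∃ C, N / (2^h)^(j+1) = (∑ q, x q / (2^h)^(j+1)) + C :=
        ⟨N / (2^h)^(j+1) - ∑ q, x q / (2^h)^(j+1), by omega⟩
      have hsx : ∑ q, x q / (2^h)^j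
          = 2^h * (∑ q, x q / (2^h)^(j+1)) + ∑ q, dig (2^h) j (x q) := by
        rw [Finset.mul_sum, ← Finset.sum_add_distrib]
        exact Finset.sum_congr rfl (fun q _ => div_pow_eq _ j (x q))
      have hcolN : N / (2^h)^j = 2^h * (N / (2^h)^(j+1)) + dig (2^h) j N :=
        div_pow_eq _ j N
      have hσ : ∑ q, dig (2^h) j (x q) = dig (2^h) j N + 2^h * C := by
        have h1 := hPj
        rw [hsx, hcolN, hC, Nat.mul_add] at h1
        generalize hg1 : 2^h * (∑ q, x q / (2^h)^(j+1)) = t1 at h1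
        generalize hg2 : 2^h * C = t2 at h1
        omega
      rcases Nat.eq_zero_or_pos C with hC0 | hCpos
      · rw [hC0, add_zero] at hC
        rw [hC]
      exfalso
      have hdigNj : dig (2^h) j N = dig (2^h) j a + Dconst h i := by
        rw [hdigN j]; simp [hjJ]
      have hdNlt : dig (2^h) j N < 2^h := dig_lt hB0 _ _
      have hshift : bsum (dig (2^h) j N + 2^h * C) = bsum (dig (2^h) j N) + bsum C :=
        bsum_shift hdNlt
      have hbσle : bsum (∑ q, dig (2^h) j (x q)) ≤ h := by
        calc bsum (∑ q, dig (2^h) j (x q)) ≤ ∑ q, bsum (dig (2^h) j (x q)) :=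
              bsum_sum_le _ _
          _ ≤ (Finset.univ : Finset (Fin h)).card • 1 :=
              Finset.sum_le_card_nsmul _ _ 1 (fun q _ => by
                rcases hcd q j with h0 | hp
                · rw [h0, bsum_zero]; omega
                · rw [hp, bsum_two_pow])
          _ = h := by simp
      have hbC : 1 ≤ bsum C := by
        have := bsum_ne_zero C (by omega)
        omega
      rcases hadig j with h0 | h2i
      · have hbdN : bsum (dig (2^h) j N) = h - 1 := by
          rw [hdigNj, h0, zero_add]; exact D_bsum hi
        have hble : h ≤ bsum (∑ q, dig (2^h) j (x q)) := by
          rw [hσ, hshift, hbdN]; omega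
        obtain ⟨-, -, hval⟩ := force (fun q => dig (2^h) j (x q)) c hcl (fun q => hcd q j) hble
        rw [hσ, hdigNj, h0, zero_add] at hval
        -- hval : Dconst h i + 2^h * C = 2^h - 1
        have hBC : 2^h * 1 ≤ 2^h * C := Nat.mul_le_mul_left _ hCpos
        generalize hg0 : Dconst h i = DD at hval hDA
        generalize hg3 : 2^h * C = t at hval hBC
        generalize hg4 : (2:ℕ)^h = P at hval hBC hDA
        generalize hg5 : (2:ℕ)^i = Q at hDA h1i
        omega
      · have hbdN : bsum (dig (2^h) j N) = h := by
          rw [hdigNj, h2i]; exact D_bsum_full hi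
        have hcontr : bsum (∑ q, dig (2^h) j (x q)) = h + bsum C := by
          rw [hσ, hshift, hbdN]
        omega
  -- all parts below B^J
  have hxJlt : ∀ q, x q < (2^h)^J := by
    intro q
    have hKJ := key J le_rfl
    rw [Nat.div_eq_of_lt hNlt] at hKJ
    have hq0 : x q / (2^h)^J = 0 :=
      Finset.sum_eq_zero_iff.mp hKJ q (Finset.mem_univ q)
    by_contra hge
    push_neg at hge
    have : 1 ≤ x q / (2^h)^J := (Nat.one_le_div_iff (by positivity)).mpr hge
    omega
  -- column values
  have hcols : ∀ j, j < J → ∑ q, dig (2^h) j (x q) = dig (2^h) j N := by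
    intro j hjJ
    have h1 := key j (by omega)
    have h2 := key (j+1) (by omega)
    have hsx : ∑ q, x q / (2^h)^j
        = 2^h * (∑ q, x q / (2^h)^(j+1)) + ∑ q, dig (2^h) j (x q) := by
      rw [Finset.mul_sum, ← Finset.sum_add_distrib]
      exact Finset.sum_congr rfl (fun q _ => div_pow_eq _ j (x q))
    have hcolN : N / (2^h)^j = 2^h * (N / (2^h)^(j+1)) + dig (2^h) j N :=
      div_pow_eq _ j N
    rw [hsx, hcolN, ← h2] at h1
    generalize hg1 : 2^h * (∑ q, x q / (2^h)^(j+1)) = t1 at h1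
    omega
  -- top digit of a
  obtain ⟨j₁, hj₁⟩ : ∃ j, dig (2^h) j a ≠ 0 := by
    by_contra hall
    push_neg at hall
    have : a = 0 := by
      refine eq_of_dig hB haJ (by positivity) ?_
      intro j _
      rw [hall j]
      simp [dig]
    omega
  have hj₁J : j₁ < J := by
    by_contra hge
    push_neg at hge
    exact hj₁ (dig_eq_zero_of_lt (lt_of_lt_of_le haJ (Nat.pow_le_pow_right (by omega) hge)))
  have hdig₁ : dig (2^h) j₁ a = 2^i := (hadig j₁).resolve_left hj₁
  have hcolj₁ : ∑ q, dig (2^h) j₁ (x q) = 2^h - 1 := by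
    rw [hcols j₁ hj₁J, hdigN j₁]
    simp only [hj₁J, if_true]
    rw [hdig₁]
    generalize hg0 : Dconst h i = DD at hDA ⊢
    generalize hg4 : (2:ℕ)^h = P at hDA ⊢
    generalize hg5 : (2:ℕ)^i = Q at hDA ⊢
    omega
  obtain ⟨hon, hinj, -⟩ := force (fun q => dig (2^h) j₁ (x q)) c hcl (fun q => hcd q j₁)
    (by rw [hcolj₁, bsum_pow_pred])
  -- the class-i part
  obtain ⟨qs, hqs⟩ : ∃ q, c q = i := by
    have einj : Function.Injective (fun q : Fin h => (⟨c q, hcl q⟩ : Fin h)) := by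
      intro a b hab
      exact hinj (by simpa [Fin.mk.injEq] using hab)
    have ebij := Finite.injective_iff_bijective.mp einj
    obtain ⟨q, hq⟩ := ebij.2 ⟨i, hi⟩
    exact ⟨q, by simpa [Fin.mk.injEq] using hq⟩
  -- digit extraction
  have hdigeq : ∀ j, j < J → dig (2^h) j (x qs) = dig (2^h) j a := by
    intro j hjJ
    have hcol := hcols j hjJ
    have hsplit : dig (2^h) j (x qs) + ∑ q ∈ Finset.univ.erase qs, dig (2^h) j (x q)
        = ∑ q, dig (2^h) j (x q) :=
      Finset.add_sum_erase Finset.univ (fun q => dig (2^h) j (x q)) (Finset.mem_univ qs)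
    have hne_i : ∀ q ∈ Finset.univ.erase qs, c q ≠ i := by
      intro q hq hci
      have : q = qs := hinj (by rw [hci, hqs])
      exact (Finset.mem_erase.mp hq).1 this
    have hfsplit : ∑ q ∈ Finset.univ.erase qs, dig (2^h) j (x q) =
        (∑ q ∈ (Finset.univ.erase qs).filter (fun q => c q < i), dig (2^h) j (x q)) +
        (∑ q ∈ (Finset.univ.erase qs).filter (fun q => ¬ c q < i), dig (2^h) j (x q)) :=
      (Finset.sum_filter_add_sum_filter_not _ _ _).symm
    obtain ⟨V, hV⟩ : ∃ V, ∑ q ∈ (Finset.univ.erase qs).filter (fun q => ¬ c q < i),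
        dig (2^h) j (x q) = 2^(i+1) * V := by
      have hdvd : 2^(i+1) ∣ ∑ q ∈ (Finset.univ.erase qs).filter (fun q => ¬ c q < i),
          dig (2^h) j (x q) := by
        apply Finset.dvd_sum
        intro q hq
        obtain ⟨hqt, hnlt⟩ := Finset.mem_filter.mp hq
        rcases hcd q j with h0 | hp
        · rw [h0]; exact dvd_zero _
        · rw [hp]
          apply pow_dvd_pow
          have := hne_i q hqt
          omega
      exact hdvd
    have hlow : ∑ q ∈ (Finset.univ.erase qs).filter (fun q => c q < i), dig (2^h) j (x q)
        ≤ 2^i - 1 := by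
      calc ∑ q ∈ (Finset.univ.erase qs).filter (fun q => c q < i), dig (2^h) j (x q)
          ≤ ∑ q ∈ (Finset.univ.erase qs).filter (fun q => c q < i), 2^(c q) :=
            Finset.sum_le_sum (fun q hq => by
              rcases hcd q j with h0 | hp
              · rw [h0]; exact Nat.zero_le _
              · rw [hp])
        _ = ∑ u ∈ ((Finset.univ.erase qs).filter (fun q => c q < i)).image c, 2^u :=
            (Finset.sum_image (fun p hp q hq hpq => hinj hpq)).symm
        _ ≤ ∑ u ∈ Finset.range i, 2^u := Finset.sum_le_sum_of_subset (by
            intro u hu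
            obtain ⟨q, hq, hqu⟩ := Finset.mem_image.mp hu
            rw [Finset.mem_range, ← hqu]
            exact (Finset.mem_filter.mp hq).2)
        _ = 2^i - 1 := geo_two i
    have hdigNj : dig (2^h) j N = dig (2^h) j a + Dconst h i := by
      rw [hdigN j]; simp [hjJ]
    have hqsd : dig (2^h) j (x qs) = 0 ∨ dig (2^h) j (x qs) = 2^i := by
      have hcc := hcd qs j
      rw [hqs] at hcc
      exact hcc
    have heq : dig (2^h) j a + Dconst h i = dig (2^h) j (x qs) +
        ((∑ q ∈ (Finset.univ.erase qs).filter (fun q => c q < i), dig (2^h) j (x q))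
          + 2^(i+1) * V) := by
      rw [← hV, ← hfsplit, hsplit, hcol, hdigNj]
    set L := ∑ q ∈ (Finset.univ.erase qs).filter (fun q => c q < i), dig (2^h) j (x q) with hL
    have hDdecomp : Dconst h i = (2^i - 1) + 2^(i+1) * (2^(h-1-i) - 1) := rfl
    rw [hDdecomp] at heq
    have heq2 : (dig (2^h) j a + (2^i - 1)) + 2^(i+1) * (2^(h-1-i) - 1)
        = (dig (2^h) j (x qs) + L) + 2^(i+1) * V := by
      generalize 2^(i+1) * (2^(h-1-i) - 1) = w1 at heq ⊢
      generalize 2^(i+1) * V = w2 at heq ⊢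
      omega
    have h2i1 : (2:ℕ)^(i+1) = 2 * 2^i := by ring
    have hlowlt1 : dig (2^h) j a + (2^i - 1) < 2^(i+1) := by
      rcases hadig j with h0 | h2i
      · rw [h0]; omega
      · rw [h2i]; omega
    have hlowlt2 : dig (2^h) j (x qs) + L < 2^(i+1) := by
      rcases hqsd with h0 | h2i
      · rw [h0]; omega
      · rw [h2i]; omega
    have hloweq := low_unique hlowlt1 hlowlt2 heq2
    rcases hadig j with h0 | h2i <;> rcases hqsd with hq0 | hq2i
    · rw [h0, hq0]
    · exfalso
      rw [h0, hq2i] at hloweq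
      omega
    · exfalso
      rw [h2i, hq0] at hloweq
      omega
    · rw [h2i, hq2i]
  exact ⟨qs, eq_of_dig hB (hxJlt qs) haJ hdigeq⟩

end Rigid

/-- The `h`-fold sumset of a set `A` of nonnegative integers. -/
def hsumSet (h : ℕ) (A : Set ℕ) : Set ℕ :=
  {n | ∃ f : Fin h → ℕ, (∀ i, f i ∈ A) ∧ ∑ i, f i = n}

/-- Härtter, Nathanson: for every `h ≥ 2` there exists a minimal asymptotic basis of
order `h` for `ℕ₀`. -/
theorem stmt13 (h : ℕ) (hh : 2 ≤ h) :
    ∃ A : Set ℕ, {n : ℕ | n ∉ hsumSet h A}.Finite ∧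
      ∀ a ∈ A, {n : ℕ | n ∉ hsumSet h (A \ {a})}.Infinite := by
  classical
  refine ⟨Aset h, ?_, ?_⟩
  · apply Set.Finite.subset (Set.finite_Iio h)
    intro n hn
    simp only [Set.mem_setOf_eq] at hn
    rw [Set.mem_Iio]
    by_contra hge
    push_neg at hge
    obtain ⟨f, hf, hfs⟩ := exists_rep hh hge
    exact hn ⟨f, hf, hfs⟩
  · intro a ha
    obtain ⟨ha1, i, hi, hadig⟩ := ha
    set g : ℕ → ℕ := fun k => witness h i a (a + 1 + k) with hg
    have haJ : ∀ k, a < (2^h)^(a + 1 + k) := by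
      intro k
      calc a < (2^h)^(a+1) := lt_B_pow_self (by omega) a
        _ ≤ (2^h)^(a+1+k) := Nat.pow_le_pow_right (by positivity) (by omega)
    have hwlow : ∀ k, (2^h)^(a + k) ≤ g k := by
      intro k
      have hd : dig (2^h) (a + k) a = 0 := by
        apply dig_eq_zero_of_lt
        have h1 : a < (2^h)^a := by
          calc a < 2^a := Nat.lt_two_pow_self
            _ ≤ 2^(h*a) := Nat.pow_le_pow_right (by omega) (Nat.le_mul_of_pos_left a (by omega))
            _ = (2^h)^a := by rw [← pow_mul]
        exact lt_of_lt_of_le h1 (Nat.pow_le_pow_right (by positivity) (by omega))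
      have hdw : dig (2^h) (a + k) (g k) = Dconst h i := by
        rw [hg]
        simp only
        rw [wit_dig hh hi hadig]
        rw [if_pos (by omega), hd, zero_add]
      have hle := dig_mul_pow_le (2^h) (a + k) (g k)
      rw [hdw] at hle
      have hD1 := D_pos hh hi
      calc (2^h)^(a+k) = 1 * (2^h)^(a+k) := (one_mul _).symm
        _ ≤ Dconst h i * (2^h)^(a+k) := Nat.mul_le_mul_right _ hD1
        _ ≤ g k := hle
    have hmono : StrictMono g := by
      intro k k' hkk
      calc g k < (2^h)^(a+1+k) := wit_lt hh hi hadig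
        _ ≤ (2^h)^(a+k') := Nat.pow_le_pow_right (by positivity) (by omega)
        _ ≤ g k' := hwlow k'
    apply Set.infinite_of_injective_forall_mem (f := g) hmono.injective
    intro k
    simp only [Set.mem_setOf_eq]
    intro hmem
    obtain ⟨f, hf, hfs⟩ := hmem
    obtain ⟨q, hq⟩ := rigid hh hi ha1 hadig (haJ k) f (fun q => (hf q).1) hfs
    exact (hf q).2 (by rw [Set.mem_singleton_iff, hq])
end
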